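/- arXiv:1605.08383 — 11 statements merged into one kernel-verified Lean document; each statement's English description precedes it below -/
import Mathlib

section
/- For every real u > 1 there exists exactly one real ξ ≠ 0 with exp(ξ) = 1 + u·ξ, and this solution satisfies log(u) < ξ ≤ 2·log(u). -/
/-!
Nonzero solutions of `exp ξ = 1 + u ξ` are exactly the points where the secant slope
`(exp x - 1) / x` of `exp` through the origin equals `u`. By strict convexity of `exp`
this slope is strictly increasing on `x ≠ 0`, which gives uniqueness. Writing `u = exp t`
with `t = log u > 0`, the slope at `t` is below `exp t` and the slope at `2t` is above it,
so the intermediate value theorem places the solution strictly between `t` and `2t`.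
-/

open Real Set

lemma strictMonoOn_exp_sub_one_div :
    StrictMonoOn (fun x : ℝ => (exp x - 1) / x) {0}ᶜ := by
  intro x hx y hy hxy
  simpa using strictConvexOn_exp.secant_strict_mono (mem_univ 0) (mem_univ x) (mem_univ y)
    hx hy hxy

lemma continuousOn_exp_sub_one_div :
    ContinuousOn (fun x : ℝ => (exp x - 1) / x) {0}ᶜ :=
  ContinuousOn.div (by fun_prop) continuousOn_id fun _ hx => hx

lemma exp_eq_one_add_mul_iff {u x : ℝ} (hx : x ≠ 0) :
    exp x = 1 + u * x ↔ (exp x - 1) / x = u := by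
  rw [div_eq_iff hx]
  constructor <;> intro h <;> linarith

lemma exp_sub_one_div_lt_exp {t : ℝ} (ht : 0 < t) : (exp t - 1) / t < exp t := by
  rw [div_lt_iff₀ ht]
  have h := add_one_lt_exp (neg_ne_zero.2 ht.ne')
  have h' := mul_lt_mul_of_pos_right h (exp_pos t)
  rw [← exp_add, neg_add_cancel, exp_zero] at h'
  linarith

lemma exp_lt_exp_two_mul_sub_one_div {t : ℝ} (ht : 0 < t) :
    exp t < (exp (2 * t) - 1) / (2 * t) := by
  rw [lt_div_iff₀ (by positivity)]
  have h : 2 * t < exp t - exp (-t) := by linarith [self_lt_sinh_iff.2 ht, sinh_eq t]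
  have hinv : exp (-t) * exp t = 1 := by rw [← exp_add, neg_add_cancel, exp_zero]
  rw [two_mul t, exp_add]
  nlinarith [mul_lt_mul_of_pos_right h (exp_pos t)]

/-- For every real `u > 1` there is exactly one real `ξ ≠ 0` with
`exp ξ = 1 + u ξ`, and this solution satisfies `log u < ξ ≤ 2 log u`. -/
theorem stmt_5 (u : ℝ) (hu : 1 < u) :
    (∃! ξ : ℝ, ξ ≠ 0 ∧ Real.exp ξ = 1 + u * ξ) ∧
    (∀ ξ : ℝ, ξ ≠ 0 → Real.exp ξ = 1 + u * ξ →
      Real.log u < ξ ∧ ξ ≤ 2 * Real.log u) := by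
  set t := log u
  have ht : 0 < t := log_pos hu
  have hut : exp t = u := exp_log (by linarith)
  have hlo : (exp t - 1) / t < u := (exp_sub_one_div_lt_exp ht).trans_eq hut
  have hhi : u < (exp (2 * t) - 1) / (2 * t) :=
    hut.symm.trans_lt (exp_lt_exp_two_mul_sub_one_div ht)
  have hmono := strictMonoOn_exp_sub_one_div
  have ht0 : t ≠ 0 := ht.ne'
  have h2t0 : 2 * t ≠ 0 := by positivity
  have bounds : ∀ ξ, ξ ≠ 0 → exp ξ = 1 + u * ξ → t < ξ ∧ ξ ≤ 2 * t := by
    intro ξ hξ hroot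
    rw [exp_eq_one_add_mul_iff hξ] at hroot
    refine ⟨hmono.lt_iff_lt ht0 hξ |>.1 (hroot ▸ hlo), hmono.le_iff_le hξ h2t0 |>.1 ?_⟩
    exact (hroot ▸ hhi).le
  have hcont : ContinuousOn (fun x : ℝ => (exp x - 1) / x) (Icc t (2 * t)) :=
    continuousOn_exp_sub_one_div.mono fun x hx => (ht.trans_le hx.1).ne'
  obtain ⟨ξ, hξ, hroot⟩ := intermediate_value_Ioo (by linarith) hcont ⟨hlo, hhi⟩
  have hξ0 : ξ ≠ 0 := (ht.trans hξ.1).ne'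
  refine ⟨⟨ξ, ⟨hξ0, (exp_eq_one_add_mul_iff hξ0).2 hroot⟩, ?_⟩, bounds⟩
  rintro η ⟨hη0, hη⟩
  exact hmono.injOn hη0 hξ0 (((exp_eq_one_add_mul_iff hη0).1 hη).trans hroot.symm)
end

section
/- Let α : ℕ → ℕ with α(n) ≥ 1 and let w be a real number. Then ∑_{σ ∈ S_{n,α}} w^{C(σ)} = n! · [z^n] exp( w·∑_{j=1}^{α(n)} z^j/j ), where [z^n] denotes the coefficient of z^n in the formal power series exp( w·∑_{j=1}^{α(n)} z^j/j ) ∈ ℝ⟦z⟧. In particular (taking w = 1), the cardinality of S_{n,α} equals n! · [z^n] exp( ∑_{j=1}^{α(n)} z^j/j ). -/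
/-
Write `W(s)` for the weighted count `∑ w ^ (number of cycles)` over the permutations supported in
a finite set `s` whose cycles have length at most `a`. Fix `x ∈ s`: the cycle through `x` is
determined by the ordered sequence of its `i` other points, of which there are
`(|s| - 1)(|s| - 2)⋯(|s| - i)`, and removing it leaves a permutation counted by `W` on a set of
size `|s| - 1 - i`. Hence `W(s) = w ∑_{i < min a |s|} (|s| - 1)! / (|s| - 1 - i)! · W(|s| - 1 - i)`.
On the other side, `E = exp (w L)` with `L = ∑_{j ≤ a} X^j / j` satisfies `E' = w E L'` and
`L' = ∑_{i < a} X^i`, i.e. `(m + 1) E_{m+1} = w ∑_{i < min a (m + 1)} E_{m-i}`. So `W(s) / |s|!`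
and `E_{|s|}` obey the same recurrence from the same initial value `1`.
-/

open scoped Classical in
/-- `S_{n,a}`: the set of permutations of `{1,…,n}` all of whose cycles have length
at most `a`. -/
noncomputable def Snalpha (n a : ℕ) : Finset (Equiv.Perm (Fin n)) :=
  Finset.univ.filter fun σ => ∀ c ∈ σ.cycleType, c ≤ a

/-- `C(σ)`: the total number of cycles of a permutation (nontrivial cycles plus
fixed points). -/
def numCycles {n : ℕ} (σ : Equiv.Perm (Fin n)) : ℕ :=
  σ.cycleType.card + (Finset.univ.filter fun i => σ i = i).card

/-- The formal exponential of a power series with zero constant term: since `f ^ k`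
has order at least `k` when the constant term of `f` vanishes, the coefficient of
`z^n` in `exp f = ∑_k f^k / k!` is that of the finite sum `∑_{k ≤ n} f^k / k!`. -/
noncomputable def expPS (f : PowerSeries ℝ) : PowerSeries ℝ :=
  PowerSeries.mk fun n =>
    PowerSeries.coeff n (∑ k ∈ Finset.range (n + 1), (k.factorial : ℝ)⁻¹ • f ^ k)

open Finset PowerSeries
open scoped Nat

theorem expPS_eq_subst_exp {f : ℝ⟦X⟧} (hf : constantCoeff f = 0) :
    expPS f = (exp ℝ).subst f := by
  ext n
  rw [expPS, coeff_mk, coeff_subst' (HasSubst.of_constantCoeff_zero' hf), map_sum,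
    finsum_eq_sum_of_support_subset (s := range (n + 1))]
  · refine sum_congr rfl fun k _ => ?_
    simp [coeff_exp, smul_eq_mul]
  · intro k hk
    rw [Function.mem_support] at hk
    rw [coe_range, Set.mem_Iio, Nat.lt_succ_iff]
    by_contra! hnk
    refine hk ?_
    rw [coeff_of_lt_order n ((ENat.natCast_lt_natCast.mpr hnk).trans_le
      (le_order_pow_of_constantCoeff_eq_zero k hf)), smul_zero]

theorem derivative_expPS {f : ℝ⟦X⟧} (hf : constantCoeff f = 0) :
    d⁄dX ℝ (expPS f) = expPS f * d⁄dX ℝ f := by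
  rw [expPS_eq_subst_exp hf, derivative_subst (HasSubst.of_constantCoeff_zero' hf),
    derivative_exp]

theorem coeff_zero_expPS (f : ℝ⟦X⟧) : coeff 0 (expPS f) = 1 := by
  simp [expPS]

noncomputable def logTrunc (a : ℕ) : ℝ⟦X⟧ :=
  ∑ j ∈ Icc 1 a, C (j : ℝ)⁻¹ * X ^ j

theorem constantCoeff_logTrunc (a : ℕ) : constantCoeff (logTrunc a) = 0 := by
  simp only [logTrunc, map_sum, map_mul, constantCoeff_C, map_pow, constantCoeff_X]
  exact sum_eq_zero fun j hj => by simp [Nat.one_le_iff_ne_zero.mp (mem_Icc.mp hj).1]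

theorem derivative_logTrunc (a : ℕ) : d⁄dX ℝ (logTrunc a) = ∑ i ∈ range a, X ^ i := by
  rw [logTrunc, map_sum, ← Ico_add_one_right_eq_Icc, sum_Ico_eq_sum_range, Nat.add_sub_cancel]
  refine sum_congr rfl fun i _ => ?_
  rw [Derivation.leibniz, derivative_C, smul_zero, add_zero, derivative_pow, derivative_X,
    smul_eq_mul, add_tsub_cancel_left, mul_one, ← mul_assoc, ← map_natCast (C (R := ℝ)),
    ← map_mul, inv_mul_cancel₀ (by positivity), map_one, one_mul]

theorem coeff_succ_expPS_logTrunc (a : ℕ) (w : ℝ) (m : ℕ) :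
    (m + 1) * coeff (m + 1) (expPS (C w * logTrunc a))
      = w * ∑ i ∈ range (min a (m + 1)), coeff (m - i) (expPS (C w * logTrunc a)) := by
  have hf : constantCoeff (C w * logTrunc a) = 0 := by
    rw [map_mul, constantCoeff_logTrunc, mul_zero]
  have := congrArg (coeff m) (derivative_expPS hf)
  rw [coeff_derivative, Derivation.leibniz, derivative_C, smul_zero, add_zero,
    derivative_logTrunc, smul_eq_mul, mul_left_comm, coeff_C_mul, mul_sum, map_sum] at this
  rw [mul_comm, this]
  simp only [coeff_mul_X_pow', ← sum_filter]
  congr 2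
  ext i
  simp only [mem_filter, mem_range]
  omega

namespace Equiv.Perm

variable {ι : Type*} [Fintype ι] [DecidableEq ι]

theorem cycleOf_cycleOf (σ : Perm ι) (x : ι) : (σ.cycleOf x).cycleOf x = σ.cycleOf x := by
  by_cases hx : σ x = x
  · rw [(cycleOf_eq_one_iff σ).mpr hx, cycleOf_one]
  · exact (isCycle_cycleOf σ hx).cycleOf_eq (by rwa [cycleOf_apply_self])

theorem eq_one_or_isCycle_of_cycleOf_eq {c : Perm ι} {x : ι} (hc : c.cycleOf x = c) :
    c = 1 ∨ (c.IsCycle ∧ x ∈ c.support) := by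
  by_cases hx : c x = x
  · exact .inl (hc ▸ (cycleOf_eq_one_iff c).mpr hx)
  · exact .inr ⟨hc ▸ isCycle_cycleOf c hx, mem_support.mpr hx⟩

theorem mul_cycleOf_inv_apply (σ : Perm ι) (x y : ι) :
    (σ * (σ.cycleOf x)⁻¹) y = if σ.SameCycle x y then y else σ y := by
  rw [mul_apply, cycleOf_inv, cycleOf_apply]
  by_cases h : σ.SameCycle x y
  · rw [if_pos (sameCycle_inv.mpr h), if_pos h]
    simp
  · rw [if_neg (mt sameCycle_inv.mp h), if_neg h]

theorem disjoint_cycleOf_mul_inv (σ : Perm ι) (x : ι) :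
    Disjoint (σ.cycleOf x) (σ * (σ.cycleOf x)⁻¹) := by
  intro y
  by_cases h : σ.SameCycle x y
  · exact .inr (by rw [mul_cycleOf_inv_apply, if_pos h])
  · exact .inl (cycleOf_apply_of_not_sameCycle h)

theorem cycleOf_mul_mul_cycleOf_inv (σ : Perm ι) (x : ι) :
    σ.cycleOf x * (σ * (σ.cycleOf x)⁻¹) = σ :=
  (disjoint_cycleOf_mul_inv σ x).commute.eq.trans (inv_mul_cancel_right _ _)

theorem card_support_cycleOf_mem_cycleType {σ : Perm ι} {x : ι} (hx : x ∈ σ.support) :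
    #(σ.cycleOf x).support ∈ σ.cycleType := by
  refine Multiset.mem_of_le (cycleType_le_of_mem_cycleFactorsFinset
    (cycleOf_mem_cycleFactorsFinset_iff.mpr hx)) ?_
  rw [(isCycle_cycleOf σ (mem_support.mp hx)).cycleType]
  exact Multiset.mem_singleton_self _

end Equiv.Perm

section CycleOfEmb

open Equiv

variable {ι : Type*} [DecidableEq ι] {s : Finset ι} {x : ι} {i : ℕ}

def cycleOfEmb (x : ι) (f : Fin i ↪ s.erase x) : Perm ι :=
  (x :: List.ofFn fun k => (f k : ι)).formPerm

theorem nodup_cons_ofFn (f : Fin i ↪ s.erase x) : (x :: List.ofFn fun k => (f k : ι)).Nodup :=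
  List.nodup_cons.mpr ⟨fun h => (List.mem_ofFn.mp h).elim fun k => ne_of_mem_erase (f k).2,
    List.nodup_ofFn.mpr (Subtype.val_injective.comp f.injective)⟩

theorem cycleOfEmb_pow_apply (f : Fin i ↪ s.erase x) (k : Fin i) :
    (cycleOfEmb x f ^ ((k : ℕ) + 1)) x = f k := by
  rw [cycleOfEmb, List.formPerm_pow_apply_head _ _ (nodup_cons_ofFn f)]
  simp [Nat.mod_eq_of_lt (Nat.succ_lt_succ k.2)]

theorem cycleOfEmb_injective : Function.Injective (cycleOfEmb (s := s) (i := i) x) :=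
  fun f g h => by
    ext k
    rw [← cycleOfEmb_pow_apply, ← cycleOfEmb_pow_apply, h]

end CycleOfEmb

section Counting

open Equiv Equiv.Perm

variable {ι : Type*} [Fintype ι] [DecidableEq ι]

def boundedPerms (a : ℕ) (s : Finset ι) : Finset (Perm ι) :=
  {σ | σ.support ⊆ s ∧ ∀ k ∈ σ.cycleType, k ≤ a}

def cycleCountOn (s : Finset ι) (σ : Perm ι) : ℕ :=
  Multiset.card σ.cycleType + #(s \ σ.support)

noncomputable def weightedCount (a : ℕ) (w : ℝ) (s : Finset ι) : ℝ :=
  ∑ σ ∈ boundedPerms a s, w ^ cycleCountOn s σ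

/-- `c.cycleOf x = c` says that `c` is a cycle through `x`, or the identity when `i = 0`. -/
def cyclesThrough (s : Finset ι) (x : ι) (i : ℕ) : Finset (Perm ι) :=
  {c | c.cycleOf x = c ∧ c.support ⊆ s ∧ #(c.support.erase x) = i}

variable {s : Finset ι} {x : ι} {i : ℕ} {c : Perm ι}

@[simp]
theorem mem_cyclesThrough :
    c ∈ cyclesThrough s x i ↔ c.cycleOf x = c ∧ c.support ⊆ s ∧ #(c.support.erase x) = i := by
  simp [cyclesThrough]

theorem card_insert_support_of_mem_cyclesThrough (hc : c ∈ cyclesThrough s x i) :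
    #(insert x c.support) = i + 1 := by
  rw [← card_erase_add_one (mem_insert_self x _), erase_insert_eq_erase,
    (mem_cyclesThrough.mp hc).2.2]

theorem eq_of_mem_cycleType_of_mem_cyclesThrough (hc : c ∈ cyclesThrough s x i) {k : ℕ}
    (hk : k ∈ c.cycleType) : k = i + 1 := by
  obtain ⟨hcyc, -, hi⟩ := mem_cyclesThrough.mp hc
  rcases eq_one_or_isCycle_of_cycleOf_eq hcyc with rfl | ⟨hcyc, hx⟩
  · simp at hk
  · rw [hcyc.cycleType, Multiset.mem_singleton] at hk
    rw [hk, ← hi, card_erase_add_one hx]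

theorem cycleOf_mem_cyclesThrough (σ : Perm ι) (hσ : σ.support ⊆ s) :
    σ.cycleOf x ∈ cyclesThrough s x #((σ.cycleOf x).support.erase x) :=
  mem_cyclesThrough.mpr ⟨cycleOf_cycleOf σ x, (support_cycleOf_le σ x).trans hσ, rfl⟩

theorem lt_card_of_mem_cyclesThrough (hx : x ∈ s) (hc : c ∈ cyclesThrough s x i) : i < #s := by
  rw [Nat.lt_iff_add_one_le, ← card_insert_support_of_mem_cyclesThrough hc]
  exact card_le_card (insert_subset hx (mem_cyclesThrough.mp hc).2.1)

theorem card_sdiff_insert_support (hx : x ∈ s) (hc : c ∈ cyclesThrough s x i) :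
    #(s \ insert x c.support) = #s - (i + 1) := by
  rw [card_sdiff_of_subset (insert_subset hx (mem_cyclesThrough.mp hc).2.1),
    card_insert_support_of_mem_cyclesThrough hc]

theorem cycleOfEmb_mem_cyclesThrough (hx : x ∈ s) (f : Fin i ↪ s.erase x) :
    cycleOfEmb x f ∈ cyclesThrough s x i := by
  rcases Nat.eq_zero_or_pos i with rfl | hi
  · simp [cycleOfEmb]
  have hnd := nodup_cons_ofFn f
  have hlen : 2 ≤ (x :: List.ofFn fun k => (f k : ι)).length := by
    rw [List.length_cons, List.length_ofFn]
    omega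
  have hsupp : (cycleOfEmb x f).support = insert x (List.ofFn fun k => (f k : ι)).toFinset := by
    rw [cycleOfEmb, List.support_formPerm_of_nodup _ hnd fun y h => by simp [h] at hlen,
      List.toFinset_cons]
  refine mem_cyclesThrough.mpr ⟨(List.isCycle_formPerm hnd hlen).cycleOf_eq ?_, ?_, ?_⟩
  · exact mem_support.mp (hsupp ▸ mem_insert_self x _)
  · rw [hsupp]
    refine insert_subset hx fun y hy => ?_
    obtain ⟨k, rfl⟩ := List.mem_ofFn.mp (List.mem_toFinset.mp hy)
    exact mem_of_mem_erase (f k).2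
  · rw [hsupp, erase_insert (mt List.mem_toFinset.mp (List.nodup_cons.mp hnd).1),
      List.toFinset_card_of_nodup (List.nodup_cons.mp hnd).2, List.length_ofFn]

theorem exists_cycleOfEmb_eq (hc : c ∈ cyclesThrough s x i) :
    ∃ f : Fin i ↪ s.erase x, cycleOfEmb x f = c := by
  obtain ⟨hcyc, hcs, hi⟩ := mem_cyclesThrough.mp hc
  rcases eq_one_or_isCycle_of_cycleOf_eq hcyc with rfl | ⟨-, hxc⟩
  · obtain rfl : i = 0 := by simpa using hi.symm
    exact ⟨Function.Embedding.ofIsEmpty, by simp [cycleOfEmb]⟩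
  set g : Fin i → ι := fun k => (c ^ ((k : ℕ) + 1)) x
  have hlist : c.toList x = x :: List.ofFn g := by
    refine List.ext_getElem ?_ fun n _ _ => ?_
    · rw [Perm.length_toList, hcyc, List.length_cons, List.length_ofFn, ← hi,
        card_erase_add_one hxc]
    · rw [Perm.getElem_toList]
      cases n <;> simp [g]
  obtain ⟨hx, hnd⟩ := List.nodup_cons.mp (hlist ▸ nodup_toList c x)
  have hg : ∀ k, g k ∈ s.erase x := fun k =>
    mem_erase.mpr ⟨fun h => hx (List.mem_ofFn.mpr ⟨k, h⟩), hcs (pow_apply_mem_support.mpr hxc)⟩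
  refine ⟨⟨fun k => ⟨g k, hg k⟩, fun k l h => List.nodup_ofFn.mp hnd (congrArg Subtype.val h)⟩, ?_⟩
  change (x :: List.ofFn g).formPerm = c
  rw [← hlist, formPerm_toList, hcyc]

theorem card_cyclesThrough (hx : x ∈ s) (i : ℕ) :
    #(cyclesThrough s x i) = (#s - 1).descFactorial i := by
  have : cyclesThrough s x i
      = (univ : Finset (Fin i ↪ s.erase x)).map ⟨cycleOfEmb x, cycleOfEmb_injective⟩ := by
    ext c
    simp only [mem_map, mem_univ, true_and, Function.Embedding.coeFn_mk]
    exact ⟨exists_cycleOfEmb_eq, fun ⟨f, hf⟩ => hf ▸ cycleOfEmb_mem_cyclesThrough hx f⟩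
  rw [this, card_map, card_univ, Fintype.card_embedding_eq, Fintype.card_fin, Fintype.card_coe,
    card_erase_of_mem hx]

theorem disjoint_of_support_subset_sdiff {ρ : Perm ι} (hρ : ρ.support ⊆ s \ insert x c.support) :
    Disjoint c ρ :=
  disjoint_iff_disjoint_support.mpr <| disjoint_of_subset_right hρ <|
    disjoint_sdiff.mono_left (subset_insert x c.support)

theorem cycleCountOn_mul (hx : x ∈ s) (hc : c.cycleOf x = c) {ρ : Perm ι}
    (hρ : ρ.support ⊆ s \ insert x c.support) :
    cycleCountOn s (c * ρ) = cycleCountOn (s \ insert x c.support) ρ + 1 := by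
  have hd := disjoint_of_support_subset_sdiff hρ
  rcases eq_one_or_isCycle_of_cycleOf_eq hc with rfl | ⟨hcyc, hxc⟩
  · have hxρ : x ∈ s \ ρ.support := mem_sdiff.mpr ⟨hx, fun h => by simpa using hρ h⟩
    rw [cycleCountOn, cycleCountOn, one_mul, support_one, insert_empty, sdiff_right_comm,
      sdiff_singleton_eq_erase, add_assoc, card_erase_add_one hxρ]
  · rw [cycleCountOn, cycleCountOn, insert_eq_of_mem hxc, hd.cycleType_mul, hd.support_mul,
      hcyc.cycleType, Multiset.card_add, Multiset.card_singleton, sdiff_sdiff_left, sup_eq_union]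
    ring

theorem filter_cycleOf_eq_eq_image {a : ℕ} (hi : i < a) (hc : c ∈ cyclesThrough s x i) :
    {σ ∈ boundedPerms a s | σ.cycleOf x = c}
      = (boundedPerms a (s \ insert x c.support)).image (c * ·) := by
  ext σ
  simp only [boundedPerms, mem_filter, mem_image, mem_univ, true_and]
  constructor
  · rintro ⟨⟨hσs, hσa⟩, rfl⟩
    refine ⟨σ * (σ.cycleOf x)⁻¹, ⟨fun y hy => ?_, fun k hk => hσa k ?_⟩,
      cycleOf_mul_mul_cycleOf_inv σ x⟩
    · rw [mem_support, mul_cycleOf_inv_apply] at hy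
      split_ifs at hy with hxy
      · exact absurd rfl hy
      refine mem_sdiff.mpr ⟨hσs (mem_support.mpr hy), fun hy' => ?_⟩
      rcases mem_insert.mp hy' with rfl | hy'
      · exact hxy (SameCycle.refl σ y)
      · exact hxy (mem_support_cycleOf_iff.mp hy').1
    · rw [← cycleOf_mul_mul_cycleOf_inv σ x, (disjoint_cycleOf_mul_inv σ x).cycleType_mul]
      exact Multiset.mem_add.mpr (.inr hk)
  · rintro ⟨ρ, ⟨hρs, hρa⟩, rfl⟩
    obtain ⟨hcyc, hcs, -⟩ := mem_cyclesThrough.mp hc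
    have hd := disjoint_of_support_subset_sdiff hρs
    have hρx : ρ x = x := notMem_support.mp fun h => by simpa using hρs h
    refine ⟨⟨?_, fun k hk => ?_⟩, ?_⟩
    · rw [hd.support_mul]
      exact union_subset hcs (hρs.trans sdiff_subset)
    · rcases Multiset.mem_add.mp (hd.cycleType_mul ▸ hk) with hk | hk
      · exact (eq_of_mem_cycleType_of_mem_cyclesThrough hc hk).trans_le hi
      · exact hρa k hk
    · rw [cycleOf_mul_of_apply_right_eq_self hd.commute x hρx, hcyc]

theorem sum_filter_cycleOf_eq {a : ℕ} (w : ℝ) (hx : x ∈ s) (hi : i < a)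
    (hc : c ∈ cyclesThrough s x i) :
    ∑ σ ∈ boundedPerms a s with σ.cycleOf x = c, w ^ cycleCountOn s σ
      = w * weightedCount a w (s \ insert x c.support) := by
  rw [filter_cycleOf_eq_eq_image hi hc, sum_image fun _ _ _ _ h => mul_left_cancel h,
    weightedCount, mul_sum]
  refine sum_congr rfl fun ρ hρ => ?_
  rw [cycleCountOn_mul hx (mem_cyclesThrough.mp hc).1 (mem_filter.mp hρ).2.1, pow_succ']

theorem cycleOf_mem_biUnion_cyclesThrough {a : ℕ} (ha : 1 ≤ a) (hx : x ∈ s) {σ : Perm ι}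
    (hσ : σ ∈ boundedPerms a s) :
    σ.cycleOf x ∈ (range (min a #s)).biUnion (cyclesThrough s x) := by
  obtain ⟨hσs, hσa⟩ := (mem_filter.mp hσ).2
  have hc := cycleOf_mem_cyclesThrough (x := x) σ hσs
  refine mem_biUnion.mpr ⟨_, mem_range.mpr (lt_min ?_ (lt_card_of_mem_cyclesThrough hx hc)), hc⟩
  by_cases hxσ : x ∈ σ.support
  · rw [card_erase_of_mem (mem_support_cycleOf_iff.mpr ⟨SameCycle.refl σ x, hxσ⟩)]
    have := hσa _ (card_support_cycleOf_mem_cycleType hxσ)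
    have := card_pos.mpr ⟨x, mem_support_cycleOf_iff.mpr ⟨SameCycle.refl σ x, hxσ⟩⟩
    omega
  · rw [(cycleOf_eq_one_iff σ).mpr (notMem_support.mp hxσ)]
    rwa [support_one, erase_empty, card_empty]

theorem weightedCount_eq_sum_cyclesThrough {a : ℕ} (ha : 1 ≤ a) (w : ℝ) (hx : x ∈ s) :
    weightedCount a w s = ∑ i ∈ range (min a #s), ∑ c ∈ cyclesThrough s x i,
      w * weightedCount a w (s \ insert x c.support) := by
  have hdisj : Set.PairwiseDisjoint ↑(range (min a #s)) (cyclesThrough s x) :=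
    fun i _ j _ hij => disjoint_left.mpr fun c hi hj =>
      hij ((mem_cyclesThrough.mp hi).2.2.symm.trans (mem_cyclesThrough.mp hj).2.2)
  rw [← sum_biUnion hdisj, weightedCount, ← sum_fiberwise_of_maps_to
    (fun σ hσ => cycleOf_mem_biUnion_cyclesThrough (x := x) ha hx hσ)]
  refine sum_congr rfl fun c hc => ?_
  obtain ⟨i, hi, hc⟩ := mem_biUnion.mp hc
  exact sum_filter_cycleOf_eq w hx (lt_min_iff.mp (mem_range.mp hi)).1 hc

theorem weightedCount_empty (a : ℕ) (w : ℝ) : weightedCount a w (∅ : Finset ι) = 1 := by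
  have : boundedPerms a (∅ : Finset ι) = {1} := by
    ext σ
    simp +contextual [boundedPerms]
  simp [weightedCount, this, cycleCountOn]

theorem weightedCount_eq_factorial_mul {a : ℕ} (ha : 1 ≤ a) (w : ℝ) {E : ℕ → ℝ} (h0 : E 0 = 1)
    (hrec : ∀ m, (m + 1) * E (m + 1) = w * ∑ i ∈ range (min a (m + 1)), E (m - i))
    (s : Finset ι) : weightedCount a w s = (#s)! * E #s := by
  induction s using Finset.strongInduction with
  | H s ih =>
  rcases s.eq_empty_or_nonempty with rfl | ⟨x, hx⟩
  · simp [weightedCount_empty, h0]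
  obtain ⟨m, hm⟩ : ∃ m, #s = m + 1 := Nat.exists_eq_succ_of_ne_zero (card_pos.mpr ⟨x, hx⟩).ne'
  have hfiber : ∀ i ∈ range (min a (m + 1)), ∑ c ∈ cyclesThrough s x i,
      w * weightedCount a w (s \ insert x c.support)
        = m.descFactorial i * (w * ((m - i)! * E (m - i))) := by
    intro i _
    have hc : ∀ c ∈ cyclesThrough s x i, w * weightedCount a w (s \ insert x c.support)
        = w * ((m - i)! * E (m - i)) := fun c hc => by
      rw [ih _ (sdiff_ssubset (insert_subset hx (mem_cyclesThrough.mp hc).2.1)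
        (insert_nonempty x _)), card_sdiff_insert_support hx hc, hm, Nat.add_sub_add_right]
    rw [sum_congr rfl hc, sum_const, card_cyclesThrough hx, hm, Nat.add_sub_cancel, nsmul_eq_mul]
  calc weightedCount a w s
      = ∑ i ∈ range (min a (m + 1)), m.descFactorial i * (w * ((m - i)! * E (m - i))) := by
        rw [weightedCount_eq_sum_cyclesThrough ha w hx, hm]
        exact sum_congr rfl hfiber
    _ = m ! * (w * ∑ i ∈ range (min a (m + 1)), E (m - i)) := by
        rw [mul_sum, mul_sum]
        refine sum_congr rfl fun i hi => ?_
        have hi : i ≤ m := Nat.lt_succ_iff.mp (lt_min_iff.mp (mem_range.mp hi)).2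
        rw [← Nat.factorial_mul_descFactorial hi]
        push_cast
        ring
    _ = (#s)! * E #s := by
        rw [← hrec, hm, Nat.factorial_succ]
        push_cast
        ring

end Counting

/-- For `α : ℕ → ℕ` with `α(n) ≥ 1` and any real `w`,
`∑_{σ ∈ S_{n,α}} w^{C(σ)} = n! · [z^n] exp(w ∑_{j=1}^{α(n)} z^j / j)`; in
particular `|S_{n,α}| = n! · [z^n] exp(∑_{j=1}^{α(n)} z^j / j)`. -/
theorem stmt_6 (α : ℕ → ℕ) (hα : ∀ n, 1 ≤ α n) (n : ℕ) (w : ℝ) :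
    (∑ σ ∈ Snalpha n (α n), w ^ numCycles σ
      = n.factorial * PowerSeries.coeff n (expPS
          (PowerSeries.C w *
            ∑ j ∈ Finset.Icc 1 (α n), PowerSeries.C (j : ℝ)⁻¹ * PowerSeries.X ^ j))) ∧
    ((Snalpha n (α n)).card : ℝ)
      = n.factorial * PowerSeries.coeff n (expPS
          (∑ j ∈ Finset.Icc 1 (α n), PowerSeries.C (j : ℝ)⁻¹ * PowerSeries.X ^ j)) := by
  have key (v : ℝ) : ∑ σ ∈ Snalpha n (α n), v ^ numCycles σ
      = n.factorial * coeff n (expPS (C v * logTrunc (α n))) := by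
    have h := weightedCount_eq_factorial_mul (hα n) v
      (E := fun m => coeff m (expPS (C v * logTrunc (α n)))) (coeff_zero_expPS _)
      (coeff_succ_expPS_logTrunc (α n) v) (univ : Finset (Fin n))
    rw [card_univ, Fintype.card_fin] at h
    rw [← h, weightedCount]
    refine sum_congr (by ext; simp [Snalpha, boundedPerms]) fun σ _ => ?_
    rw [numCycles, cycleCountOn]
    congr 3
    ext
    simp
  refine ⟨key w, ?_⟩
  simpa [logTrunc] using key 1
end

section
/- Let n ∈ ℕ and α : ℕ → ℕ with α(n) ≥ 1. The map w ↦ x_{n,α}(w) is infinitely differentiable on (0, ∞); its derivative x'_{n,α}(w) satisfies the identity ∑_{j=1}^{α(n)} j·x_{n,α}(w)^j = −n·x_{n,α}(w) / ( x'_{n,α}(w)·w² ) for all w > 0, and is given explicitly by x'_{n,α}(w) = (x_{n,α}(w)−1)·x_{n,α}(w) / ( w·(1 − α(n)·(x_{n,α}(w)−1) − w·α(n)·x_{n,α}(w)/n) ) whenever x_{n,α}(w) ≠ 1. -/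
open Filter Topology

lemma stmt7_icc_succ (a : ℕ) : Finset.Icc 1 (a+1) = insert (a+1) (Finset.Icc 1 a) := by
  ext j; simp; omega

lemma stmt7_aux_geom (X : ℝ) (a : ℕ) :
    (X - 1) * ∑ j ∈ Finset.Icc 1 a, X ^ j = X ^ (a+1) - X := by
  induction a with
  | zero => simp
  | succ a ih =>
      rw [stmt7_icc_succ, Finset.sum_insert (by simp)]
      ring_nf; ring_nf at ih; linear_combination ih

lemma stmt7_aux_jsum (X : ℝ) (a : ℕ) :
    (X - 1) * ∑ j ∈ Finset.Icc 1 a, (j:ℝ) * X ^ j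
      = (a:ℝ) * X ^ (a+1) - ∑ j ∈ Finset.Icc 1 a, X ^ j := by
  induction a with
  | zero => simp
  | succ a ih =>
      rw [stmt7_icc_succ, Finset.sum_insert (by simp), Finset.sum_insert (by simp)]
      push_cast; ring_nf; ring_nf at ih; linear_combination ih

lemma stmt7_aux_mulD (X : ℝ) (a : ℕ) :
    ∑ j ∈ Finset.Icc 1 a, (j:ℝ) * X ^ j
      = X * ∑ j ∈ Finset.Icc 1 a, (j:ℝ) * X ^ (j-1) := by
  rw [Finset.mul_sum]
  refine Finset.sum_congr rfl fun j hj => ?_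
  obtain ⟨h1, -⟩ := Finset.mem_Icc.1 hj
  have : X ^ j = X * X ^ (j-1) := by
    conv_lhs => rw [show j = (j-1)+1 by omega]
    ring
  rw [this]; ring

/-- For fixed `n` and `a = α(n) ≥ 1`, the saddle-point map
`w ↦ x_{n,α}(w)` (the positive solution of `∑_{j=1}^a x^j = n/w`) is infinitely
differentiable on `(0, ∞)`; its derivative satisfies
`∑_{j=1}^a j·x(w)^j = −n·x(w)/(x'(w)·w²)` for all `w > 0` and is given explicitly
by `x'(w) = (x(w)−1)x(w) / (w(1 − a(x(w)−1) − w·a·x(w)/n))` whenever `x(w) ≠ 1`. -/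
theorem stmt_7 (n : ℕ) (a : ℕ) (ha : 1 ≤ a)
    (x : ℝ → ℝ)
    (hx : ∀ w : ℝ, 0 < w →
      0 < x w ∧ ∑ j ∈ Finset.Icc 1 a, x w ^ j = (n : ℝ) / w) :
    ContDiffOn ℝ (⊤ : ℕ∞) x (Set.Ioi 0) ∧
    (∀ w : ℝ, 0 < w →
      ∑ j ∈ Finset.Icc 1 a, (j : ℝ) * x w ^ j = -(n : ℝ) * x w / (deriv x w * w ^ 2)) ∧
    (∀ w : ℝ, 0 < w → x w ≠ 1 →
      deriv x w = (x w - 1) * x w /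
        (w * (1 - (a : ℝ) * (x w - 1) - w * (a : ℝ) * x w / n))) := by
  have hane : Finset.Icc 1 a |>.Nonempty := ⟨1, Finset.mem_Icc.2 ⟨le_refl 1, ha⟩⟩
  have hn : (0:ℝ) < n := by
    obtain ⟨hx1, hs1⟩ := hx 1 one_pos
    have h : 0 < ∑ j ∈ Finset.Icc 1 a, x 1 ^ j :=
      Finset.sum_pos (fun j _ => pow_pos hx1 j) hane
    rw [hs1] at h; simpa using h
  have hn' : (n:ℝ) ≠ 0 := hn.ne'
  set F : ℝ → ℝ := fun t => ∑ j ∈ Finset.Icc 1 a, t ^ j with hFdef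
  have hFcd : ContDiff ℝ (⊤ : ℕ∞) F := ContDiff.sum fun j _ => contDiff_id.pow j
  have hFd : ∀ t : ℝ, HasDerivAt F (∑ j ∈ Finset.Icc 1 a, (j:ℝ) * t ^ (j-1)) t :=
    fun t => HasDerivAt.fun_sum fun j _ => hasDerivAt_pow j t
  have hFinj : Set.InjOn F (Set.Ioi 0) := by
    have : StrictMonoOn F (Set.Ioi 0) := by
      intro s hs t ht hst
      exact Finset.sum_lt_sum_of_nonempty hane fun j hj =>
        pow_lt_pow_left₀ hst (le_of_lt hs) (by have := (Finset.mem_Icc.1 hj).1; omega)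
    exact this.injOn
  have hDpos : ∀ X : ℝ, 0 < X → 0 < ∑ j ∈ Finset.Icc 1 a, (j:ℝ) * X ^ (j-1) := by
    intro X hX
    refine Finset.sum_pos (fun j hj => ?_) hane
    have h1 := (Finset.mem_Icc.1 hj).1
    exact mul_pos (by exact_mod_cast h1) (pow_pos hX _)
  have main : ∀ w : ℝ, 0 < w → ContDiffAt ℝ (⊤ : ℕ∞) x w ∧
      HasDerivAt x (-(n:ℝ) / (w^2 * ∑ j ∈ Finset.Icc 1 a, (j:ℝ) * x w ^ (j-1))) w := by
    intro w₀ hw₀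
    obtain ⟨hx₀, hFx₀⟩ := hx w₀ hw₀
    set X₀ := x w₀
    set D := ∑ j ∈ Finset.Icc 1 a, (j:ℝ) * X₀ ^ (j-1) with hDdef
    have hD : D ≠ 0 := (hDpos X₀ hx₀).ne'
    have hFX₀ : F X₀ = (n:ℝ) / w₀ := hFx₀
    have hstrict : HasStrictDerivAt F D X₀ :=
      hFcd.contDiffAt.hasStrictDerivAt' (hFd X₀) (by simp)
    set l := hstrict.localInverse F D X₀ hD with hldef
    have hlinv : ∀ᶠ y in 𝓝 (F X₀), F (l y) = y :=
      (hstrict.hasStrictFDerivAt_equiv hD).eventually_right_inverse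
    have hlX₀ : l (F X₀) = X₀ :=
      (hstrict.hasStrictFDerivAt_equiv hD).localInverse_apply_image
    have hlderiv : HasStrictDerivAt l D⁻¹ (F X₀) := hstrict.to_localInverse hD
    have hlcont : ContinuousAt l (F X₀) := hlderiv.hasDerivAt.continuousAt
    have hlpos : ∀ᶠ y in 𝓝 (F X₀), 0 < l y := by
      have : l (F X₀) ∈ Set.Ioi (0:ℝ) := by rw [hlX₀]; exact hx₀
      exact hlcont (isOpen_Ioi.mem_nhds this)
    have hlcd : ContDiffAt ℝ (⊤ : ℕ∞) l (F X₀) := by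
      have := hFcd.contDiffAt.to_localInverse
        (f' := ContinuousLinearEquiv.unitsEquivAut ℝ (Units.mk0 D hD))
        (hf' := (hstrict.hasStrictFDerivAt_equiv hD).hasFDerivAt) (hn := by simp)
      exact this
    have hg : ∀ w : ℝ, w ≠ 0 → HasDerivAt (fun w : ℝ => (n:ℝ)/w) (-(n:ℝ)/w^2) w := by
      intro w hw
      simpa [div_eq_mul_inv, neg_div, mul_comm, mul_div_assoc] using
        (hasDerivAt_inv hw).const_mul (n:ℝ)
    have hgcont : ContinuousAt (fun w : ℝ => (n:ℝ)/w) w₀ := (hg w₀ hw₀.ne').continuousAt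
    have hgw₀ : (n:ℝ)/w₀ = F X₀ := hFX₀.symm
    have hev : ∀ᶠ w in 𝓝 w₀, x w = l ((n:ℝ)/w) := by
      have h1 : ∀ᶠ w in 𝓝 w₀, F (l ((n:ℝ)/w)) = (n:ℝ)/w ∧ 0 < l ((n:ℝ)/w) := by
        have ht := hgcont.tendsto
        rw [hgw₀] at ht
        exact ht.eventually (hlinv.and hlpos)
      have h2 : ∀ᶠ w in 𝓝 w₀, 0 < w := isOpen_Ioi.eventually_mem (show w₀ ∈ Set.Ioi 0 from hw₀)
      filter_upwards [h1, h2] with w hw hwpos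
      obtain ⟨hxw, hFw⟩ := hx w hwpos
      refine hFinj hxw hw.2 ?_
      have hFxw : F (x w) = (n:ℝ)/w := hFw
      rw [hFxw, hw.1]
    have hxg : x =ᶠ[𝓝 w₀] fun w => l ((n:ℝ)/w) := hev
    constructor
    · refine ContDiffAt.congr_of_eventuallyEq ?_ hxg
      have hgcd : ContDiffAt ℝ (⊤ : ℕ∞) (fun w : ℝ => (n:ℝ)/w) w₀ :=
        contDiffAt_const.div contDiffAt_id hw₀.ne'
      exact (hgw₀ ▸ hlcd).comp w₀ hgcd
    · have hcomp : HasDerivAt (fun w => l ((n:ℝ)/w)) (D⁻¹ * (-(n:ℝ)/w₀^2)) w₀ :=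
        (hgw₀ ▸ hlderiv.hasDerivAt).comp w₀ (hg w₀ hw₀.ne')
      have hb : HasDerivAt x (D⁻¹ * (-(n:ℝ)/w₀^2)) w₀ := hcomp.congr_of_eventuallyEq hxg
      convert hb using 1
      ring
  refine ⟨fun w hw => ((main w hw).1).contDiffWithinAt, ?_, ?_⟩
  · intro w hw
    obtain ⟨hxw, hFw⟩ := hx w hw
    set X := x w
    set D := ∑ j ∈ Finset.Icc 1 a, (j:ℝ) * X ^ (j-1) with hDdef
    have hD : (0:ℝ) < D := hDpos X hxw
    have hderiv : deriv x w = -(n:ℝ) / (w^2 * D) := (main w hw).2.deriv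
    rw [hderiv, stmt7_aux_mulD]
    rw [div_mul_eq_mul_div, div_div_eq_mul_div]
    rw [eq_div_iff (mul_ne_zero (neg_ne_zero.2 hn') (by positivity))]
    ring
  · intro w hw hX1
    obtain ⟨hxw, hFw⟩ := hx w hw
    set X := x w with hXdef
    set D := ∑ j ∈ Finset.Icc 1 a, (j:ℝ) * X ^ (j-1) with hDdef
    set S := ∑ j ∈ Finset.Icc 1 a, X ^ j with hSdef
    have hD : (0:ℝ) < D := hDpos X hxw
    have hS : (0:ℝ) < S := Finset.sum_pos (fun j _ => pow_pos hxw j) hane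
    have hderiv : deriv x w = -(n:ℝ) / (w^2 * D) := (main w hw).2.deriv
    have hT : ∑ j ∈ Finset.Icc 1 a, (j:ℝ) * X ^ j = X * D := stmt7_aux_mulD X a
    have h1 : (X - 1) * S = X ^ (a+1) - X := stmt7_aux_geom X a
    have h2 : (X - 1) * (X * D) = (a:ℝ) * X ^ (a+1) - S := by
      rw [← hT]; exact stmt7_aux_jsum X a
    have hwS : S * w = n := by
      rw [hFw]; field_simp
    have hX1' : X - 1 ≠ 0 := sub_ne_zero.2 hX1
    have hden : 1 - (a:ℝ) * (X - 1) - w * (a:ℝ) * X / n = -((X-1) * (X * D)) / S := by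
      field_simp
      linear_combination (-(a:ℝ)*n)*h1 + (-(a:ℝ)*X)*hwS + (n:ℝ)*h2
    have e1 : deriv x w = -S / (D * w) := by
      rw [hderiv, div_eq_div_iff (by positivity) (by positivity)]
      linear_combination (D*w)*hwS
    have e2 : (X - 1) * X / (w * (1 - (a:ℝ) * (X - 1) - w * (a:ℝ) * X / n)) = -S / (D * w) := by
      rw [hden]
      field_simp
    exact e1.trans e2.symm
end

section
/- Let α : ℕ → ℕ with α(n) ≥ 1, let 0 < δ < 1, and let n ∈ ℕ. Then for all w ∈ (1−δ, 1+δ) the function h̃_{n,α} is differentiable at w with h̃'_{n,α}(w) = ∑_{j=1}^{α(n)} x_{n,α}(w)^j/j − (1/2)·x'_{n,α}(w)/x_{n,α}(w) + (1/2)·x''_{n,α}(w)/x'_{n,α}(w) + 1/(2w), where x'_{n,α} and x''_{n,α} denote the first and second derivatives of w ↦ x_{n,α}(w). -/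
/-!
For `t > 0` the saddle-point map is `x(t) = p⁻¹(n / t)`, where `p(y) = ∑_{j=1}^{m} y^j` is
strictly increasing on `[0, ∞)`; the inverse function theorem gives `x' = -n / (t² p'(x))`, which
is again differentiable. Two identities then reduce `h̃'` to bookkeeping: `w · (∑ x^j / j)' = n x'/x`
cancels the derivative of `n log x`, and `2π w ∑ j x^j = 2π w · x p'(x) = 2π n x / (w (-x'))`
turns the last logarithm into one whose derivative is `x'/x - 1/w - x''/x'`.
-/

open Filter Finset Set Topology

theorem HasDerivAt.of_comp_eq_of_injOn {𝕜 : Type*} [NontriviallyNormedField 𝕜] [CompleteSpace 𝕜]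
    {p x q : 𝕜 → 𝕜} {p' q' w : 𝕜} {s : Set 𝕜} (hinj : InjOn p s) (hs : s ∈ 𝓝 (x w))
    (hxs : ∀ᶠ t in 𝓝 w, x t ∈ s) (hp : HasStrictDerivAt p p' (x w)) (hp' : p' ≠ 0)
    (hq : HasDerivAt q q' w) (hpx : ∀ᶠ t in 𝓝 w, p (x t) = q t) :
    HasDerivAt x (p'⁻¹ * q') w := by
  set L := hp.localInverse p p' (x w) hp'
  have hqw : q w = p (x w) := hpx.self_of_nhds.symm
  have hL : HasStrictDerivAt L p'⁻¹ (q w) := hqw ▸ hp.to_localInverse hp'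
  have hLqw : L (q w) = x w := hqw ▸ (hp.eventually_left_inverse hp').self_of_nhds
  have hLq_mem : ∀ᶠ t in 𝓝 w, L (q t) ∈ s :=
    hq.continuousAt.eventually (hL.hasDerivAt.continuousAt.preimage_mem_nhds (hLqw ▸ hs))
  have hpLq : ∀ᶠ t in 𝓝 w, p (L (q t)) = q t :=
    hq.continuousAt.eventually (hqw ▸ hp.eventually_right_inverse hp')
  refine (hL.hasDerivAt.comp w hq).congr_of_eventuallyEq ?_
  filter_upwards [hxs, hLq_mem, hpLq, hpx] with t hxt hLt hpLt hpxt
  exact hinj hxt hLt (hpxt.trans hpLt.symm)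

theorem strictMonoOn_sum_Icc_pow {m : ℕ} (hm : 1 ≤ m) :
    StrictMonoOn (fun y : ℝ => ∑ j ∈ Icc 1 m, y ^ j) (Ici 0) := by
  intro a ha b _ hab
  refine sum_lt_sum (fun j _ => pow_le_pow_left₀ ha hab.le j) ⟨1, mem_Icc.2 ⟨le_rfl, hm⟩, ?_⟩
  simpa using hab

theorem mul_sum_Icc_mul_pow_sub_one {R : Type*} [CommSemiring R] (m : ℕ) (c : ℕ → R) (y : R) :
    y * ∑ j ∈ Icc 1 m, c j * y ^ (j - 1) = ∑ j ∈ Icc 1 m, c j * y ^ j := by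
  rw [mul_sum]
  refine sum_congr rfl fun j hj => ?_
  rw [mul_left_comm, ← pow_succ', Nat.sub_add_cancel (mem_Icc.1 hj).1]

theorem sum_Icc_natCast_mul_pow_sub_one_pos {m : ℕ} (hm : 1 ≤ m) {y : ℝ} (hy : 0 < y) :
    0 < ∑ j ∈ Icc 1 m, (j : ℝ) * y ^ (j - 1) :=
  sum_pos' (fun j _ => by positivity) ⟨1, mem_Icc.2 ⟨le_rfl, hm⟩, by simp⟩

def IsSaddlePointMap (m n : ℕ) (x : ℝ → ℝ) : Prop :=
  ∀ t : ℝ, 0 < t → 0 < x t ∧ ∑ j ∈ Icc 1 m, x t ^ j = n / t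

namespace IsSaddlePointMap

variable {m n : ℕ} {x : ℝ → ℝ} {t : ℝ}

theorem natCast_pos (hx : IsSaddlePointMap m n x) (hm : 1 ≤ m) : (0 : ℝ) < n := by
  obtain ⟨hx₁, hsum⟩ := hx 1 one_pos
  rw [div_one] at hsum
  exact hsum ▸ sum_pos (fun j _ => pow_pos hx₁ j) ⟨1, mem_Icc.2 ⟨le_rfl, hm⟩⟩

theorem hasDerivAt (hx : IsSaddlePointMap m n x) (hm : 1 ≤ m) (ht : 0 < t) :
    HasDerivAt x (-n / (t ^ 2 * ∑ j ∈ Icc 1 m, (j : ℝ) * x t ^ (j - 1))) t := by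
  have hp' := sum_Icc_natCast_mul_pow_sub_one_pos hm (hx t ht).1
  have hq : HasDerivAt (fun s : ℝ => n / s) (-n / t ^ 2) t := by
    simpa [div_eq_mul_inv, neg_div] using (hasDerivAt_inv ht.ne').const_mul (n : ℝ)
  refine (HasDerivAt.of_comp_eq_of_injOn ((strictMonoOn_sum_Icc_pow hm).injOn.mono
    Set.Ioi_subset_Ici_self) (Ioi_mem_nhds (hx t ht).1)
    (eventually_of_mem (Ioi_mem_nhds ht) fun s hs => (hx s hs).1)
    (HasStrictDerivAt.fun_sum fun j _ => hasStrictDerivAt_pow j (x t)) hp'.ne' hq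
    (eventually_of_mem (Ioi_mem_nhds ht) fun s hs => (hx s hs).2)).congr_deriv ?_
  ring

theorem neg_deriv_pos (hx : IsSaddlePointMap m n x) (hm : 1 ≤ m) (ht : 0 < t) :
    0 < -deriv x t := by
  rw [(hx.hasDerivAt hm ht).deriv, neg_div, neg_neg]
  have := sum_Icc_natCast_mul_pow_sub_one_pos hm (hx t ht).1
  have := hx.natCast_pos hm
  positivity

theorem sum_natCast_mul_pow_eq (hx : IsSaddlePointMap m n x) (hm : 1 ≤ m) (ht : 0 < t) :
    ∑ j ∈ Icc 1 m, (j : ℝ) * x t ^ j = n * x t / (t ^ 2 * -deriv x t) := by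
  have hp' := sum_Icc_natCast_mul_pow_sub_one_pos hm (hx t ht).1
  have := hx.natCast_pos hm
  rw [← mul_sum_Icc_mul_pow_sub_one, (hx.hasDerivAt hm ht).deriv]
  field_simp

theorem differentiableAt_deriv (hx : IsSaddlePointMap m n x) (hm : 1 ≤ m) (ht : 0 < t) :
    DifferentiableAt ℝ (deriv x) t := by
  have hderiv : deriv x =ᶠ[𝓝 t] fun s => -n / (s ^ 2 * ∑ j ∈ Icc 1 m, (j : ℝ) * x s ^ (j - 1)) :=
    eventually_of_mem (Ioi_mem_nhds ht) fun s hs => (hx.hasDerivAt hm hs).deriv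
  have hxt := (hx.hasDerivAt hm ht).differentiableAt
  refine (DifferentiableAt.div (differentiableAt_const _) ?_ ?_).congr_of_eventuallyEq hderiv
  · fun_prop
  · have := sum_Icc_natCast_mul_pow_sub_one_pos hm (hx t ht).1
    positivity

theorem hasDerivAt_sum_pow_div (hx : IsSaddlePointMap m n x) (hm : 1 ≤ m) (ht : 0 < t) :
    HasDerivAt (fun s => ∑ j ∈ Icc 1 m, x s ^ j / j) (n * deriv x t / (t * x t)) t := by
  have hxt := (hx t ht).1
  have hsum : x t * ∑ j ∈ Icc 1 m, x t ^ (j - 1) = n / t := by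
    rw [← (hx t ht).2]
    simpa using mul_sum_Icc_mul_pow_sub_one m (fun _ => (1 : ℝ)) (x t)
  refine (HasDerivAt.fun_sum fun j _ =>
    ((hasDerivAt_pow j (x t)).comp t (hx.hasDerivAt hm ht).differentiableAt.hasDerivAt).div_const
      (j : ℝ)).congr_deriv ?_
  calc ∑ j ∈ Icc 1 m, (j : ℝ) * x t ^ (j - 1) * deriv x t / j
      = deriv x t * ∑ j ∈ Icc 1 m, x t ^ (j - 1) := by
        rw [mul_sum]
        refine sum_congr rfl fun j hj => ?_
        have : (j : ℝ) ≠ 0 := by have := (mem_Icc.1 hj).1; positivity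
        field_simp
    _ = n * deriv x t / (t * x t) := by
        field_simp at hsum ⊢
        linear_combination deriv x t * hsum

end IsSaddlePointMap

open Real in
theorem stmt_8_general (α : ℕ → ℕ) (hα : ∀ k, 1 ≤ α k) (δ : ℝ) (hδ1 : δ < 1)
    (n : ℕ)
    (x : ℝ → ℝ)
    (hx : ∀ w : ℝ, 0 < w →
      0 < x w ∧ ∑ j ∈ Finset.Icc 1 (α n), x w ^ j = (n : ℝ) / w)
    (h : ℝ → ℝ)
    (hh : ∀ w : ℝ, 0 < w →
      h w = w * ∑ j ∈ Finset.Icc 1 (α n), x w ^ j / j - (n : ℝ) * Real.log (x w)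
        - 1 / 2 * Real.log (2 * π * w * ∑ j ∈ Finset.Icc 1 (α n), (j : ℝ) * x w ^ j)) :
    ∀ w ∈ Set.Ioo (1 - δ) (1 + δ),
      HasDerivAt h
        (∑ j ∈ Finset.Icc 1 (α n), x w ^ j / j
          - 1 / 2 * (deriv x w / x w) + 1 / 2 * (deriv (deriv x) w / deriv x w)
          + 1 / (2 * w)) w := by
  intro w hw
  have hw₀ : 0 < w := by linarith [hw.1]
  have hX : IsSaddlePointMap (α n) n x := hx
  have hm := hα n
  have hxw := (hx w hw₀).1
  have hn := hX.natCast_pos hm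
  have hx'w := hX.neg_deriv_pos hm hw₀
  have hx₁ := (hX.hasDerivAt hm hw₀).differentiableAt.hasDerivAt
  have hx₂ := (hX.differentiableAt_deriv hm hw₀).hasDerivAt
  have hV : HasDerivAt (fun t => 2 * π * t * (n * x t / (t ^ 2 * -deriv x t))) _ w :=
    ((hasDerivAt_id w).const_mul (2 * π)).mul ((hx₁.const_mul (n : ℝ)).div
      ((hasDerivAt_pow 2 w).mul hx₂.neg) (by positivity))
  have hg := (((hasDerivAt_id w).mul (hX.hasDerivAt_sum_pow_div hm hw₀)).sub
    ((hx₁.log hxw.ne').const_mul (n : ℝ))).sub ((hV.log (by positivity)).const_mul (1 / 2))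
  refine (hg.congr_of_eventuallyEq ?_).congr_deriv ?_
  · filter_upwards [Ioi_mem_nhds hw₀] with t ht
    rw [hh t ht, hX.sum_natCast_mul_pow_eq hm ht]
    rfl
  · simp only [id]
    field_simp [(neg_pos.1 hx'w).ne]
    ring

open Real in
/-- first derivative of `h̃_{n,α}`.  With `x = x_{n,α}` the
saddle-point map and
`h̃(w) = w ∑_{j=1}^{α(n)} x(w)^j/j − n log x(w) − (1/2) log(2πw ∑_{j=1}^{α(n)} j x(w)^j)`,
for every `w ∈ (1−δ, 1+δ)` the function `h̃` is differentiable at `w` with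
`h̃'(w) = ∑_{j=1}^{α(n)} x(w)^j/j − (1/2) x'(w)/x(w) + (1/2) x''(w)/x'(w) + 1/(2w)`. -/
theorem stmt_8 (α : ℕ → ℕ) (hα : ∀ k, 1 ≤ α k) (δ : ℝ) (hδ0 : 0 < δ) (hδ1 : δ < 1)
    (n : ℕ)
    (x : ℝ → ℝ)
    (hx : ∀ w : ℝ, 0 < w →
      0 < x w ∧ ∑ j ∈ Finset.Icc 1 (α n), x w ^ j = (n : ℝ) / w)
    (h : ℝ → ℝ)
    (hh : ∀ w : ℝ, 0 < w →
      h w = w * ∑ j ∈ Finset.Icc 1 (α n), x w ^ j / j - (n : ℝ) * Real.log (x w)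
        - 1 / 2 * Real.log (2 * π * w * ∑ j ∈ Finset.Icc 1 (α n), (j : ℝ) * x w ^ j)) :
    ∀ w ∈ Set.Ioo (1 - δ) (1 + δ),
      HasDerivAt h
        (∑ j ∈ Finset.Icc 1 (α n), x w ^ j / j
          - 1 / 2 * (deriv x w / x w) + 1 / 2 * (deriv (deriv x) w / deriv x w)
          + 1 / (2 * w)) w :=
  stmt_8_general α hα δ hδ1 n x hx h hh
end

section
/- Let α : ℕ → ℕ with α(n) ≥ 1 and let 0 < δ < 1 be such that n/(w·α(n)) > 1 for all sufficiently large n and all w ∈ (1−δ, 1+δ). Then the following are equivalent: (i) for every w ∈ (1−δ, 1+δ), α(n)·log(x_{n,α}(w)) → ∞ as n → ∞; (ii) α(n)/n → 0 as n → ∞. -/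
open Filter Finset

lemma aux_bounds (a n : ℕ) (ha : 1 ≤ a) (w x : ℝ) (hw : 0 < w)
    (hxpos : 0 < x) (hsum : ∑ j ∈ Finset.Icc 1 a, x ^ j = (n : ℝ) / w)
    (hgt : (a : ℝ) < (n : ℝ) / w) :
    1 < x ∧ (n : ℝ) / w ≤ (a : ℝ) * x ^ a ∧
      (a : ℝ) / 2 * x ^ ((a + 1) / 2) ≤ (n : ℝ) / w := by
  have hx1 : 1 < x := by
    by_contra hle
    push_neg at hle
    have h1 : ∑ j ∈ Finset.Icc 1 a, x ^ j ≤ ∑ j ∈ Finset.Icc 1 a, (1 : ℝ) := by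
      apply Finset.sum_le_sum
      intro j hj
      exact pow_le_one₀ hxpos.le hle
    simp [Nat.card_Icc] at h1
    rw [hsum] at h1
    linarith
  refine ⟨hx1, ?_, ?_⟩
  · have h1 : ∑ j ∈ Finset.Icc 1 a, x ^ j ≤ ∑ j ∈ Finset.Icc 1 a, x ^ a := by
      apply Finset.sum_le_sum
      intro j hj
      exact pow_le_pow_right₀ hx1.le (Finset.mem_Icc.mp hj).2
    simp [Nat.card_Icc] at h1
    rw [hsum] at h1
    linarith
  · set m := (a + 1) / 2 with hm
    have hm1 : 1 ≤ m := by omega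
    have hma : m ≤ a := by omega
    have h2m : a ≤ 2 * m := by omega
    have hm2 : 2 * m ≤ a + 1 := by omega
    have hsub : ∑ j ∈ Finset.Icc m a, x ^ j ≤ ∑ j ∈ Finset.Icc 1 a, x ^ j := by
      apply Finset.sum_le_sum_of_subset_of_nonneg
      · exact Finset.Icc_subset_Icc hm1 le_rfl
      · intro j _ _; positivity
    have hterm : ∑ j ∈ Finset.Icc m a, (x ^ m : ℝ) ≤ ∑ j ∈ Finset.Icc m a, x ^ j := by
      apply Finset.sum_le_sum
      intro j hj
      exact pow_le_pow_right₀ hx1.le (Finset.mem_Icc.mp hj).1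
    simp [Nat.card_Icc] at hterm
    have hcard : (a : ℝ) / 2 ≤ ((a + 1 - m : ℕ) : ℝ) := by
      have : a + 1 - m ≥ m := by omega
      have hc : ((a + 1 - m : ℕ) : ℝ) = (a : ℝ) + 1 - m := by
        push_cast [Nat.cast_sub (by omega : m ≤ a + 1)]
        ring
      rw [hc]
      have h2 : (2 : ℝ) * m ≤ (a : ℝ) + 1 := by exact_mod_cast hm2
      linarith
    have hxm : (0 : ℝ) ≤ x ^ m := by positivity
    calc (a : ℝ) / 2 * x ^ m ≤ ((a + 1 - m : ℕ) : ℝ) * x ^ m :=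
          mul_le_mul_of_nonneg_right hcard hxm
      _ ≤ ∑ j ∈ Finset.Icc m a, x ^ j := by
          have := hterm
          simp [Nat.card_Icc] at *
          linarith [hterm]
      _ ≤ ∑ j ∈ Finset.Icc 1 a, x ^ j := hsub
      _ = (n : ℝ) / w := hsum
open Filter in
/-- Lemma on divergence of `α(n) log x_{n,α}(w)`.  Suppose
`n/(w α(n)) > 1` for all large `n` and all `w ∈ (1−δ, 1+δ)`, where
`x n w = x_{n,α}(w)` is the positive solution of `∑_{j=1}^{α(n)} x^j = n/w`.
Then `α(n) log(x_{n,α}(w)) → ∞` for every `w ∈ (1−δ, 1+δ)` iff `α(n)/n → 0`. -/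
theorem stmt_10 (α : ℕ → ℕ) (hα : ∀ n, 1 ≤ α n)
    (δ : ℝ) (hδ0 : 0 < δ) (hδ1 : δ < 1)
    (hbig : ∀ᶠ n : ℕ in atTop, ∀ w ∈ Set.Ioo (1 - δ) (1 + δ),
      1 < (n : ℝ) / (w * α n))
    (x : ℕ → ℝ → ℝ)
    (hx : ∀ n, 1 ≤ n → ∀ w : ℝ, 0 < w →
      0 < x n w ∧ ∑ j ∈ Finset.Icc 1 (α n), x n w ^ j = (n : ℝ) / w) :
    (∀ w ∈ Set.Ioo (1 - δ) (1 + δ),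
        Tendsto (fun n : ℕ => (α n : ℝ) * Real.log (x n w)) atTop atTop)
      ↔ Tendsto (fun n : ℕ => (α n : ℝ) / n) atTop (nhds 0) := by
  constructor
  · -- (i) → (ii): use w = 1
    intro h
    have hw1 : (1 : ℝ) ∈ Set.Ioo (1 - δ) (1 + δ) := ⟨by linarith, by linarith⟩
    have h1 := h 1 hw1
    -- exp(α n · log x / 2) ≤ 2 n / α n eventually
    have ev : ∀ᶠ n : ℕ in atTop,
        Real.exp ((α n : ℝ) * Real.log (x n 1) / 2) ≤ 2 * (n : ℝ) / α n := by
      filter_upwards [hbig, eventually_ge_atTop 1] with n hb hn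
      have hα0 : (0 : ℝ) < (α n : ℝ) := by exact_mod_cast hα n
      have hgt0 := hb 1 hw1
      rw [one_mul] at hgt0
      have hgt : ((α n : ℝ)) < (n : ℝ) / 1 := by
        rw [div_one]
        exact (one_lt_div hα0).mp hgt0
      obtain ⟨hxpos, hsum⟩ := hx n hn 1 one_pos
      obtain ⟨hx1, -, hlb⟩ := aux_bounds (α n) n (hα n) 1 (x n 1) one_pos hxpos hsum hgt
      set a := α n
      set m := (a + 1) / 2 with hm
      have h2m : a ≤ 2 * m := by omega
      have hL : 0 < Real.log (x n 1) := Real.log_pos hx1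
      have step1 : Real.exp ((a : ℝ) * Real.log (x n 1) / 2)
          ≤ Real.exp ((m : ℝ) * Real.log (x n 1)) := by
        apply Real.exp_le_exp.mpr
        have : (a : ℝ) ≤ 2 * m := by exact_mod_cast h2m
        nlinarith
      have step2 : Real.exp ((m : ℝ) * Real.log (x n 1)) = x n 1 ^ m := by
        rw [← Real.log_pow, Real.exp_log (pow_pos hxpos m)]
      have step3 : x n 1 ^ m ≤ 2 * (n : ℝ) / a := by
        rw [le_div_iff₀ hα0]
        rw [div_one] at hlb
        nlinarith
      calc Real.exp ((a : ℝ) * Real.log (x n 1) / 2)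
          ≤ Real.exp ((m : ℝ) * Real.log (x n 1)) := step1
        _ = x n 1 ^ m := step2
        _ ≤ 2 * (n : ℝ) / a := step3
    have hexp : Tendsto (fun n : ℕ => Real.exp ((α n : ℝ) * Real.log (x n 1) / 2))
        atTop atTop :=
      Real.tendsto_exp_atTop.comp (h1.atTop_div_const two_pos)
    have h2n : Tendsto (fun n : ℕ => 2 * (n : ℝ) / α n) atTop atTop :=
      tendsto_atTop_mono' _ ev hexp
    have hna : Tendsto (fun n : ℕ => (n : ℝ) / α n) atTop atTop := by
      have := h2n.atTop_div_const two_pos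
      refine this.congr fun n => ?_
      ring
    have := hna.inv_tendsto_atTop
    refine this.congr fun n => ?_
    rw [Pi.inv_apply, inv_div]
  · -- (ii) → (i)
    intro h w hw
    have hw0 : 0 < w := lt_trans (by linarith [hw.1]) hw.1
    -- n / α n → ∞
    have hpos : ∀ᶠ n : ℕ in atTop, (α n : ℝ) / n ∈ Set.Ioi (0 : ℝ) := by
      filter_upwards [eventually_ge_atTop 1] with n hn
      have hα0 : (0 : ℝ) < (α n : ℝ) := by exact_mod_cast hα n
      have hn0 : (0 : ℝ) < (n : ℝ) := by exact_mod_cast hn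
      exact div_pos hα0 hn0
    have hzero : Tendsto (fun n : ℕ => (α n : ℝ) / n) atTop (nhdsWithin 0 (Set.Ioi 0)) :=
      tendsto_nhdsWithin_iff.mpr ⟨h, hpos⟩
    have hna : Tendsto (fun n : ℕ => (n : ℝ) / α n) atTop atTop := by
      have := hzero.inv_tendsto_nhdsGT_zero
      refine this.congr fun n => ?_
      rw [Pi.inv_apply, inv_div]
    have hlog : Tendsto (fun n : ℕ => Real.log ((n : ℝ) / (α n) / w)) atTop atTop :=
      Real.tendsto_log_atTop.comp (hna.atTop_div_const hw0)
    apply tendsto_atTop_mono' _ _ hlog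
    filter_upwards [hbig, eventually_ge_atTop 1] with n hb hn
    have hα0 : (0 : ℝ) < (α n : ℝ) := by exact_mod_cast hα n
    have hgt0 := hb w hw
    have hrw : (n : ℝ) / (w * α n) = (n : ℝ) / w / α n := by
      rw [div_div]
    have hgt : ((α n : ℝ)) < (n : ℝ) / w := by
      rw [hrw] at hgt0
      exact (one_lt_div hα0).mp hgt0
    obtain ⟨hxpos, hsum⟩ := hx n hn w hw0
    obtain ⟨hx1, hub, -⟩ := aux_bounds (α n) n (hα n) w (x n w) hw0 hxpos hsum hgt
    have hdiv : (n : ℝ) / α n / w = (n : ℝ) / w / α n := by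
      rw [div_div, div_div, mul_comm]
    rw [hdiv]
    have hxa : (n : ℝ) / w / α n ≤ x n w ^ α n := by
      rw [div_le_iff₀ hα0]
      nlinarith
    have hpos2 : 0 < (n : ℝ) / w / α n := by
      rw [← hrw]; linarith [hgt0]
    calc Real.log ((n : ℝ) / w / α n) ≤ Real.log (x n w ^ α n) :=
          Real.log_le_log hpos2 hxa
      _ = (α n : ℝ) * Real.log (x n w) := Real.log_pow _ _
end

section
/- Let α : ℕ → ℕ with α(n) ≥ 1 and let 0 < δ < 1 be such that n/(w·α(n)) > 1 for all sufficiently large n and all w ∈ (1−δ, 1+δ). Assume moreover α(n)/n → 0 as n → ∞. Then for every w ∈ (1−δ, 1+δ), lim_{n→∞} α(n)·x'_{n,α}(w)/x_{n,α}(w) = −1/w. -/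
/-! With `S = ∑_{j ≤ k} x^j`, `T = ∑_{j ≤ k} j x^j` and `k = α(n)`, differentiating the
implicit relation `S(x(w)) = n / w` gives `k x' / x = (-1 / w) / r` with `r = T / (k S)`.
Clearly `r ≤ 1`. Conversely `(x - 1)(k S - T) = S - k x ≤ S`, so
`1 - r ≤ 1 / (k (x - 1)) ≤ 1 / (k log x) ≤ 1 / log (n / (w k))`, using `k x^k ≥ S = n / w`.
Since `α(n) / n → 0`, this logarithm tends to infinity and `r → 1`. -/

open Filter Topology Finset

theorem StrictMonoOn.continuousAt_of_comp_eq {α β γ : Type*} [LinearOrder α] [TopologicalSpace α]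
    [OrderTopology α] [DenselyOrdered α] [NoMaxOrder α] [NoMinOrder α] [LinearOrder β]
    [TopologicalSpace β] [OrderTopology β] [TopologicalSpace γ] {F : α → β} {g : γ → α}
    {G : γ → β} {s : Set α} {w : γ} (hF : StrictMonoOn F s) (hs : s ∈ 𝓝 (g w))
    (hgs : ∀ᶠ u in 𝓝 w, g u ∈ s) (hFg : ∀ᶠ u in 𝓝 w, F (g u) = G u) (hG : ContinuousAt G w) :
    ContinuousAt g w := by
  obtain ⟨l, r, ⟨hl, hr⟩, hlr⟩ := mem_nhds_iff_exists_Ioo_subset.mp hs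
  have hgw : g w ∈ s := mem_of_mem_nhds hs
  have hGw : F (g w) = G w := hFg.self_of_nhds
  refine tendsto_order.mpr ⟨fun a ha => ?_, fun b hb => ?_⟩
  · obtain ⟨a', ha'l, ha'w⟩ := exists_between (max_lt ha hl)
    have ha's : a' ∈ s := hlr ⟨(le_max_right a l).trans_lt ha'l, ha'w.trans hr⟩
    have hlt : F a' < G w := hGw ▸ hF ha's hgw ha'w
    filter_upwards [hG.eventually (lt_mem_nhds hlt), hFg, hgs] with u hu hFu hgu
    exact ((le_max_left a l).trans_lt ha'l).trans ((hF.lt_iff_lt ha's hgu).mp (hFu ▸ hu))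
  · obtain ⟨b', hwb', hb'r⟩ := exists_between (lt_min hb hr)
    have hb's : b' ∈ s := hlr ⟨hl.trans hwb', hb'r.trans_le (min_le_right b r)⟩
    have hlt : G w < F b' := hGw ▸ hF hgw hb's hwb'
    filter_upwards [hG.eventually (gt_mem_nhds hlt), hFg, hgs] with u hu hFu hgu
    exact ((hF.lt_iff_lt hgu hb's).mp (hFu ▸ hu)).trans (hb'r.trans_le (min_le_left b r))

theorem HasDerivAt.of_comp_eq_const_div {F g : ℝ → ℝ} {F' c w : ℝ} (hc : c ≠ 0) (hw : w ≠ 0)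
    (hg : ContinuousAt g w) (hF : HasDerivAt F F' (g w)) (hF' : F' ≠ 0)
    (hFg : ∀ᶠ u in 𝓝 w, F (g u) = c / u) : HasDerivAt g (-(c / w ^ 2) / F') w := by
  -- `F (h v) = v` near `c / w`, so `h` is differentiable there, and `g u = h (c / u)`
  set h : ℝ → ℝ := fun v => g (c / v)
  have hinv : HasDerivAt (fun u => c / u) (-(c / w ^ 2)) w := by
    simpa [div_eq_mul_inv] using (hasDerivAt_inv hw).const_mul c
  have hh : HasDerivAt h F'⁻¹ (c / w) := by
    have hcont : ContinuousAt (fun v => c / v) (c / w) :=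
      continuousAt_const.div continuousAt_id (div_ne_zero hc hw)
    have hcw : Tendsto (fun v => c / v) (𝓝 (c / w)) (𝓝 w) := by
      simpa [div_div_cancel₀ hc] using hcont.tendsto
    refine HasDerivAt.of_local_left_inverse (hg.comp_of_eq hcont (div_div_cancel₀ hc))
      (by simpa [h, div_div_cancel₀ hc] using hF) hF' ?_
    filter_upwards [hcw.eventually hFg] with v hv
    simpa [h, div_div_cancel₀ hc] using hv
  have hcomp := hh.comp w hinv
  rw [mul_comm, ← div_eq_mul_inv] at hcomp
  refine hcomp.congr_of_eventuallyEq ?_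
  filter_upwards with u
  simp [h, div_div_cancel₀ hc]

def powSum (k : ℕ) (y : ℝ) : ℝ := ∑ j ∈ Icc 1 k, y ^ j

def weightedPowSum (k : ℕ) (y : ℝ) : ℝ := ∑ j ∈ Icc 1 k, (j : ℝ) * y ^ j

section PowSum

variable {k : ℕ} {y : ℝ}

namespace powSum

theorem succ (k : ℕ) (y : ℝ) : powSum (k + 1) y = powSum k y + y ^ (k + 1) :=
  sum_Icc_succ_top (by omega) _

theorem sub_one_mul (k : ℕ) (y : ℝ) : (y - 1) * powSum k y = y ^ (k + 1) - y := by
  induction k with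
  | zero => simp [powSum]
  | succ k ih =>
    rw [succ, mul_add, ih]
    ring

theorem sub_one_mul_weightedPowSum (k : ℕ) (y : ℝ) :
    (y - 1) * weightedPowSum k y = k * y ^ (k + 1) - powSum k y := by
  induction k with
  | zero => simp [powSum, weightedPowSum]
  | succ k ih =>
    rw [weightedPowSum, sum_Icc_succ_top (by omega), mul_add, ← weightedPowSum, ih, succ]
    push_cast
    ring

theorem pos (hk : 1 ≤ k) (hy : 0 < y) : 0 < powSum k y :=
  sum_pos (fun j _ => pow_pos hy j) ⟨1, mem_Icc.mpr ⟨le_rfl, hk⟩⟩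

theorem hasDerivAt (k : ℕ) (hy : y ≠ 0) : HasDerivAt (powSum k) (weightedPowSum k y / y) y := by
  have h : HasDerivAt (powSum k) (∑ j ∈ Icc 1 k, (j : ℝ) * y ^ (j - 1)) y :=
    HasDerivAt.fun_sum fun j _ => hasDerivAt_pow j y
  convert h using 1
  rw [weightedPowSum, sum_div]
  refine sum_congr rfl fun j hj => ?_
  rw [← Nat.sub_add_cancel (mem_Icc.mp hj).1, pow_succ]
  field_simp
  simp

theorem strictMonoOn (hk : 1 ≤ k) : StrictMonoOn (powSum k) (Set.Ici 0) := fun a ha b _ hab =>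
  sum_lt_sum_of_nonempty ⟨1, mem_Icc.mpr ⟨le_rfl, hk⟩⟩ fun j hj =>
    pow_lt_pow_left₀ hab ha (by have := (mem_Icc.mp hj).1; omega)

theorem one_lt_of_natCast_lt (hy : 0 ≤ y) (h : k < powSum k y) : 1 < y := by
  by_contra! hy1
  have : powSum k y ≤ k := by
    calc powSum k y ≤ ∑ j ∈ Icc 1 k, (1 : ℝ) := sum_le_sum fun j _ => pow_le_one₀ hy hy1
      _ = k := by simp
  linarith

theorem natCast_lt_of_one_lt (hk : 1 ≤ k) (hy : 1 < y) : k < powSum k y := by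
  calc (k : ℝ) = ∑ j ∈ Icc 1 k, (1 : ℝ) := by simp
    _ < powSum k y := sum_lt_sum_of_nonempty ⟨1, mem_Icc.mpr ⟨le_rfl, hk⟩⟩ fun j hj =>
        one_lt_pow₀ hy (by have := (mem_Icc.mp hj).1; omega)

theorem le_mul_pow (hy : 1 ≤ y) : powSum k y ≤ k * y ^ k := by
  calc powSum k y ≤ ∑ j ∈ Icc 1 k, y ^ k :=
        sum_le_sum fun j hj => pow_le_pow_right₀ hy (mem_Icc.mp hj).2
    _ = k * y ^ k := by simp

end powSum

theorem weightedPowSum_pos (hk : 1 ≤ k) (hy : 0 < y) : 0 < weightedPowSum k y :=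
  sum_pos (fun j hj => mul_pos (by exact_mod_cast (mem_Icc.mp hj).1) (pow_pos hy j))
    ⟨1, mem_Icc.mpr ⟨le_rfl, hk⟩⟩

theorem weightedPowSum_le (hy : 0 ≤ y) : weightedPowSum k y ≤ k * powSum k y := by
  rw [weightedPowSum, powSum, mul_sum]
  refine sum_le_sum fun j hj => mul_le_mul_of_nonneg_right ?_ (pow_nonneg hy j)
  exact_mod_cast (mem_Icc.mp hj).2

theorem one_sub_inv_log_le_weightedPowSum_div (hk : 1 ≤ k) (hy : 1 < y) :
    1 - (Real.log (powSum k y / k))⁻¹ ≤ weightedPowSum k y / (k * powSum k y) := by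
  set S := powSum k y
  set T := weightedPowSum k y
  have hk0 : (0 : ℝ) < k := by exact_mod_cast hk
  have hS : 0 < S := powSum.pos hk (by linarith)
  have hL : 0 < Real.log (S / k) :=
    Real.log_pos ((one_lt_div hk0).mpr (powSum.natCast_lt_of_one_lt hk hy))
  have hLk : Real.log (S / k) ≤ k * (y - 1) := calc
    Real.log (S / k) ≤ Real.log (y ^ k) :=
      Real.log_le_log (by positivity) ((div_le_iff₀' hk0).mpr (powSum.le_mul_pow hy.le))
    _ = k * Real.log y := Real.log_pow y k
    _ ≤ k * (y - 1) := by gcongr; exact Real.log_le_sub_one_of_pos (by linarith)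
  have hdefect : (k * S - T) * (y - 1) = S - k * y := by
    linear_combination k * powSum.sub_one_mul k y - powSum.sub_one_mul_weightedPowSum k y
  rw [sub_le_comm]
  calc 1 - T / (k * S) = (k * S - T) / (k * S) := by field_simp
    _ ≤ S / (y - 1) / (k * S) := by
      gcongr
      rw [le_div_iff₀ (by linarith), hdefect]
      linarith [mul_pos hk0 (by linarith : (0 : ℝ) < y)]
    _ = (k * (y - 1))⁻¹ := by field_simp
    _ ≤ (Real.log (S / k))⁻¹ := inv_anti₀ hL hLk

end PowSum

section Solution

variable {k : ℕ} {c w : ℝ} {f : ℝ → ℝ}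

theorem hasDerivAt_of_powSum_eq (hk : 1 ≤ k) (hc : 0 < c) (hw : 0 < w)
    (hf : ∀ u, 0 < u → 0 < f u ∧ powSum k (f u) = c / u) :
    HasDerivAt f (-(c / w ^ 2) / (weightedPowSum k (f w) / f w)) w := by
  have hfw := (hf w hw).1
  have hFf : ∀ᶠ u in 𝓝 w, powSum k (f u) = c / u :=
    (lt_mem_nhds hw).mono fun u hu => (hf u hu).2
  have hcont : ContinuousAt f w :=
    (powSum.strictMonoOn hk).continuousAt_of_comp_eq (Ici_mem_nhds hfw)
      ((lt_mem_nhds hw).mono fun u hu => (hf u hu).1.le) hFf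
      (continuousAt_const.div continuousAt_id hw.ne')
  exact .of_comp_eq_const_div hc.ne' hw.ne' hcont (powSum.hasDerivAt k hfw.ne')
    (div_pos (weightedPowSum_pos hk hfw) hfw).ne' hFf

theorem mul_deriv_div_eq_of_powSum_eq (hk : 1 ≤ k) (hc : 0 < c) (hw : 0 < w)
    (hf : ∀ u, 0 < u → 0 < f u ∧ powSum k (f u) = c / u) :
    k * deriv f w / f w = -1 / w / (weightedPowSum k (f w) / (k * powSum k (f w))) := by
  obtain ⟨hfw, hSw⟩ := hf w hw
  have hT := weightedPowSum_pos hk hfw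
  rw [(hasDerivAt_of_powSum_eq hk hc hw hf).deriv, hSw]
  field_simp

end Solution

theorem tendsto_one_sub_inv_log {ι : Type*} {l : Filter ι} {a : ι → ℝ}
    (ha : Tendsto a l atTop) : Tendsto (fun i => 1 - (Real.log (a i))⁻¹) l (𝓝 1) := by
  simpa using tendsto_const_nhds.sub (Real.tendsto_log_atTop.comp ha).inv_tendsto_atTop

theorem tendsto_div_mul_atTop {a : ℕ → ℝ} {w : ℝ} (hw : 0 < w) (ha : ∀ n, 0 < a n)
    (h : Tendsto (fun n : ℕ => a n / n) atTop (𝓝 0)) :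
    Tendsto (fun n : ℕ => (n : ℝ) / (w * a n)) atTop atTop := by
  have hpos : ∀ᶠ n : ℕ in atTop, a n / n ∈ Set.Ioi 0 :=
    (eventually_gt_atTop 0).mono fun n hn => div_pos (ha n) (Nat.cast_pos.mpr hn)
  refine ((tendsto_inv_nhdsGT_zero.comp (tendsto_nhdsWithin_iff.mpr ⟨h, hpos⟩)).atTop_div_const
    hw).congr fun n => ?_
  simp only [Function.comp_apply, inv_div, div_div, mul_comm]

theorem stmt_11_general (α : ℕ → ℕ) (hα : ∀ n, 1 ≤ α n)
    (δ : ℝ) (hδ1 : δ < 1)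
    (hbig : ∀ᶠ n : ℕ in atTop, ∀ w ∈ Set.Ioo (1 - δ) (1 + δ),
      1 < (n : ℝ) / (w * α n))
    (hαn : Tendsto (fun n : ℕ => (α n : ℝ) / n) atTop (nhds 0))
    (x : ℕ → ℝ → ℝ)
    (hx : ∀ n, 1 ≤ n → ∀ w : ℝ, 0 < w →
      0 < x n w ∧ ∑ j ∈ Finset.Icc 1 (α n), x n w ^ j = (n : ℝ) / w) :
    ∀ w ∈ Set.Ioo (1 - δ) (1 + δ),
      Tendsto (fun n : ℕ => (α n : ℝ) * deriv (x n) w / x n w) atTop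
        (nhds (-1 / w)) := by
  intro w hw
  have hw0 : 0 < w := by linarith [hw.1]
  set r : ℕ → ℝ := fun n => weightedPowSum (α n) (x n w) / (α n * powSum (α n) (x n w))
  have hbounds : ∀ᶠ n : ℕ in atTop, 1 - (Real.log ((n : ℝ) / (w * α n)))⁻¹ ≤ r n ∧ r n ≤ 1 ∧
      (α n : ℝ) * deriv (x n) w / x n w = -1 / w / r n := by
    filter_upwards [hbig, eventually_ge_atTop 1] with n hbig hn
    obtain ⟨hxpos, hxsum⟩ := hx n hn w hw0
    have hS : powSum (α n) (x n w) = n / w := hxsum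
    have hα0 : (0 : ℝ) < α n := Nat.cast_pos.mpr (hα n)
    have hx1 : 1 < x n w := powSum.one_lt_of_natCast_lt hxpos.le (by
      have h := hbig w hw
      rw [lt_div_iff₀ (mul_pos hw0 hα0)] at h
      rw [hS, lt_div_iff₀ hw0]
      linarith)
    refine ⟨?_, ?_, mul_deriv_div_eq_of_powSum_eq (hα n) (by positivity) hw0 (hx n hn)⟩
    · calc _ = 1 - (Real.log (powSum (α n) (x n w) / α n))⁻¹ := by rw [hS, div_div]
        _ ≤ r n := one_sub_inv_log_le_weightedPowSum_div (hα n) hx1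
    · exact (div_le_one (mul_pos hα0 (powSum.pos (hα n) hxpos))).mpr (weightedPowSum_le hxpos.le)
  have hr : Tendsto r atTop (𝓝 1) :=
    tendsto_of_tendsto_of_tendsto_of_le_of_le'
      (tendsto_one_sub_inv_log (tendsto_div_mul_atTop hw0 (fun n => Nat.cast_pos.mpr (hα n)) hαn))
      tendsto_const_nhds (hbounds.mono fun n h => h.1) (hbounds.mono fun n h => h.2.1)
  simpa using (tendsto_const_nhds.div hr one_ne_zero).congr' (hbounds.mono fun n h => h.2.2.symm)

open Filter in
/-- Lemma on the logarithmic derivative of the saddle point.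
Suppose `n/(w α(n)) > 1` for all large `n` and all `w ∈ (1−δ, 1+δ)`, and
`α(n)/n → 0`, where `x n w = x_{n,α}(w)` is the positive solution of
`∑_{j=1}^{α(n)} x^j = n/w`.  Then for every `w ∈ (1−δ, 1+δ)`,
`α(n)·x'_{n,α}(w)/x_{n,α}(w) → −1/w`. -/
theorem stmt_11 (α : ℕ → ℕ) (hα : ∀ n, 1 ≤ α n)
    (δ : ℝ) (hδ0 : 0 < δ) (hδ1 : δ < 1)
    (hbig : ∀ᶠ n : ℕ in atTop, ∀ w ∈ Set.Ioo (1 - δ) (1 + δ),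
      1 < (n : ℝ) / (w * α n))
    (hαn : Tendsto (fun n : ℕ => (α n : ℝ) / n) atTop (nhds 0))
    (x : ℕ → ℝ → ℝ)
    (hx : ∀ n, 1 ≤ n → ∀ w : ℝ, 0 < w →
      0 < x n w ∧ ∑ j ∈ Finset.Icc 1 (α n), x n w ^ j = (n : ℝ) / w) :
    ∀ w ∈ Set.Ioo (1 - δ) (1 + δ),
      Tendsto (fun n : ℕ => (α n : ℝ) * deriv (x n) w / x n w) atTop
        (nhds (-1 / w)) :=
  stmt_11_general α hα δ hδ1 hbig hαn x hx
end

section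
/- Let α : ℕ → ℕ with α(n) ≥ 1 and let 0 < δ < 1 be such that n/(w·α(n)) > 1 for all sufficiently large n and all w ∈ (1−δ, 1+δ), and assume α(n)/n → 0. Then there exist a constant C and N ∈ ℕ such that for all n ≥ N and all w ∈ (1−δ, 1+δ): |x''_{n,α}(w)/x_{n,α}(w)| ≤ C/α(n), |x'''_{n,α}(w)/x_{n,α}(w)| ≤ C/α(n), and |x⁗_{n,α}(w)/x_{n,α}(w)| ≤ C/α(n), where x''_{n,α}, x'''_{n,α}, x⁗_{n,α} denote the second, third and fourth derivatives of w ↦ x_{n,α}(w). -/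
/-!
Put `m = α n`, `c = n` and `L = log x`, so that the defining equation reads
`∑_{j=1}^m exp (j L(w)) = c / w`. Differentiating it `k ≤ 4` times by Faà di Bruno's formula
gives a triangular system for `L', …, L⁗` whose coefficients are the exponential moments
`T_r = ∑ j^r exp (j L)`. In the scaled unknowns `a_r = m w^r L^{(r)}(w)` and coefficients
`τ_r = T_r / (T_0 m^r)` the system becomes `faaDiBruno k τ a = (-1)^k k!`, free of `m`, `c`, `w`.
As `0 < τ_r ≤ 1`, and `τ_1 ≥ 1/2` by Chebyshev's sum inequality once `x ≥ 1` (which is what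
`n / (w α(n)) > 1` guarantees), the `a_r` are bounded by absolute constants. Since
`x^{(k)} / x` is the Faà di Bruno polynomial of `exp` at `L`, it is `O(1 / (m w^k))`.
-/

open Filter Set Topology Real
open scoped ContDiff Nat

namespace SaddlePoint

/-- Faà di Bruno's formula up to order four: the `k`-th derivative of `G ∘ L` is
`faaDiBruno k (fun r => G^{(r)} (L w)) (fun r => L^{(r)} w)`. The value `0` for `k > 4` is junk. -/
def faaDiBruno : ℕ → (ℕ → ℝ) → (ℕ → ℝ) → ℝ
  | 0, g, _ => g 0
  | 1, g, a => g 1 * a 1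
  | 2, g, a => g 2 * a 1 ^ 2 + g 1 * a 2
  | 3, g, a => g 3 * a 1 ^ 3 + 3 * g 2 * a 1 * a 2 + g 1 * a 3
  | 4, g, a => g 4 * a 1 ^ 4 + 6 * g 3 * a 1 ^ 2 * a 2 + 3 * g 2 * a 2 ^ 2
      + 4 * g 2 * a 1 * a 3 + g 1 * a 4
  | _, _, _ => 0

theorem hasDerivAt_faaDiBruno {g a : ℕ → ℝ → ℝ} {v : ℝ}
    (hg : ∀ r, HasDerivAt (g r) (g (r + 1) v * a 1 v) v)
    (ha : ∀ r, HasDerivAt (a r) (a (r + 1) v) v) {k : ℕ} (hk : k < 4) :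
    HasDerivAt (fun u => faaDiBruno k (g · u) (a · u))
      (faaDiBruno (k + 1) (g · v) (a · v)) v := by
  interval_cases k <;> simp only [faaDiBruno]
  · exact hg 0
  · exact ((hg 1).fun_mul (ha 1)).congr_deriv (by ring)
  · exact (((hg 2).fun_mul ((ha 1).fun_pow 2)).fun_add ((hg 1).fun_mul (ha 2))).congr_deriv
      (by ring)
  · exact (((((hg 3).fun_mul ((ha 1).fun_pow 3)).fun_add
      ((((hg 2).const_mul 3).fun_mul (ha 1)).fun_mul (ha 2))).fun_add
      ((hg 1).fun_mul (ha 3)))).congr_deriv (by ring)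

theorem faaDiBruno_eq_scale {k : ℕ} {g a : ℕ → ℝ} {s t u : ℝ} (hs : s ≠ 0) (ht : t ≠ 0)
    (hu : u ≠ 0) :
    faaDiBruno k g a =
      s / u ^ k * faaDiBruno k (fun r => g r / (s * t ^ r)) (fun r => t * u ^ r * a r) := by
  rcases k with _ | _ | _ | _ | _ | k <;>
    simp only [faaDiBruno, zero_add, Nat.reduceAdd, mul_zero] <;> field_simp

theorem abs_faaDiBruno_le {k : ℕ} (hk : 1 ≤ k) {g a A : ℕ → ℝ} {B : ℝ}
    (hg : ∀ r, 1 ≤ r → |g r| ≤ B) (ha : ∀ r, 1 ≤ r → r ≤ 4 → |a r| ≤ A r) :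
    |faaDiBruno k g a| ≤ faaDiBruno k (fun _ => B) A := by
  have hA1 : 0 ≤ A 1 := (abs_nonneg _).trans (ha 1 le_rfl (by norm_num))
  have hB : 0 ≤ B := (abs_nonneg _).trans (hg 1 le_rfl)
  rcases k with _ | _ | _ | _ | _ | k
  · omega
  all_goals simp only [faaDiBruno, zero_add, Nat.reduceAdd, abs_zero, le_refl]
  all_goals repeat refine (abs_add_le _ _).trans (add_le_add ?_ ?_)
  all_goals
    simp only [abs_mul, abs_pow, Nat.abs_ofNat]
    gcongr <;> first
      | exact ha _ (by norm_num) (by norm_num) | exact hg _ (by norm_num)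

theorem iteratedDeriv_eqOn_of_hasDerivAt {f : ℝ → ℝ} {F : ℕ → ℝ → ℝ} {U : Set ℝ}
    (hU : IsOpen U) {N : ℕ} (h0 : EqOn f (F 0) U)
    (hF : ∀ k < N, ∀ v ∈ U, HasDerivAt (F k) (F (k + 1) v) v) {k : ℕ} (hk : k ≤ N) :
    EqOn (iteratedDeriv k f) (F k) U := by
  induction k with
  | zero => simpa using h0
  | succ k ih =>
    intro v hv
    rw [iteratedDeriv_succ]
    have hEq : iteratedDeriv k f =ᶠ[𝓝 v] F k :=
      eventually_of_mem (hU.mem_nhds hv) (ih (by omega))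
    rw [hEq.deriv_eq]
    exact (hF k (by omega) v hv).deriv

theorem hasDerivAt_iteratedDeriv_of_contDiffOn {L : ℝ → ℝ} {U : Set ℝ} (hU : IsOpen U)
    (hL : ContDiffOn ℝ ∞ L U) (r : ℕ) {v : ℝ} (hv : v ∈ U) :
    HasDerivAt (iteratedDeriv r L) (iteratedDeriv (r + 1) L v) v := by
  have hd : DifferentiableAt ℝ (iteratedDerivWithin r L U) v :=
    (hL.differentiableOn_iteratedDerivWithin (by exact_mod_cast WithTop.coe_lt_top _)
      hU.uniqueDiffOn v hv).differentiableAt (hU.mem_nhds hv)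
  have hEq : iteratedDerivWithin r L U =ᶠ[𝓝 v] iteratedDeriv r L :=
    eventually_of_mem (hU.mem_nhds hv) (iteratedDerivWithin_of_isOpen hU)
  rw [iteratedDeriv_succ]
  exact (hd.congr_of_eventuallyEq hEq.symm).hasDerivAt

theorem iteratedDeriv_eq_faaDiBruno {G : ℕ → ℝ → ℝ} (hG : ∀ r y, HasDerivAt (G r) (G (r + 1) y) y)
    {L f : ℝ → ℝ} {U : Set ℝ} (hU : IsOpen U) (hL : ContDiffOn ℝ ∞ L U)
    (hf : EqOn f (fun v => G 0 (L v)) U) {k : ℕ} (hk : k ≤ 4) {w : ℝ} (hw : w ∈ U) :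
    iteratedDeriv k f w = faaDiBruno k (G · (L w)) (iteratedDeriv · L w) := by
  refine iteratedDeriv_eqOn_of_hasDerivAt (F := fun k v => faaDiBruno k (G · (L v))
    (iteratedDeriv · L v)) hU hf (fun k hk v hv => ?_) hk hw
  have hL' := hasDerivAt_iteratedDeriv_of_contDiffOn hU hL 0 hv
  rw [iteratedDeriv_zero] at hL'
  exact hasDerivAt_faaDiBruno (fun r => (hG r (L v)).comp v hL')
    (fun r => hasDerivAt_iteratedDeriv_of_contDiffOn hU hL r hv) hk

noncomputable def expMoment (m k : ℕ) (y : ℝ) : ℝ := ∑ j ∈ Finset.Icc 1 m, (j : ℝ) ^ k * exp (j * y)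

theorem hasDerivAt_expMoment (m k : ℕ) (y : ℝ) :
    HasDerivAt (expMoment m k) (expMoment m (k + 1) y) y := by
  refine HasDerivAt.fun_sum fun j _ => ?_
  exact ((((hasDerivAt_id y).const_mul (j : ℝ)).exp).const_mul _).congr_deriv
    (by simp only [id_eq, mul_one]; ring)

theorem contDiff_expMoment (m k : ℕ) : ContDiff ℝ ∞ (expMoment m k) := by
  unfold expMoment; fun_prop

theorem expMoment_pos {m : ℕ} (hm : 1 ≤ m) (k : ℕ) (y : ℝ) : 0 < expMoment m k y :=
  Finset.sum_pos (fun j hj => by have := (Finset.mem_Icc.1 hj).1; positivity)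
    ⟨1, Finset.mem_Icc.2 ⟨le_rfl, hm⟩⟩

theorem expMoment_le (m k : ℕ) (y : ℝ) : expMoment m k y ≤ m ^ k * expMoment m 0 y := by
  simp only [expMoment, Finset.mul_sum, pow_zero, one_mul]
  gcongr with j hj
  exact_mod_cast (Finset.mem_Icc.1 hj).2

theorem strictMono_expMoment_zero {m : ℕ} (hm : 1 ≤ m) : StrictMono (expMoment m 0) :=
  strictMono_of_deriv_pos fun y => by
    rw [(hasDerivAt_expMoment m 0 y).deriv]; exact expMoment_pos hm 1 y

theorem sum_Icc_one_natCast (m : ℕ) : ∑ j ∈ Finset.Icc 1 m, (j : ℝ) = m * (m + 1) / 2 := by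
  induction m with
  | zero => simp
  | succ k ih =>
    rw [Finset.sum_Icc_succ_top (by omega), ih]
    push_cast
    ring

theorem expMoment_zero_le_expMoment_one (m : ℕ) {y : ℝ} (hy : 0 ≤ y) :
    (m + 1) * expMoment m 0 y ≤ 2 * expMoment m 1 y := by
  have hmono : MonovaryOn (fun j : ℕ => (j : ℝ)) (fun j : ℕ => exp (j * y)) (Finset.Icc 1 m) :=
    fun i _ j _ hij => by
      by_contra! h
      exact (exp_le_exp.2 (by gcongr)).not_gt hij
  have := hmono.sum_mul_sum_le_card_mul_sum
  rw [sum_Icc_one_natCast, Nat.card_Icc, Nat.add_sub_cancel] at this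
  rcases Nat.eq_zero_or_pos m with rfl | hm
  · simp [expMoment]
  simp only [expMoment, pow_zero, one_mul, pow_one]
  have hm' : (0 : ℝ) < m := by exact_mod_cast hm
  nlinarith

theorem contDiffAt_of_comp_eq {n : WithTop ℕ∞} (hn : n ≠ 0) {G h f : ℝ → ℝ} {w₀ G' : ℝ}
    (hG : ContDiffAt ℝ n G (f w₀)) (hG' : HasDerivAt G G' (f w₀)) (hG'0 : G' ≠ 0)
    (hinj : Function.Injective G) (hh : ContDiffAt ℝ n h w₀)
    (hfh : ∀ᶠ w in 𝓝 w₀, G (f w) = h w) : ContDiffAt ℝ n f w₀ := by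
  have hF := hG'.hasFDerivAt_equiv hG'0
  set g := hG.localInverse hF hn
  have hgh : ContDiffAt ℝ n (g ∘ h) w₀ := by
    refine ContDiffAt.comp w₀ ?_ hh
    rw [← hfh.self_of_nhds]
    exact hG.to_localInverse hF hn
  refine hgh.congr_of_eventuallyEq ?_
  have hright : ∀ᶠ y in 𝓝 (G (f w₀)), G (g y) = y :=
    (hG.hasStrictFDerivAt' hF hn).eventually_right_inverse
  rw [hfh.self_of_nhds] at hright
  filter_upwards [hfh, hh.continuousAt.eventually hright] with w hw hgw
  exact hinj (hw.trans hgw.symm)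

def scaledLogDerivBound : ℕ → ℝ
  | 1 => 2
  | 2 => 12
  | 3 => 172
  | _ => 4272

/-- Each equation is linear in its top unknown `a k`, with coefficient `τ 1 ≥ 1/2`. -/
theorem abs_le_of_faaDiBruno_eq {τ a : ℕ → ℝ} (hτ1 : 1 / 2 ≤ τ 1) (hτ : ∀ r, |τ r| ≤ 1)
    (h : ∀ k, 1 ≤ k → k ≤ 4 → faaDiBruno k τ a = (-1) ^ k * k !) (r : ℕ) (hr1 : 1 ≤ r)
    (hr : r ≤ 4) : |a r| ≤ scaledLogDerivBound r := by
  have solve (X R c b : ℝ) (hX : R + τ 1 * X = c) (hR : |R| ≤ b) : |X| ≤ 2 * (|c| + b) := by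
    have hτX : |X| ≤ 2 * |τ 1 * X| := by
      rw [abs_mul, abs_of_pos (by linarith : 0 < τ 1)]
      nlinarith [abs_nonneg X]
    have := abs_sub c R
    rw [← eq_sub_of_add_eq' hX] at this
    linarith
  have e1 := h 1 le_rfl (by norm_num)
  have e2 := h 2 (by norm_num) (by norm_num)
  have e3 := h 3 (by norm_num) (by norm_num)
  have e4 := h 4 (by norm_num) le_rfl
  simp only [faaDiBruno] at e1 e2 e3 e4
  have b1 : |a 1| ≤ 2 := (solve (a 1) 0 _ 0 (by rw [zero_add, e1]) (by simp)).trans (by norm_num)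
  have b2 : |a 2| ≤ 12 := by
    refine (solve (a 2) _ _ (1 * 2 ^ 2) e2 ?_).trans (by norm_num)
    rw [abs_mul, abs_pow]; gcongr; exact hτ 2
  have b3 : |a 3| ≤ 172 := by
    refine (solve (a 3) _ _ (1 * 2 ^ 3 + 3 * 1 * 2 * 12) e3 ?_).trans (by norm_num)
    refine (abs_add_le _ _).trans ?_
    simp only [abs_mul, abs_pow, Nat.abs_ofNat]
    gcongr <;> exact hτ _
  have b4 : |a 4| ≤ 4272 := by
    refine (solve (a 4) _ _
      (1 * 2 ^ 4 + 6 * 1 * 2 ^ 2 * 12 + 3 * 1 * 12 ^ 2 + 4 * 1 * 2 * 172) e4 ?_).trans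
      (by norm_num)
    repeat refine (abs_add_le _ _).trans (add_le_add ?_ ?_)
    all_goals simp only [abs_mul, abs_pow, Nat.abs_ofNat]; gcongr; exact hτ _
  interval_cases r <;> assumption

def IsSaddlePoint (m : ℕ) (c : ℝ) (f : ℝ → ℝ) : Prop :=
  ∀ w, 0 < w → 0 < f w ∧ ∑ j ∈ Finset.Icc 1 m, f w ^ j = c / w

variable {m : ℕ} {c : ℝ} {f : ℝ → ℝ}

theorem IsSaddlePoint.expMoment_log (hf : IsSaddlePoint m c f) {w : ℝ} (hw : 0 < w) :
    expMoment m 0 (log (f w)) = c / w := by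
  rw [← (hf w hw).2]
  refine Finset.sum_congr rfl fun j _ => ?_
  rw [pow_zero, one_mul, exp_nat_mul, exp_log (hf w hw).1]

theorem IsSaddlePoint.contDiffOn_log (hm : 1 ≤ m) (hf : IsSaddlePoint m c f) :
    ContDiffOn ℝ ∞ (fun w => log (f w)) (Ioi 0) := fun w (hw : 0 < w) =>
  (contDiffAt_of_comp_eq (by simp) (contDiff_expMoment m 0).contDiffAt
    (hasDerivAt_expMoment m 0 _) (expMoment_pos hm 1 _).ne' (strictMono_expMoment_zero hm).injective
    (contDiffAt_const.div contDiffAt_id hw.ne')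
    (eventually_of_mem (Ioi_mem_nhds hw) fun _ hv => hf.expMoment_log hv)).contDiffWithinAt

theorem IsSaddlePoint.faaDiBruno_eq (hm : 1 ≤ m) (hf : IsSaddlePoint m c f) {w : ℝ} (hw : 0 < w)
    {k : ℕ} (hk : k ≤ 4) :
    faaDiBruno k (fun r => expMoment m r (log (f w)) / (expMoment m 0 (log (f w)) * m ^ r))
      (fun r => m * w ^ r * iteratedDeriv r (fun v => log (f v)) w) = (-1) ^ k * k ! := by
  set T0 := expMoment m 0 (log (f w))
  have hT0 : T0 = c / w := hf.expMoment_log hw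
  have hT0pos : 0 < T0 := expMoment_pos hm 0 _
  have hexpand := iteratedDeriv_eq_faaDiBruno (hasDerivAt_expMoment m) isOpen_Ioi
    (hf.contDiffOn_log hm) (f := fun v => c / v) (fun v hv => (hf.expMoment_log hv).symm) hk hw
  have hinv : iteratedDeriv k (fun v => c / v) w = c * ((-1) ^ k * k ! * w ^ (-1 - k : ℤ)) := by
    simp only [div_eq_mul_inv]
    rw [iteratedDeriv_const_mul_field, iteratedDeriv_eq_iterate, iter_deriv_inv]
  have hzpow : w ^ (-1 - k : ℤ) = (w * w ^ k)⁻¹ := by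
    rw [sub_eq_add_neg, zpow_add₀ hw.ne', zpow_neg_one, zpow_neg, zpow_natCast, mul_inv]
  have hc : c = T0 * w := by rw [hT0]; field_simp
  rw [hinv, hzpow, faaDiBruno_eq_scale hT0pos.ne' (by positivity : (m : ℝ) ≠ 0) hw.ne',
    hc] at hexpand
  apply mul_left_cancel₀ (by positivity : T0 / w ^ k ≠ 0)
  rw [← hexpand]
  field_simp

theorem IsSaddlePoint.one_lt_of_one_lt_div (hf : IsSaddlePoint m c f) {w : ℝ} (hw : 0 < w)
    (h : 1 < c / (w * m)) : 1 < f w := by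
  by_contra! hle
  have hsum : c / w ≤ m := by
    rw [← (hf w hw).2]
    calc ∑ j ∈ Finset.Icc 1 m, f w ^ j ≤ ∑ _j ∈ Finset.Icc 1 m, (1 : ℝ) :=
          Finset.sum_le_sum fun j _ => pow_le_one₀ (hf w hw).1.le hle
      _ = m := by simp
  rw [← div_div] at h
  exact h.not_ge (div_le_one_of_le₀ hsum m.cast_nonneg)

theorem IsSaddlePoint.abs_scaled_iteratedDeriv_log_le (hm : 1 ≤ m) (hf : IsSaddlePoint m c f)
    {w : ℝ} (hw : 0 < w) (hf1 : 1 ≤ f w) (r : ℕ) (hr1 : 1 ≤ r) (hr : r ≤ 4) :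
    |m * w ^ r * iteratedDeriv r (fun v => log (f v)) w| ≤ scaledLogDerivBound r := by
  have hT0 := expMoment_pos hm 0 (log (f w))
  have hm0 : (0 : ℝ) < m := by exact_mod_cast hm
  refine abs_le_of_faaDiBruno_eq ?_ (fun r => ?_) (fun k _ hk => hf.faaDiBruno_eq hm hw hk) r hr1 hr
  · rw [pow_one, le_div_iff₀ (by positivity)]
    linarith [expMoment_zero_le_expMoment_one m (log_nonneg hf1)]
  · have hTr := expMoment_pos hm r (log (f w))
    rw [abs_of_pos (by positivity), div_le_one (by positivity), mul_comm]
    exact expMoment_le m r _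

theorem faaDiBruno_scaledLogDerivBound_le (k : ℕ) {B : ℝ} (hB : 0 ≤ B) :
    faaDiBruno k (fun _ => B) scaledLogDerivBound ≤ 6384 * B := by
  rcases k with _ | _ | _ | _ | _ | k <;>
    simp only [faaDiBruno, scaledLogDerivBound, zero_add, Nat.reduceAdd] <;> linarith

theorem IsSaddlePoint.abs_iteratedDeriv_div_le (hm : 1 ≤ m) (hf : IsSaddlePoint m c f) {w : ℝ}
    (hw : 0 < w) (hf1 : 1 ≤ f w) {k : ℕ} (hk1 : 1 ≤ k) (hk : k ≤ 4) :
    |iteratedDeriv k f w / f w| ≤ 6384 / (m * w ^ k) := by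
  have hf0 := (hf w hw).1
  have hm0 : (0 : ℝ) < m := by exact_mod_cast hm
  have hexpand := iteratedDeriv_eq_faaDiBruno (G := fun _ => exp) (fun _ y => hasDerivAt_exp y)
    isOpen_Ioi (hf.contDiffOn_log hm) (fun v hv => (exp_log (hf v hv).1).symm) hk hw
  rw [exp_log hf0, faaDiBruno_eq_scale hf0.ne' hm0.ne' hw.ne'] at hexpand
  have hg r (hr : 1 ≤ r) : |f w / (f w * m ^ r)| ≤ 1 / m := by
    rw [div_mul_cancel_left₀ hf0.ne', abs_inv, abs_of_pos (by positivity), one_div]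
    exact inv_anti₀ hm0 (le_self_pow₀ (by exact_mod_cast hm) (by omega))
  calc |iteratedDeriv k f w / f w|
      = |faaDiBruno k (fun r => f w / (f w * m ^ r))
          (fun r => m * w ^ r * iteratedDeriv r (fun v => log (f v)) w)| / w ^ k := by
        rw [hexpand, abs_div, abs_mul, abs_div, abs_of_pos hf0, abs_of_pos (pow_pos hw k)]
        field_simp
    _ ≤ faaDiBruno k (fun _ => 1 / m) scaledLogDerivBound / w ^ k := by
        gcongr
        exact abs_faaDiBruno_le hk1 hg (hf.abs_scaled_iteratedDeriv_log_le hm hw hf1)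
    _ ≤ 6384 * (1 / m) / w ^ k := by
        gcongr
        exact faaDiBruno_scaledLogDerivBound_le k (by positivity)
    _ = 6384 / (m * w ^ k) := by field_simp

end SaddlePoint

open Filter in
theorem stmt_12_general (α : ℕ → ℕ) (hα : ∀ n, 1 ≤ α n)
    (δ : ℝ) (hδ0 : 0 < δ) (hδ1 : δ < 1)
    (hbig : ∀ᶠ n : ℕ in atTop, ∀ w ∈ Set.Ioo (1 - δ) (1 + δ),
      1 < (n : ℝ) / (w * α n))
    (x : ℕ → ℝ → ℝ)
    (hx : ∀ n, 1 ≤ n → ∀ w : ℝ, 0 < w →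
      0 < x n w ∧ ∑ j ∈ Finset.Icc 1 (α n), x n w ^ j = (n : ℝ) / w) :
    ∃ C : ℝ, ∃ N : ℕ, ∀ n ≥ N, ∀ w ∈ Set.Ioo (1 - δ) (1 + δ),
      |iteratedDeriv 2 (x n) w / x n w| ≤ C / α n ∧
      |iteratedDeriv 3 (x n) w / x n w| ≤ C / α n ∧
      |iteratedDeriv 4 (x n) w / x n w| ≤ C / α n := by
  obtain ⟨N, hN⟩ := eventually_atTop.1 hbig
  have hδ' : 0 < 1 - δ := by linarith
  refine ⟨6384 / (1 - δ) ^ 4, max N 1, fun n hn w hw => ?_⟩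
  have hw0 : 0 < w := hδ'.trans hw.1
  have hf : SaddlePoint.IsSaddlePoint (α n) n (x n) := hx n (le_of_max_le_right hn)
  have hf1 : 1 ≤ x n w := (hf.one_lt_of_one_lt_div hw0 (hN n (le_of_max_le_left hn) w hw)).le
  have hm : (0 : ℝ) < α n := by exact_mod_cast hα n
  have bound (k : ℕ) (hk1 : 1 ≤ k) (hk : k ≤ 4) :
      |iteratedDeriv k (x n) w / x n w| ≤ 6384 / (1 - δ) ^ 4 / α n := by
    refine (hf.abs_iteratedDeriv_div_le (hα n) hw0 hf1 hk1 hk).trans ?_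
    rw [div_div, mul_comm]
    gcongr
    calc (1 - δ) ^ 4 ≤ (1 - δ) ^ k := pow_le_pow_of_le_one hδ'.le (by linarith) hk
      _ ≤ w ^ k := by gcongr; exact hw.1.le
  exact ⟨bound 2 (by norm_num) (by norm_num), bound 3 (by norm_num) (by norm_num),
    bound 4 (by norm_num) le_rfl⟩

open Filter in
/-- uniform bounds for higher derivatives of the saddle point.
Suppose `n/(w α(n)) > 1` for all large `n` and all `w ∈ (1−δ, 1+δ)`, and
`α(n)/n → 0`, where `x n w = x_{n,α}(w)` is the positive solution of
`∑_{j=1}^{α(n)} x^j = n/w`.  Then there are `C` and `N` such that for all `n ≥ N`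
and all `w ∈ (1−δ, 1+δ)`, the second, third and fourth derivatives of
`w ↦ x_{n,α}(w)` divided by `x_{n,α}(w)` are bounded by `C/α(n)` in absolute
value. -/
theorem stmt_12 (α : ℕ → ℕ) (hα : ∀ n, 1 ≤ α n)
    (δ : ℝ) (hδ0 : 0 < δ) (hδ1 : δ < 1)
    (hbig : ∀ᶠ n : ℕ in atTop, ∀ w ∈ Set.Ioo (1 - δ) (1 + δ),
      1 < (n : ℝ) / (w * α n))
    (hαn : Tendsto (fun n : ℕ => (α n : ℝ) / n) atTop (nhds 0))
    (x : ℕ → ℝ → ℝ)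
    (hx : ∀ n, 1 ≤ n → ∀ w : ℝ, 0 < w →
      0 < x n w ∧ ∑ j ∈ Finset.Icc 1 (α n), x n w ^ j = (n : ℝ) / w) :
    ∃ C : ℝ, ∃ N : ℕ, ∀ n ≥ N, ∀ w ∈ Set.Ioo (1 - δ) (1 + δ),
      |iteratedDeriv 2 (x n) w / x n w| ≤ C / α n ∧
      |iteratedDeriv 3 (x n) w / x n w| ≤ C / α n ∧
      |iteratedDeriv 4 (x n) w / x n w| ≤ C / α n :=
  stmt_12_general α hα δ hδ0 hδ1 hbig x hx
end

section
/- Let α : ℕ → ℕ with α(n) ≥ 1 and let 0 < δ < 1 be such that n/(w·α(n)) > 1 for all sufficiently large n and all w ∈ (1−δ, 1+δ), and assume α(n)/n → 0. Then there exist a constant C and N ∈ ℕ such that for all n ≥ N and all w ∈ (1−δ, 1+δ): (i) |h̃'_{n,α}(w) − ∑_{j=1}^{α(n)} x_{n,α}(w)^j/j| ≤ C; (ii) |h̃''_{n,α}(w) − n·x'_{n,α}(w)/(w·x_{n,α}(w))| ≤ C; (iii) |h̃'''_{n,α}(w) − ( n·x''_{n,α}(w)/(w·x_{n,α}(w)) −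 n·x'_{n,α}(w)/(w²·x_{n,α}(w)) − (n/w)·(x'_{n,α}(w)/x_{n,α}(w))² )| ≤ C. Here h̃', h̃'', h̃''' denote the first three derivatives of h̃_{n,α} and x', x'' the first two derivatives of w ↦ x_{n,α}(w). -/
/-!
Write `Sₖ = ∑_{j ≤ α(n)} jᵏ xʲ`. Differentiating `S₀(x(w)) = n / w` gives
`x' / x = -S₀ / (w S₁)` and `(Sₖ ∘ x)' = -S₀ Sₖ₊₁ / (w S₁)`. The part `w ∑ xʲ / j - n log x`
of `h̃` differentiates to `∑ xʲ / j` exactly, whose derivatives are the main terms of (ii) and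
(iii); so the three errors are `-1/2` times the first three derivatives of `log (2π w S₁)`.
These are powers of `1 / w` times polynomials in the ratios `ρₖ = S₀ᵏ Sₖ₊₁ / S₁ᵏ⁺¹`. The
hypothesis `n / (w α(n)) > 1` forces `x ≥ 1`; then Chebyshev's sum inequality gives
`α(n) S₀ ≤ 2 S₁`, and with `Sₖ₊₁ ≤ α(n)ᵏ S₁` this bounds `0 ≤ ρₖ ≤ 2ᵏ` uniformly in `n`.
-/

open Finset Filter Set Topology

noncomputable def powerMoment (m k : ℕ) (y : ℝ) : ℝ :=
  ∑ j ∈ Icc 1 m, (j : ℝ) ^ k * y ^ j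

noncomputable def momentRatio (m k : ℕ) (y : ℝ) : ℝ :=
  powerMoment m 0 y ^ k * powerMoment m (k + 1) y / powerMoment m 1 y ^ (k + 1)

noncomputable def negLogPartialSum (m : ℕ) (y : ℝ) : ℝ :=
  ∑ j ∈ Icc 1 m, y ^ j / j

section PowerMoment

variable {m k : ℕ} {y : ℝ}

@[simp] lemma powerMoment_zero_eq : powerMoment m 0 y = ∑ j ∈ Icc 1 m, y ^ j := by
  simp [powerMoment]

@[simp] lemma powerMoment_one_eq : powerMoment m 1 y = ∑ j ∈ Icc 1 m, (j : ℝ) * y ^ j := by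
  simp [powerMoment]

lemma powerMoment_pos (hm : 1 ≤ m) (hy : 0 < y) : 0 < powerMoment m k y :=
  sum_pos (fun j hj => by have : 0 < j := (mem_Icc.1 hj).1; positivity) (nonempty_Icc.2 hm)

lemma strictMonoOn_powerMoment (hm : 1 ≤ m) : StrictMonoOn (powerMoment m k) (Ici 0) :=
  fun a ha b _ hab => sum_lt_sum_of_nonempty (nonempty_Icc.2 hm) fun j hj => by
    have : 0 < j := (mem_Icc.1 hj).1
    gcongr

lemma powerMoment_succ_le (hy : 0 ≤ y) : powerMoment m (k + 1) y ≤ m * powerMoment m k y := by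
  rw [powerMoment, powerMoment, mul_sum]
  refine sum_le_sum fun j hj => ?_
  have hjm : (j : ℝ) ≤ m := by exact_mod_cast (mem_Icc.1 hj).2
  rw [pow_succ, mul_comm _ (j : ℝ), mul_assoc]
  gcongr

lemma powerMoment_succ_le_pow_mul (hy : 0 ≤ y) :
    powerMoment m (k + 1) y ≤ (m : ℝ) ^ k * powerMoment m 1 y := by
  induction k with
  | zero => simp
  | succ k ih =>
    calc powerMoment m (k + 2) y ≤ m * powerMoment m (k + 1) y := powerMoment_succ_le hy
      _ ≤ m * ((m : ℝ) ^ k * powerMoment m 1 y) := by gcongr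
      _ = (m : ℝ) ^ (k + 1) * powerMoment m 1 y := by ring

lemma sum_Icc_one_cast_mul_two (m : ℕ) : (∑ j ∈ Icc 1 m, (j : ℝ)) * 2 = m * (m + 1) := by
  induction m with
  | zero => simp
  | succ m ih => rw [sum_Icc_succ_top (by omega), add_mul, ih]; push_cast; ring

lemma succ_mul_powerMoment_zero_le (hy : 1 ≤ y) :
    (m + 1) * powerMoment m 0 y ≤ 2 * powerMoment m 1 y := by
  have hmono : MonovaryOn (fun j : ℕ => (j : ℝ)) (fun j => y ^ j) (Finset.Icc 1 m : Set ℕ) :=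
    fun i _ j _ hij => by
      by_contra! hji
      exact hij.not_ge (pow_le_pow_right₀ hy (by exact_mod_cast hji.le))
  have hcheb := hmono.sum_mul_sum_le_card_mul_sum
  simp only [Nat.card_Icc, add_tsub_cancel_right] at hcheb
  rw [powerMoment_zero_eq, powerMoment_one_eq]
  have hsum := sum_Icc_one_cast_mul_two m
  rcases m.eq_zero_or_pos with rfl | hm
  · simp
  refine le_of_mul_le_mul_left ?_ (by positivity : (0 : ℝ) < m)
  linear_combination hcheb * 2 - (∑ j ∈ Icc 1 m, y ^ j) * hsum

lemma momentRatio_nonneg (hy : 0 ≤ y) : 0 ≤ momentRatio m k y := by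
  unfold momentRatio powerMoment
  positivity

lemma momentRatio_le (hm : 1 ≤ m) (hy : 1 ≤ y) : momentRatio m k y ≤ 2 ^ k := by
  have hS1 := powerMoment_pos (k := 1) hm (one_pos.trans_le hy)
  have h0 : 0 ≤ powerMoment m 0 y := (powerMoment_pos hm (one_pos.trans_le hy)).le
  have hmS0 : m * powerMoment m 0 y ≤ 2 * powerMoment m 1 y := by
    linarith [succ_mul_powerMoment_zero_le (m := m) hy]
  rw [momentRatio, div_le_iff₀ (by positivity)]
  calc powerMoment m 0 y ^ k * powerMoment m (k + 1) y
      ≤ powerMoment m 0 y ^ k * ((m : ℝ) ^ k * powerMoment m 1 y) := by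
        gcongr; exact powerMoment_succ_le_pow_mul (by linarith)
    _ = (m * powerMoment m 0 y) ^ k * powerMoment m 1 y := by ring
    _ ≤ (2 * powerMoment m 1 y) ^ k * powerMoment m 1 y := by gcongr
    _ = 2 ^ k * powerMoment m 1 y ^ (k + 1) := by ring

lemma one_le_of_lt_sum_pow (hy : 0 ≤ y) (hlt : (m : ℝ) < ∑ j ∈ Icc 1 m, y ^ j) : 1 ≤ y := by
  by_contra! hy1
  have : ∑ j ∈ Icc 1 m, y ^ j ≤ ∑ j ∈ Icc 1 m, (1 : ℝ) :=
    sum_le_sum fun j _ => pow_le_one₀ hy hy1.le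
  simp only [sum_const, Nat.card_Icc, add_tsub_cancel_right, nsmul_eq_mul, mul_one] at this
  linarith

lemma hasDerivAt_powerMoment (hy : y ≠ 0) :
    HasDerivAt (powerMoment m k) (powerMoment m (k + 1) y / y) y := by
  have hsum := HasDerivAt.fun_sum (u := Icc 1 m)
    fun j _ => (hasDerivAt_pow j y).const_mul ((j : ℝ) ^ k)
  refine HasDerivAt.congr_deriv (f := powerMoment m k) hsum ?_
  rw [powerMoment, sum_div]
  refine sum_congr rfl fun j hj => ?_
  obtain ⟨i, rfl⟩ := Nat.exists_eq_add_of_le' (mem_Icc.1 hj).1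
  field_simp
  simp only [add_tsub_cancel_right]
  ring

lemma hasDerivAt_negLogPartialSum (hy : y ≠ 0) :
    HasDerivAt (negLogPartialSum m) (powerMoment m 0 y / y) y := by
  have hsum := HasDerivAt.fun_sum (u := Icc 1 m)
    fun j _ => (hasDerivAt_pow j y).div_const (j : ℝ)
  refine HasDerivAt.congr_deriv (f := negLogPartialSum m) hsum ?_
  rw [powerMoment, sum_div]
  refine sum_congr rfl fun j hj => ?_
  obtain ⟨i, rfl⟩ := Nat.exists_eq_add_of_le' (mem_Icc.1 hj).1
  field_simp
  simp only [add_tsub_cancel_right]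
  ring

end PowerMoment

def SolvesPowerSumEq (m : ℕ) (a : ℝ) (x : ℝ → ℝ) : Prop :=
  ∀ w, 0 < w → 0 < x w ∧ powerMoment m 0 (x w) = a / w

section Solution

variable {m : ℕ} {a : ℝ} {x : ℝ → ℝ}

lemma SolvesPowerSumEq.strictAntiOn (hm : 1 ≤ m) (ha : 0 < a) (hx : SolvesPowerSumEq m a x) :
    StrictAntiOn x (Set.Ioi 0) := fun w₁ hw₁ w₂ hw₂ hw => by
  have hP : powerMoment m 0 (x w₂) < powerMoment m 0 (x w₁) := by
    rw [(hx w₁ hw₁).2, (hx w₂ hw₂).2]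
    exact div_lt_div_of_pos_left ha hw₁ hw
  exact (strictMonoOn_powerMoment hm).lt_iff_lt (hx w₂ hw₂).1.le (hx w₁ hw₁).1.le |>.1 hP

lemma SolvesPowerSumEq.Ioi_subset_image (hm : 1 ≤ m) (ha : 0 < a)
    (hx : SolvesPowerSumEq m a x) : Set.Ioi (0 : ℝ) ⊆ x '' Set.Ioi 0 :=
  fun y (hy : (0 : ℝ) < y) => by
  have hPy := powerMoment_pos (k := 0) hm hy
  have hw : 0 < a / powerMoment m 0 y := div_pos ha hPy
  refine ⟨_, hw, (strictMonoOn_powerMoment (k := 0) hm).injOn (hx _ hw).1.le hy.le ?_⟩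
  rw [(hx _ hw).2, div_div_cancel₀ ha.ne']

lemma SolvesPowerSumEq.continuousAt (hm : 1 ≤ m) (ha : 0 < a) (hx : SolvesPowerSumEq m a x)
    {w : ℝ} (hw : 0 < w) : ContinuousAt x w := by
  have hmono : MonotoneOn (-x) (Set.Ioi 0) := (hx.strictAntiOn hm ha).antitoneOn.neg
  have himage : (-x) '' Set.Ioi 0 ∈ 𝓝 ((-x) w) := by
    refine mem_of_superset (Iio_mem_nhds (neg_neg_of_pos (hx w hw).1)) fun y hy => ?_
    obtain ⟨v, hv, hxv⟩ :=
      hx.Ioi_subset_image hm ha (Set.mem_Ioi.2 (neg_pos.2 (Set.mem_Iio.1 hy)))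
    exact ⟨v, hv, by simp [hxv]⟩
  simpa using (continuousAt_of_monotoneOn_of_image_mem_nhds hmono (Ioi_mem_nhds hw) himage).neg

lemma SolvesPowerSumEq.hasDerivAt (hm : 1 ≤ m) (ha : 0 < a) (hx : SolvesPowerSumEq m a x)
    {w : ℝ} (hw : 0 < w) :
    HasDerivAt x (-(a * x w) / (w ^ 2 * powerMoment m 1 (x w))) w := by
  obtain ⟨hxw, hS0⟩ := hx w hw
  have hS1 := powerMoment_pos (k := 1) hm hxw
  have hF := (hasDerivAt_const (x w) a).div (hasDerivAt_powerMoment (m := m) (k := 0) hxw.ne')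
    (by rw [hS0]; positivity)
  have hinv : ∀ᶠ v in 𝓝 w, a / powerMoment m 0 (x v) = v := by
    filter_upwards [Ioi_mem_nhds hw] with v hv
    rw [(hx v hv).2, div_div_cancel₀ ha.ne']
  have hF' : (0 * powerMoment m 0 (x w) - a * (powerMoment m (0 + 1) (x w) / x w))
      / powerMoment m 0 (x w) ^ 2 ≠ 0 := by
    rw [zero_mul, zero_sub, zero_add, hS0]
    exact div_ne_zero (neg_ne_zero.2 (by positivity)) (by positivity)
  refine (hF.of_local_left_inverse (hx.continuousAt hm ha hw) hF' hinv).congr_deriv ?_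
  rw [hS0, zero_add, zero_mul, zero_sub]
  field_simp

lemma SolvesPowerSumEq.hasDerivAt_powerMoment_comp (hm : 1 ≤ m) (ha : 0 < a)
    (hx : SolvesPowerSumEq m a x) (k : ℕ) {w : ℝ} (hw : 0 < w) :
    HasDerivAt (fun v => powerMoment m k (x v))
      (-(powerMoment m 0 (x w) * powerMoment m (k + 1) (x w)) / (w * powerMoment m 1 (x w)))
      w := by
  obtain ⟨hxw, hS0⟩ := hx w hw
  have hS1 := powerMoment_pos (k := 1) hm hxw
  refine ((hasDerivAt_powerMoment (m := m) (k := k) hxw.ne').comp w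
    (hx.hasDerivAt hm ha hw)).congr_deriv ?_
  rw [hS0]
  field_simp

lemma SolvesPowerSumEq.hasDerivAt_momentRatio (hm : 1 ≤ m) (ha : 0 < a)
    (hx : SolvesPowerSumEq m a x) (k : ℕ) {w : ℝ} (hw : 0 < w) :
    HasDerivAt (fun v => momentRatio m k (x v))
      (((k + 1) * momentRatio m 1 (x w) * momentRatio m k (x w) - k * momentRatio m k (x w)
        - momentRatio m (k + 1) (x w)) / w) w := by
  have hxw := (hx w hw).1
  have hS1 := powerMoment_pos (k := 1) hm hxw
  have hS0 := powerMoment_pos (k := 0) hm hxw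
  have hd j := hx.hasDerivAt_powerMoment_comp hm ha j hw
  refine (((hd 0).fun_pow k).fun_mul (hd (k + 1))).fun_div ((hd 1).fun_pow (k + 1))
    (by positivity) |>.congr_deriv ?_
  simp only [momentRatio]
  rcases k with _ | k
  · field_simp
    ring
  · simp only [add_tsub_cancel_right]
    push_cast
    field_simp
    ring

end Solution

/-- The first three derivatives of `w ↦ log (2π w S₁(x w))`, written in the moment ratios. -/
noncomputable def logVarDeriv₁ (m : ℕ) (x : ℝ → ℝ) (w : ℝ) : ℝ :=
  (1 - momentRatio m 1 (x w)) / w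

noncomputable def logVarDeriv₂ (m : ℕ) (x : ℝ → ℝ) (w : ℝ) : ℝ :=
  (momentRatio m 2 (x w) + 2 * momentRatio m 1 (x w) - 2 * momentRatio m 1 (x w) ^ 2 - 1) / w ^ 2

noncomputable def logVarDeriv₃ (m : ℕ) (x : ℝ → ℝ) (w : ℝ) : ℝ :=
  (1 + (1 - 2 * momentRatio m 1 (x w)) ^ 3 - 6 * momentRatio m 2 (x w)
    + 7 * momentRatio m 1 (x w) * momentRatio m 2 (x w) - momentRatio m 3 (x w)) / w ^ 3

section LogVar

variable {m : ℕ} {a : ℝ} {x : ℝ → ℝ} {w : ℝ}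

lemma SolvesPowerSumEq.hasDerivAt_log_variance (hm : 1 ≤ m) (ha : 0 < a)
    (hx : SolvesPowerSumEq m a x) (hw : 0 < w) :
    HasDerivAt (fun v => Real.log (2 * Real.pi * v * powerMoment m 1 (x v)))
      (logVarDeriv₁ m x w) w := by
  have hS1 := powerMoment_pos (k := 1) hm (hx w hw).1
  have hpi := Real.pi_pos
  refine ((((hasDerivAt_id w).const_mul (2 * Real.pi)).fun_mul
    (hx.hasDerivAt_powerMoment_comp hm ha 1 hw)).log (by positivity)).congr_deriv ?_
  simp only [logVarDeriv₁, momentRatio, id]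
  field_simp
  ring

lemma SolvesPowerSumEq.hasDerivAt_logVarDeriv₁ (hm : 1 ≤ m) (ha : 0 < a)
    (hx : SolvesPowerSumEq m a x) (hw : 0 < w) :
    HasDerivAt (logVarDeriv₁ m x) (logVarDeriv₂ m x w) w := by
  refine ((hasDerivAt_const w 1).fun_sub (hx.hasDerivAt_momentRatio hm ha 1 hw)).fun_div
    (hasDerivAt_id w) hw.ne' |>.congr_deriv ?_
  simp only [logVarDeriv₂, id]
  field_simp
  ring

lemma SolvesPowerSumEq.hasDerivAt_logVarDeriv₂ (hm : 1 ≤ m) (ha : 0 < a)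
    (hx : SolvesPowerSumEq m a x) (hw : 0 < w) :
    HasDerivAt (logVarDeriv₂ m x) (logVarDeriv₃ m x w) w := by
  have hr j := hx.hasDerivAt_momentRatio hm ha j hw
  refine (((((hr 2).fun_add ((hr 1).const_mul 2)).fun_sub
    (((hr 1).fun_pow 2).const_mul 2)).fun_sub (hasDerivAt_const w 1)).fun_div
    ((hasDerivAt_id w).fun_pow 2) (by positivity)).congr_deriv ?_
  simp only [logVarDeriv₃, id]
  push_cast
  field_simp
  ring

lemma abs_logVarDeriv₁_le (hm : 1 ≤ m) (hw : 0 < w) (hxw : 1 ≤ x w) :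
    |logVarDeriv₁ m x w| ≤ 1 / w := by
  have h1 := momentRatio_nonneg (m := m) (k := 1) (zero_le_one.trans hxw)
  have h1' := momentRatio_le (k := 1) hm hxw
  rw [logVarDeriv₁, abs_div, abs_of_pos hw]
  gcongr
  exact abs_le.2 ⟨by linarith, by linarith⟩

lemma abs_logVarDeriv₂_le (hm : 1 ≤ m) (hw : 0 < w) (hxw : 1 ≤ x w) :
    |logVarDeriv₂ m x w| ≤ 5 / w ^ 2 := by
  have h1 := momentRatio_nonneg (m := m) (k := 1) (zero_le_one.trans hxw)
  have h1' := momentRatio_le (k := 1) hm hxw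
  have h2 := momentRatio_nonneg (m := m) (k := 2) (zero_le_one.trans hxw)
  have h2' := momentRatio_le (k := 2) hm hxw
  rw [logVarDeriv₂, abs_div, abs_of_pos (pow_pos hw 2)]
  gcongr
  exact abs_le.2 ⟨by nlinarith, by nlinarith⟩

lemma abs_logVarDeriv₃_le (hm : 1 ≤ m) (hw : 0 < w) (hxw : 1 ≤ x w) :
    |logVarDeriv₃ m x w| ≤ 58 / w ^ 3 := by
  have h1 := momentRatio_nonneg (m := m) (k := 1) (zero_le_one.trans hxw)
  have h1' := momentRatio_le (k := 1) hm hxw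
  have h2 := momentRatio_nonneg (m := m) (k := 2) (zero_le_one.trans hxw)
  have h2' := momentRatio_le (k := 2) hm hxw
  have h3 := momentRatio_nonneg (m := m) (k := 3) (zero_le_one.trans hxw)
  have h3' := momentRatio_le (k := 3) hm hxw
  set r₁ := momentRatio m 1 (x w)
  set r₂ := momentRatio m 2 (x w)
  have hcube_lo : -27 ≤ (1 - 2 * r₁) ^ 3 := by nlinarith [sq_nonneg (1 - 2 * r₁)]
  have hcube_hi : (1 - 2 * r₁) ^ 3 ≤ 1 := by
    nlinarith [mul_nonneg h1 (by positivity : (0 : ℝ) ≤ (3 / 2 - 2 * r₁) ^ 2 + 3 / 4)]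
  have hprod : r₁ * r₂ ≤ 2 * 4 := by
    norm_num at h1' h2'
    exact mul_le_mul h1' h2' h2 (by norm_num)
  rw [logVarDeriv₃, abs_div, abs_of_pos (pow_pos hw 3)]
  gcongr
  exact abs_le.2 ⟨by nlinarith [mul_nonneg h1 h2], by nlinarith⟩

end LogVar

lemma iteratedDeriv_succ_eqOn {f g g' : ℝ → ℝ} {U : Set ℝ} {k : ℕ} (hU : IsOpen U)
    (hf : EqOn (iteratedDeriv k f) g U) (hg : ∀ w ∈ U, HasDerivAt g (g' w) w) :
    EqOn (iteratedDeriv (k + 1) f) g' U := fun w hw => by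
  rw [iteratedDeriv_succ, (eventuallyEq_of_mem (hU.mem_nhds hw) hf).deriv_eq]
  exact (hg w hw).deriv

noncomputable def solutionDeriv (m : ℕ) (a : ℝ) (x : ℝ → ℝ) (w : ℝ) : ℝ :=
  -(a * x w) / (w ^ 2 * powerMoment m 1 (x w))

section Exponent

variable {m : ℕ} {a : ℝ} {x : ℝ → ℝ} {w : ℝ}

lemma SolvesPowerSumEq.differentiableAt_solutionDeriv (hm : 1 ≤ m) (ha : 0 < a)
    (hx : SolvesPowerSumEq m a x) (hw : 0 < w) :
    DifferentiableAt ℝ (solutionDeriv m a x) w := by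
  have hS1 := powerMoment_pos (k := 1) hm (hx w hw).1
  exact (((hx.hasDerivAt hm ha hw).differentiableAt.const_mul a).neg).div
    ((differentiableAt_id.pow 2).mul (hx.hasDerivAt_powerMoment_comp hm ha 1 hw).differentiableAt)
    (by positivity)

lemma SolvesPowerSumEq.hasDerivAt_exponent (hm : 1 ≤ m) (ha : 0 < a)
    (hx : SolvesPowerSumEq m a x) (hw : 0 < w) :
    HasDerivAt (fun v => v * negLogPartialSum m (x v) - a * Real.log (x v)
        - 1 / 2 * Real.log (2 * Real.pi * v * powerMoment m 1 (x v)))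
      (negLogPartialSum m (x w) - logVarDeriv₁ m x w / 2) w := by
  obtain ⟨hxw, hS0⟩ := hx w hw
  have hS1 := powerMoment_pos (k := 1) hm hxw
  have hx' := hx.hasDerivAt hm ha hw
  refine (((hasDerivAt_id w).fun_mul ((hasDerivAt_negLogPartialSum hxw.ne').comp w hx')).fun_sub
    ((hx'.log hxw.ne').const_mul a)).fun_sub
    ((hx.hasDerivAt_log_variance hm ha hw).const_mul (1 / 2)) |>.congr_deriv ?_
  simp only [id, Function.comp, hS0]
  field_simp
  ring

lemma SolvesPowerSumEq.hasDerivAt_negLogPartialSum_comp (hm : 1 ≤ m) (ha : 0 < a)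
    (hx : SolvesPowerSumEq m a x) (hw : 0 < w) :
    HasDerivAt (fun v => negLogPartialSum m (x v)) (a * solutionDeriv m a x w / (w * x w)) w := by
  obtain ⟨hxw, hS0⟩ := hx w hw
  refine ((hasDerivAt_negLogPartialSum hxw.ne').comp w
    (hx.hasDerivAt hm ha hw)).congr_deriv ?_
  rw [hS0, solutionDeriv]
  field_simp

lemma SolvesPowerSumEq.hasDerivAt_exponent_deriv (hm : 1 ≤ m) (ha : 0 < a)
    (hx : SolvesPowerSumEq m a x) (hw : 0 < w) :
    HasDerivAt (fun v => negLogPartialSum m (x v) - logVarDeriv₁ m x v / 2)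
      (a * solutionDeriv m a x w / (w * x w) - logVarDeriv₂ m x w / 2) w :=
  (hx.hasDerivAt_negLogPartialSum_comp hm ha hw).fun_sub
    ((hx.hasDerivAt_logVarDeriv₁ hm ha hw).div_const 2)

lemma SolvesPowerSumEq.hasDerivAt_exponent_deriv_deriv (hm : 1 ≤ m) (ha : 0 < a)
    (hx : SolvesPowerSumEq m a x) (hw : 0 < w) :
    HasDerivAt (fun v => a * solutionDeriv m a x v / (v * x v) - logVarDeriv₂ m x v / 2)
      (a * deriv (solutionDeriv m a x) w / (w * x w) - a * solutionDeriv m a x w / (w ^ 2 * x w)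
        - a / w * (solutionDeriv m a x w / x w) ^ 2 - logVarDeriv₃ m x w / 2) w := by
  have hxw := (hx w hw).1
  refine (((hx.differentiableAt_solutionDeriv hm ha hw).hasDerivAt.const_mul a).fun_div
    ((hasDerivAt_id w).fun_mul (hx.hasDerivAt hm ha hw)) (by positivity)).fun_sub
    ((hx.hasDerivAt_logVarDeriv₂ hm ha hw).div_const 2) |>.congr_deriv ?_
  simp only [id, solutionDeriv]
  field_simp
  ring

theorem SolvesPowerSumEq.abs_iteratedDeriv_sub_le (hm : 1 ≤ m) (ha : 0 < a)
    (hx : SolvesPowerSumEq m a x) {h : ℝ → ℝ}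
    (hh : ∀ w, 0 < w → h w = w * ∑ j ∈ Icc 1 m, x w ^ j / j - a * Real.log (x w)
      - 1 / 2 * Real.log (2 * Real.pi * w * ∑ j ∈ Icc 1 m, (j : ℝ) * x w ^ j))
    (hw : 0 < w) (hxw : 1 ≤ x w) :
    |deriv h w - ∑ j ∈ Icc 1 m, x w ^ j / j| ≤ 1 / (2 * w) ∧
      |iteratedDeriv 2 h w - a * deriv x w / (w * x w)| ≤ 5 / (2 * w ^ 2) ∧
      |iteratedDeriv 3 h w - (a * iteratedDeriv 2 x w / (w * x w) - a * deriv x w / (w ^ 2 * x w)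
        - a / w * (deriv x w / x w) ^ 2)| ≤ 29 / w ^ 3 := by
  have e₀ : EqOn (iteratedDeriv 0 h) (fun v => v * negLogPartialSum m (x v) - a * Real.log (x v)
      - 1 / 2 * Real.log (2 * Real.pi * v * powerMoment m 1 (x v))) (Set.Ioi 0) :=
    fun v hv => by simpa [negLogPartialSum] using hh v hv
  have e₁ := iteratedDeriv_succ_eqOn isOpen_Ioi e₀ fun v hv => hx.hasDerivAt_exponent hm ha hv
  have e₂ := iteratedDeriv_succ_eqOn isOpen_Ioi e₁ fun v hv =>
    hx.hasDerivAt_exponent_deriv hm ha hv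
  have e₃ := iteratedDeriv_succ_eqOn isOpen_Ioi e₂ fun v hv =>
    hx.hasDerivAt_exponent_deriv_deriv hm ha hv
  have x₁ := iteratedDeriv_succ_eqOn (k := 0) (g' := solutionDeriv m a x) isOpen_Ioi
    (fun v _ => rfl) fun v hv => hx.hasDerivAt hm ha hv
  have x₂ := iteratedDeriv_succ_eqOn isOpen_Ioi x₁ fun v hv =>
    (hx.differentiableAt_solutionDeriv hm ha hv).hasDerivAt
  rw [← iteratedDeriv_one, ← iteratedDeriv_one, e₁ hw, e₂ hw, e₃ hw, x₁ hw, x₂ hw]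
  refine ⟨?_, ?_, ?_⟩ <;> dsimp only [negLogPartialSum] <;>
    rw [sub_sub_cancel_left, abs_neg, abs_div, abs_two]
  · have := abs_logVarDeriv₁_le hm hw hxw
    calc |logVarDeriv₁ m x w| / 2 ≤ 1 / w / 2 := by gcongr
      _ = 1 / (2 * w) := by ring
  · have := abs_logVarDeriv₂_le hm hw hxw
    calc |logVarDeriv₂ m x w| / 2 ≤ 5 / w ^ 2 / 2 := by gcongr
      _ = 5 / (2 * w ^ 2) := by ring
  · have := abs_logVarDeriv₃_le hm hw hxw
    calc |logVarDeriv₃ m x w| / 2 ≤ 58 / w ^ 3 / 2 := by gcongr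
      _ = 29 / w ^ 3 := by ring

end Exponent

open Filter Real in
theorem stmt_13_general (α : ℕ → ℕ) (hα : ∀ n, 1 ≤ α n)
    (δ : ℝ) (hδ1 : δ < 1)
    (hbig : ∀ᶠ n : ℕ in atTop, ∀ w ∈ Set.Ioo (1 - δ) (1 + δ),
      1 < (n : ℝ) / (w * α n))
    (x : ℕ → ℝ → ℝ)
    (hx : ∀ n, 1 ≤ n → ∀ w : ℝ, 0 < w →
      0 < x n w ∧ ∑ j ∈ Finset.Icc 1 (α n), x n w ^ j = (n : ℝ) / w)
    (h : ℕ → ℝ → ℝ)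
    (hh : ∀ n, ∀ w : ℝ, 0 < w →
      h n w = w * ∑ j ∈ Finset.Icc 1 (α n), x n w ^ j / j - (n : ℝ) * Real.log (x n w)
        - 1 / 2 * Real.log (2 * π * w * ∑ j ∈ Finset.Icc 1 (α n), (j : ℝ) * x n w ^ j)) :
    ∃ C : ℝ, ∃ N : ℕ, ∀ n ≥ N, ∀ w ∈ Set.Ioo (1 - δ) (1 + δ),
      |deriv (h n) w - ∑ j ∈ Finset.Icc 1 (α n), x n w ^ j / j| ≤ C ∧
      |iteratedDeriv 2 (h n) w - (n : ℝ) * deriv (x n) w / (w * x n w)| ≤ C ∧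
      |iteratedDeriv 3 (h n) w -
          ((n : ℝ) * iteratedDeriv 2 (x n) w / (w * x n w)
            - (n : ℝ) * deriv (x n) w / (w ^ 2 * x n w)
            - (n : ℝ) / w * (deriv (x n) w / x n w) ^ 2)| ≤ C := by
  obtain ⟨N, hN⟩ := eventually_atTop.1 hbig
  have hc : 0 < 1 - δ := by linarith
  refine ⟨1 / (2 * (1 - δ)) + 5 / (2 * (1 - δ) ^ 2) + 29 / (1 - δ) ^ 3, max N 1,
    fun n hn w hw => ?_⟩
  have hw₀ : 0 < w := hc.trans hw.1
  have hn₁ : 1 ≤ n := le_of_max_le_right hn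
  have hsol : SolvesPowerSumEq (α n) n (x n) := fun v hv => by simpa using hx n hn₁ v hv
  have hxw : 1 ≤ x n w := by
    refine one_le_of_lt_sum_pow (m := α n) (hx n hn₁ w hw₀).1.le ?_
    rw [(hx n hn₁ w hw₀).2, lt_div_iff₀ hw₀]
    have := hN n (le_of_max_le_left hn) w hw
    rwa [lt_div_iff₀ (by have := hα n; positivity), one_mul, mul_comm] at this
  obtain ⟨h₁, h₂, h₃⟩ :=
    hsol.abs_iteratedDeriv_sub_le (hα n) (by positivity) (hh n) hw₀ hxw
  have b₁ : 1 / (2 * w) ≤ 1 / (2 * (1 - δ)) := by gcongr; exact hw.1.le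
  have b₂ : 5 / (2 * w ^ 2) ≤ 5 / (2 * (1 - δ) ^ 2) := by gcongr; exact hw.1.le
  have b₃ : 29 / w ^ 3 ≤ 29 / (1 - δ) ^ 3 := by gcongr; exact hw.1.le
  have : 0 ≤ 1 / (2 * (1 - δ)) := by positivity
  have : 0 ≤ 5 / (2 * (1 - δ) ^ 2) := by positivity
  have : 0 ≤ 29 / (1 - δ) ^ 3 := by positivity
  exact ⟨by linarith, by linarith, by linarith⟩

open Filter Real in
/-- asymptotics for the first three derivatives of `h̃_{n,α}`.
Suppose `n/(w α(n)) > 1` for all large `n` and all `w ∈ (1−δ, 1+δ)`, and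
`α(n)/n → 0`.  Here `x n w = x_{n,α}(w)` is the positive solution of
`∑_{j=1}^{α(n)} x^j = n/w` and
`h̃ n w = w ∑_{j=1}^{α(n)} x(w)^j/j − n log x(w) − (1/2) log(2πw ∑ j x(w)^j)`.
Then there are `C` and `N` such that for all `n ≥ N` and `w ∈ (1−δ, 1+δ)`:
(i) `|h̃'(w) − ∑_{j=1}^{α(n)} x(w)^j/j| ≤ C`;
(ii) `|h̃''(w) − n x'(w)/(w x(w))| ≤ C`;
(iii) `|h̃'''(w) − (n x''(w)/(w x(w)) − n x'(w)/(w² x(w)) − (n/w)(x'(w)/x(w))²)| ≤ C`. -/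
theorem stmt_13 (α : ℕ → ℕ) (hα : ∀ n, 1 ≤ α n)
    (δ : ℝ) (hδ0 : 0 < δ) (hδ1 : δ < 1)
    (hbig : ∀ᶠ n : ℕ in atTop, ∀ w ∈ Set.Ioo (1 - δ) (1 + δ),
      1 < (n : ℝ) / (w * α n))
    (hαn : Tendsto (fun n : ℕ => (α n : ℝ) / n) atTop (nhds 0))
    (x : ℕ → ℝ → ℝ)
    (hx : ∀ n, 1 ≤ n → ∀ w : ℝ, 0 < w →
      0 < x n w ∧ ∑ j ∈ Finset.Icc 1 (α n), x n w ^ j = (n : ℝ) / w)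
    (h : ℕ → ℝ → ℝ)
    (hh : ∀ n, ∀ w : ℝ, 0 < w →
      h n w = w * ∑ j ∈ Finset.Icc 1 (α n), x n w ^ j / j - (n : ℝ) * Real.log (x n w)
        - 1 / 2 * Real.log (2 * π * w * ∑ j ∈ Finset.Icc 1 (α n), (j : ℝ) * x n w ^ j)) :
    ∃ C : ℝ, ∃ N : ℕ, ∀ n ≥ N, ∀ w ∈ Set.Ioo (1 - δ) (1 + δ),
      |deriv (h n) w - ∑ j ∈ Finset.Icc 1 (α n), x n w ^ j / j| ≤ C ∧
      |iteratedDeriv 2 (h n) w - (n : ℝ) * deriv (x n) w / (w * x n w)| ≤ C ∧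
      |iteratedDeriv 3 (h n) w -
          ((n : ℝ) * iteratedDeriv 2 (x n) w / (w * x n w)
            - (n : ℝ) * deriv (x n) w / (w ^ 2 * x n w)
            - (n : ℝ) / w * (deriv (x n) w / x n w) ^ 2)| ≤ C :=
  stmt_13_general α hα δ hδ1 hbig x hx h hh
end

section
/- Let α : ℕ → ℕ with α(n) ≥ 1 and let 0 < δ < 1 be such that n/(w·α(n)) > 1 for all sufficiently large n and all w ∈ (1−δ, 1+δ), and assume α(n)/n → 0. Then there exist a constant C and N ∈ ℕ such that for all n ≥ N and all w ∈ (1−δ, 1+δ), |h̃'''_{n,α}(w)| ≤ C·n/α(n), where h̃'''_{n,α} is the third derivative of h̃_{n,α}. -/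
/-!
Write `s_k = ∑_{j=1}^A j^k x^j` along the curve `x = x(w)`. Differentiating `s_0(x(w)) = n/w`
gives `x' = -n x / (w² s_1)`, hence `s_k' = -n s_{k+1} / (w² s_1)`, so every derivative of `h̃`
is a rational function of `n`, `w` and the `s_k`. In terms of the mean `μ₁ = s_1/s_0` and the
normalized moments `ν_k = (s_k/s_0)/μ₁^k` of the law on `{1, …, A}` with weights `x^j`,
`h̃''' = n (3 - ν₂)/(w³ μ₁) + Q(ν₂, ν₃, ν₄)/w³` with `Q` a cubic polynomial.
When `n > wA` the root satisfies `x > 1`, so Chebyshev's sum inequality gives `μ₁ ≥ A/2`,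
whence `ν_k ≤ 2^k` and `|h̃'''| ≤ 6n/(A w³) + 300/w³`.
-/

open Finset Real Filter Topology

namespace PowerSumSaddle

/-- The exponent `k` is an integer so that `k = -1` gives `∑ y^j / j`. -/
noncomputable def momentSum (A : ℕ) (k : ℤ) (y : ℝ) : ℝ :=
  ∑ j ∈ Icc 1 A, (j : ℝ) ^ k * y ^ j

variable {A : ℕ} {k : ℤ} {y n w : ℝ} {X : ℝ → ℝ}

theorem momentSum_zero_eq (A : ℕ) (y : ℝ) : momentSum A 0 y = ∑ j ∈ Icc 1 A, y ^ j := by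
  simp [momentSum]

theorem momentSum_one_eq (A : ℕ) (y : ℝ) :
    momentSum A 1 y = ∑ j ∈ Icc 1 A, (j : ℝ) * y ^ j := by
  simp [momentSum]

theorem momentSum_neg_one_eq (A : ℕ) (y : ℝ) :
    momentSum A (-1) y = ∑ j ∈ Icc 1 A, y ^ j / j := by
  simp [momentSum, div_eq_inv_mul]

theorem momentSum_pos (hA : 1 ≤ A) (hy : 0 < y) : 0 < momentSum A k y :=
  sum_pos (fun j hj => by have := (mem_Icc.mp hj).1; positivity) ⟨1, by simpa using hA⟩

theorem strictMonoOn_momentSum (hA : 1 ≤ A) : StrictMonoOn (momentSum A k) (Set.Ici 0) := by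
  intro a ha b hb hab
  refine sum_lt_sum_of_nonempty ⟨1, by simpa using hA⟩ fun j hj => ?_
  have hj := (mem_Icc.mp hj).1
  have : (0 : ℝ) < (j : ℝ) ^ k := by positivity
  gcongr

theorem hasDerivAt_momentSum (hy : y ≠ 0) :
    HasDerivAt (momentSum A k) (momentSum A (k + 1) y / y) y := by
  rw [momentSum, sum_div]
  refine HasDerivAt.fun_sum fun j hj => ?_
  obtain ⟨i, rfl⟩ : ∃ i, j = i + 1 := ⟨j - 1, by have := (mem_Icc.mp hj).1; omega⟩
  refine ((hasDerivAt_pow (i + 1) y).const_mul ((↑(i + 1) : ℝ) ^ k)).congr_deriv ?_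
  rw [zpow_add_one₀ (by positivity), Nat.add_sub_cancel]
  field_simp
  ring

theorem momentSum_le_pow_mul (k : ℕ) (hy : 0 ≤ y) :
    momentSum A k y ≤ (A : ℝ) ^ k * momentSum A 0 y := by
  rw [momentSum, momentSum, mul_sum]
  refine sum_le_sum fun j hj => ?_
  have : (j : ℝ) ≤ A := by exact_mod_cast (mem_Icc.mp hj).2
  simp only [zpow_natCast, zpow_zero, one_mul]
  gcongr

theorem momentSum_zero_le_card (hy0 : 0 ≤ y) (hy1 : y ≤ 1) : momentSum A 0 y ≤ A := by
  calc momentSum A 0 y ≤ ∑ _j ∈ Icc 1 A, (1 : ℝ) := by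
        rw [momentSum_zero_eq]; exact sum_le_sum fun j _ => pow_le_one₀ hy0 hy1
    _ = A := by simp

theorem sum_Icc_one_natCast (A : ℕ) : ∑ j ∈ Icc 1 A, (j : ℝ) = A * (A + 1) / 2 := by
  induction A with
  | zero => simp
  | succ m ih => rw [sum_Icc_succ_top (by omega), ih]; push_cast; ring

theorem card_add_one_mul_momentSum_zero_le (hy : 1 ≤ y) :
    (A + 1) * momentSum A 0 y ≤ 2 * momentSum A 1 y := by
  have hmono : Monovary (fun j : ℕ => (j : ℝ)) (fun j : ℕ => y ^ j) :=
    Monotone.monovary (fun _ _ h => by exact_mod_cast h) (pow_right_mono₀ hy)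
  have cheb := (hmono.monovaryOn (Icc 1 A)).sum_mul_sum_le_card_mul_sum
  rw [sum_Icc_one_natCast, Nat.card_Icc, Nat.add_sub_cancel] at cheb
  rcases A.eq_zero_or_pos with rfl | hA
  · simp [momentSum]
  rw [momentSum_zero_eq, momentSum_one_eq]
  have hA' : (0 : ℝ) < A := by exact_mod_cast hA
  nlinarith

def IsPowerSumRoot (A : ℕ) (n : ℝ) (X : ℝ → ℝ) : Prop :=
  ∀ w, 0 < w → 0 < X w ∧ momentSum A 0 (X w) = n / w

namespace IsPowerSumRoot

theorem eq_of_momentSum_eq (hX : IsPowerSumRoot A n X) (hA : 1 ≤ A) (hw : 0 < w) (hy : 0 ≤ y)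
    (h : momentSum A 0 y = n / w) : X w = y :=
  (strictMonoOn_momentSum hA).injOn (hX w hw).1.le hy ((hX w hw).2.trans h.symm)

theorem strictAntiOn (hX : IsPowerSumRoot A n X) (hA : 1 ≤ A) (hn : 0 < n) :
    StrictAntiOn X (Set.Ioi 0) := by
  intro u hu v hv huv
  refine ((strictMonoOn_momentSum (k := 0) hA).lt_iff_lt (hX v hv).1.le (hX u hu).1.le).mp ?_
  rw [(hX u hu).2, (hX v hv).2]
  exact div_lt_div_of_pos_left hn hu huv

theorem image_Ioi (hX : IsPowerSumRoot A n X) (hA : 1 ≤ A) (hn : 0 < n) :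
    X '' Set.Ioi 0 = Set.Ioi 0 := by
  refine subset_antisymm (Set.image_subset_iff.mpr fun w hw => (hX w hw).1) fun y hy => ?_
  have hS : 0 < momentSum A 0 y := momentSum_pos hA hy
  refine ⟨n / momentSum A 0 y, div_pos hn hS, hX.eq_of_momentSum_eq hA (div_pos hn hS) hy.le ?_⟩
  field_simp

theorem continuousAt (hX : IsPowerSumRoot A n X) (hA : 1 ≤ A) (hn : 0 < n) (hw : 0 < w) :
    ContinuousAt X w := by
  have hmono : MonotoneOn (fun w => -X w) (Set.Ioi 0) := fun u hu v hv huv =>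
    neg_le_neg ((hX.strictAntiOn hA hn).antitoneOn hu hv huv)
  have himage : (fun w => -X w) '' Set.Ioi 0 = Set.Iio 0 := by
    rw [← Set.image_image (g := Neg.neg), hX.image_Ioi hA hn, Set.image_neg_Ioi, neg_zero]
  have := continuousAt_of_monotoneOn_of_image_mem_nhds hmono (Ioi_mem_nhds hw)
    (himage ▸ Iio_mem_nhds (neg_neg_iff_pos.mpr (hX w hw).1))
  simpa only [neg_neg] using this.fun_neg

theorem hasDerivAt (hX : IsPowerSumRoot A n X) (hA : 1 ≤ A) (hn : 0 < n) (hw : 0 < w) :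
    HasDerivAt X (-(n * X w) / (w ^ 2 * momentSum A 1 (X w))) w := by
  obtain ⟨hx, hS0⟩ := hX w hw
  have hS0pos := momentSum_pos (k := 0) hA hx
  have hS1pos := momentSum_pos (k := 1) hA hx
  have hinv := (hasDerivAt_const (X w) n).fun_div (hasDerivAt_momentSum hx.ne') hS0pos.ne'
  have hleft : ∀ᶠ u in 𝓝 w, n / momentSum A 0 (X u) = u := by
    filter_upwards [Ioi_mem_nhds hw] with u hu
    rw [(hX u hu).2]
    field_simp
  simp only [zero_add, zero_mul, zero_sub] at hinv
  refine (hinv.of_local_left_inverse (hX.continuousAt hA hn hw) ?_ hleft).congr_deriv ?_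
  · exact div_ne_zero (neg_ne_zero.mpr (by positivity)) (by positivity)
  · rw [hS0]
    field_simp

theorem hasDerivAt_momentSum_comp (hX : IsPowerSumRoot A n X) (hA : 1 ≤ A) (hn : 0 < n)
    (hw : 0 < w) (k : ℤ) :
    HasDerivAt (fun u => momentSum A k (X u))
      (-(n * momentSum A (k + 1) (X w)) / (w ^ 2 * momentSum A 1 (X w))) w := by
  have hx := (hX w hw).1
  refine ((hasDerivAt_momentSum hx.ne').comp w (hX.hasDerivAt hA hn hw)).congr_deriv ?_
  field_simp

theorem one_lt (hX : IsPowerSumRoot A n X) (hw : 0 < w) (hwA : w * A < n) : 1 < X w := by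
  obtain ⟨hx, hS0⟩ := hX w hw
  by_contra! hle
  have := momentSum_zero_le_card (A := A) hx.le hle
  rw [hS0, div_le_iff₀ hw] at this
  linarith

end IsPowerSumRoot

noncomputable def saddleLog (A : ℕ) (n : ℝ) (X : ℝ → ℝ) (w : ℝ) : ℝ :=
  w * momentSum A (-1) (X w) - n * log (X w) - 1 / 2 * log (2 * π * w * momentSum A 1 (X w))

noncomputable def firstDeriv (n w : ℝ) (s : ℤ → ℝ) : ℝ :=
  s (-1) - 1 / (2 * w) + n * s 2 / (2 * w ^ 2 * s 1 ^ 2)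

noncomputable def secondDeriv (n w : ℝ) (s : ℤ → ℝ) : ℝ :=
  -n ^ 2 / (w ^ 3 * s 1) + 1 / (2 * w ^ 2) - n ^ 2 * s 3 / (2 * w ^ 4 * s 1 ^ 3)
    - n * s 2 / (w ^ 3 * s 1 ^ 2) + n ^ 2 * s 2 ^ 2 / (w ^ 4 * s 1 ^ 4)

noncomputable def thirdDerivPoly (ν₂ ν₃ ν₄ : ℝ) : ℝ :=
  4 * ν₂ ^ 3 - 6 * ν₂ ^ 2 - 7 / 2 * ν₂ * ν₃ + 3 * ν₂ + 3 * ν₃ + ν₄ / 2 - 1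

noncomputable def thirdDerivOfMoments (n w μ₁ ν₂ ν₃ ν₄ : ℝ) : ℝ :=
  n * (3 - ν₂) / (w ^ 3 * μ₁) + thirdDerivPoly ν₂ ν₃ ν₄ / w ^ 3

noncomputable def normalizedMoment (s : ℤ → ℝ) (k : ℕ) : ℝ := s k / s 0 / (s 1 / s 0) ^ k

noncomputable def thirdDeriv (n w : ℝ) (s : ℤ → ℝ) : ℝ :=
  thirdDerivOfMoments n w (s 1 / s 0) (normalizedMoment s 2) (normalizedMoment s 3)
    (normalizedMoment s 4)

namespace IsPowerSumRoot

theorem hasDerivAt_saddleLog (hX : IsPowerSumRoot A n X) (hA : 1 ≤ A) (hn : 0 < n)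
    (hw : 0 < w) :
    HasDerivAt (saddleLog A n X) (firstDeriv n w fun k => momentSum A k (X w)) w := by
  obtain ⟨hx, hS0⟩ := hX w hw
  have hs := hX.hasDerivAt_momentSum_comp hA hn hw
  have hS1 := momentSum_pos (k := 1) hA hx
  have h2πwS1 := ((hasDerivAt_id' w).const_mul (2 * π)).fun_mul (hs 1)
  have := (((hasDerivAt_id' w).fun_mul (hs (-1))).fun_sub
    ((hX.hasDerivAt hA hn hw).log hx.ne' |>.const_mul n)).fun_sub
    ((h2πwS1.log (by positivity)).const_mul (1 / 2))
  refine this.congr_deriv ?_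
  norm_num [firstDeriv, hS0]
  field_simp
  ring

theorem hasDerivAt_firstDeriv (hX : IsPowerSumRoot A n X) (hA : 1 ≤ A) (hn : 0 < n)
    (hw : 0 < w) :
    HasDerivAt (fun u => firstDeriv n u fun k => momentSum A k (X u))
      (secondDeriv n w fun k => momentSum A k (X w)) w := by
  obtain ⟨hx, hS0⟩ := hX w hw
  have hs := hX.hasDerivAt_momentSum_comp hA hn hw
  have hS1 := momentSum_pos (k := 1) hA hx
  have := ((hs (-1)).fun_sub
    ((hasDerivAt_const w (1 : ℝ)).fun_div ((hasDerivAt_id' w).const_mul 2) (by positivity))).fun_add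
    (((hs 2).const_mul n).fun_div
      ((((hasDerivAt_id' w).fun_pow 2).const_mul 2).fun_mul ((hs 1).fun_pow 2)) (by positivity))
  refine this.congr_deriv ?_
  norm_num [secondDeriv, hS0]
  field_simp
  ring

theorem hasDerivAt_secondDeriv (hX : IsPowerSumRoot A n X) (hA : 1 ≤ A) (hn : 0 < n)
    (hw : 0 < w) :
    HasDerivAt (fun u => secondDeriv n u fun k => momentSum A k (X u))
      (thirdDeriv n w fun k => momentSum A k (X w)) w := by
  obtain ⟨hx, hS0⟩ := hX w hw
  have hs := hX.hasDerivAt_momentSum_comp hA hn hw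
  have hS1 := momentSum_pos (k := 1) hA hx
  have hpow (m : ℕ) := hasDerivAt_pow m w
  have := (((((hasDerivAt_const w (-n ^ 2)).fun_div ((hpow 3).fun_mul (hs 1))
      (by positivity)).fun_add
    ((hasDerivAt_const w (1 : ℝ)).fun_div ((hpow 2).const_mul 2) (by positivity))).fun_sub
    (((hs 3).const_mul (n ^ 2)).fun_div (((hpow 4).const_mul 2).fun_mul ((hs 1).fun_pow 3))
      (by positivity))).fun_sub
    (((hs 2).const_mul n).fun_div ((hpow 3).fun_mul ((hs 1).fun_pow 2)) (by positivity))).fun_add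
    ((((hs 2).fun_pow 2).const_mul (n ^ 2)).fun_div ((hpow 4).fun_mul ((hs 1).fun_pow 4))
      (by positivity))
  refine this.congr_deriv ?_
  norm_num [thirdDeriv, thirdDerivOfMoments, thirdDerivPoly, normalizedMoment, hS0]
  field_simp
  ring

theorem iteratedDeriv_three_eq (hX : IsPowerSumRoot A n X) (hA : 1 ≤ A) (hn : 0 < n)
    {h : ℝ → ℝ} (hh : Set.EqOn h (saddleLog A n X) (Set.Ioi 0)) (hw : 0 < w) :
    iteratedDeriv 3 h w = thirdDeriv n w fun k => momentSum A k (X w) := by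
  have h₁ : Set.EqOn (deriv h) (fun u => firstDeriv n u fun k => momentSum A k (X u))
      (Set.Ioi 0) := fun u hu =>
    (hh.deriv isOpen_Ioi hu).trans (hX.hasDerivAt_saddleLog hA hn hu).deriv
  have h₂ : Set.EqOn (deriv (deriv h)) (fun u => secondDeriv n u fun k => momentSum A k (X u))
      (Set.Ioi 0) := fun u hu =>
    (h₁.deriv isOpen_Ioi hu).trans (hX.hasDerivAt_firstDeriv hA hn hu).deriv
  rw [iteratedDeriv_eq_iterate]
  exact (h₂.deriv isOpen_Ioi hw).trans (hX.hasDerivAt_secondDeriv hA hn hw).deriv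

end IsPowerSumRoot

theorem abs_thirdDerivPoly_le {ν₂ ν₃ ν₄ : ℝ} (hν₂ : ν₂ ∈ Set.Icc 0 (2 ^ 2))
    (hν₃ : ν₃ ∈ Set.Icc 0 (2 ^ 3)) (hν₄ : ν₄ ∈ Set.Icc 0 (2 ^ 4)) :
    |thirdDerivPoly ν₂ ν₃ ν₄| ≤ 300 := by
  norm_num at hν₂ hν₃ hν₄
  obtain ⟨hν₂₀, hν₂₁⟩ := hν₂
  obtain ⟨hν₃₀, hν₃₁⟩ := hν₃
  obtain ⟨hν₄₀, hν₄₁⟩ := hν₄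
  have h₂ : ν₂ ^ 2 ≤ 16 := by nlinarith
  have h₃ : ν₂ ^ 3 ≤ 64 := by nlinarith
  have h₂₃ : ν₂ * ν₃ ≤ 32 := by nlinarith
  have : 0 ≤ ν₂ * ν₃ := by positivity
  exact abs_le.mpr ⟨by unfold thirdDerivPoly; nlinarith, by unfold thirdDerivPoly; nlinarith⟩

theorem abs_thirdDerivOfMoments_le {n w a μ₁ ν₂ ν₃ ν₄ : ℝ} (hn : 0 ≤ n) (hw : 0 < w)
    (ha : 0 < a) (hμ₁ : a ≤ 2 * μ₁) (hν₂ : ν₂ ∈ Set.Icc 0 (2 ^ 2))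
    (hν₃ : ν₃ ∈ Set.Icc 0 (2 ^ 3)) (hν₄ : ν₄ ∈ Set.Icc 0 (2 ^ 4)) :
    |thirdDerivOfMoments n w μ₁ ν₂ ν₃ ν₄| ≤ 6 * n / (a * w ^ 3) + 300 / w ^ 3 := by
  have hμ₁₀ : 0 < μ₁ := by linarith
  have hmain : |n * (3 - ν₂) / (w ^ 3 * μ₁)| ≤ 6 * n / (a * w ^ 3) := by
    rw [abs_div, abs_mul, abs_of_nonneg hn, abs_of_pos (by positivity : 0 < w ^ 3 * μ₁),
      div_le_div_iff₀ (by positivity) (by positivity)]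
    have : |3 - ν₂| ≤ 3 := abs_le.mpr ⟨by linarith [hν₂.2], by linarith [hν₂.1]⟩
    calc n * |3 - ν₂| * (a * w ^ 3) ≤ n * 3 * (2 * μ₁ * w ^ 3) := by gcongr
      _ = 6 * n * (w ^ 3 * μ₁) := by ring
  calc _ ≤ |n * (3 - ν₂) / (w ^ 3 * μ₁)| + |thirdDerivPoly ν₂ ν₃ ν₄| / w ^ 3 := by
        rw [← abs_of_pos (pow_pos hw 3), ← abs_div, abs_of_pos (pow_pos hw 3)]
        exact abs_add_le _ _
    _ ≤ _ := by gcongr; exact abs_thirdDerivPoly_le hν₂ hν₃ hν₄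

theorem card_le_two_mul_momentSum_one_div (hA : 1 ≤ A) (hy : 1 ≤ y) :
    (A : ℝ) ≤ 2 * (momentSum A 1 y / momentSum A 0 y) := by
  have hS0 := momentSum_pos (k := 0) hA (by linarith)
  rw [mul_div_assoc', le_div_iff₀ hS0]
  linarith [card_add_one_mul_momentSum_zero_le (A := A) hy]

theorem normalizedMoment_mem_Icc (hA : 1 ≤ A) (hy : 1 ≤ y) (k : ℕ) :
    normalizedMoment (fun j => momentSum A j y) k ∈ Set.Icc 0 (2 ^ k) := by
  have hS0 := momentSum_pos (k := 0) hA (by linarith)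
  have hμ := card_le_two_mul_momentSum_one_div hA hy
  have hS1 := momentSum_pos (k := 1) hA (y := y) (by linarith)
  have hSk := momentSum_pos (k := k) hA (y := y) (by linarith)
  refine ⟨by rw [normalizedMoment]; positivity, ?_⟩
  rw [normalizedMoment, div_le_iff₀ (by positivity)]
  calc momentSum A k y / momentSum A 0 y ≤ (A : ℝ) ^ k := by
        rw [div_le_iff₀ hS0]; exact_mod_cast momentSum_le_pow_mul k (by linarith)
    _ = 2 ^ k * (A / 2) ^ k := by rw [← mul_pow]; ring
    _ ≤ 2 ^ k * (momentSum A 1 y / momentSum A 0 y) ^ k := by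
        gcongr 2 ^ k * ?_ ^ k; linarith

theorem abs_thirdDeriv_le (hA : 1 ≤ A) (hn : 0 ≤ n) (hw : 0 < w) (hy : 1 ≤ y) :
    |thirdDeriv n w fun k => momentSum A k y| ≤ 6 * n / (A * w ^ 3) + 300 / w ^ 3 :=
  abs_thirdDerivOfMoments_le hn hw (by exact_mod_cast hA) (card_le_two_mul_momentSum_one_div hA hy)
    (normalizedMoment_mem_Icc hA hy 2) (normalizedMoment_mem_Icc hA hy 3)
    (normalizedMoment_mem_Icc hA hy 4)

theorem IsPowerSumRoot.abs_iteratedDeriv_three_le {h : ℝ → ℝ} (hX : IsPowerSumRoot A n X)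
    (hA : 1 ≤ A) (hn : 0 < n) (hh : Set.EqOn h (saddleLog A n X) (Set.Ioi 0)) (hw : 0 < w)
    (hwA : w * A < n) :
    |iteratedDeriv 3 h w| ≤ (6 / w ^ 3 + 300 / w ^ 4) * (n / A) := by
  have hA' : (0 : ℝ) < A := by exact_mod_cast hA
  have hwnA : w ≤ n / A := by rw [le_div_iff₀ hA']; exact hwA.le
  rw [hX.iteratedDeriv_three_eq hA hn hh hw]
  calc _ ≤ 6 * n / (A * w ^ 3) + 300 / w ^ 4 * w :=
        (abs_thirdDeriv_le hA hn.le hw (hX.one_lt hw hwA).le).trans_eq (by field_simp)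
    _ ≤ 6 * n / (A * w ^ 3) + 300 / w ^ 4 * (n / A) := by gcongr
    _ = _ := by ring

end PowerSumSaddle

open PowerSumSaddle

open Filter Real in
theorem stmt_14_general (α : ℕ → ℕ) (hα : ∀ n, 1 ≤ α n)
    (δ : ℝ) (hδ1 : δ < 1)
    (hbig : ∀ᶠ n : ℕ in atTop, ∀ w ∈ Set.Ioo (1 - δ) (1 + δ),
      1 < (n : ℝ) / (w * α n))
    (x : ℕ → ℝ → ℝ)
    (hx : ∀ n, 1 ≤ n → ∀ w : ℝ, 0 < w →
      0 < x n w ∧ ∑ j ∈ Finset.Icc 1 (α n), x n w ^ j = (n : ℝ) / w)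
    (h : ℕ → ℝ → ℝ)
    (hh : ∀ n, ∀ w : ℝ, 0 < w →
      h n w = w * ∑ j ∈ Finset.Icc 1 (α n), x n w ^ j / j - (n : ℝ) * Real.log (x n w)
        - 1 / 2 * Real.log (2 * π * w * ∑ j ∈ Finset.Icc 1 (α n), (j : ℝ) * x n w ^ j)) :
    ∃ C : ℝ, ∃ N : ℕ, ∀ n ≥ N, ∀ w ∈ Set.Ioo (1 - δ) (1 + δ),
      |iteratedDeriv 3 (h n) w| ≤ C * n / α n := by
  obtain ⟨N, hN⟩ := eventually_atTop.mp hbig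
  refine ⟨6 / (1 - δ) ^ 3 + 300 / (1 - δ) ^ 4, max N 1, fun n hn w hw => ?_⟩
  have hw0 : 0 < w := by linarith [hw.1]
  have hn1 : 1 ≤ n := le_of_max_le_right hn
  have hn0 : (0 : ℝ) < n := by exact_mod_cast hn1
  have hwA : w * α n < n :=
    (one_lt_div (by have := hα n; positivity)).mp (hN n (le_of_max_le_left hn) w hw)
  have hX : IsPowerSumRoot (α n) n (x n) := fun u hu => by
    simpa only [momentSum_zero_eq] using hx n hn1 u hu
  have hh' : Set.EqOn (h n) (saddleLog (α n) n (x n)) (Set.Ioi 0) := fun u hu => by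
    rw [hh n u hu, saddleLog, momentSum_neg_one_eq, momentSum_one_eq]
  rw [mul_div_assoc]
  refine (hX.abs_iteratedDeriv_three_le (hα n) hn0 hh' hw0 hwA).trans ?_
  gcongr <;> linarith [hw.1]

open Filter Real in
/-- uniform bound for the third derivative of `h̃_{n,α}`.
Suppose `n/(w α(n)) > 1` for all large `n` and all `w ∈ (1−δ, 1+δ)`, and
`α(n)/n → 0`.  Here `x n w = x_{n,α}(w)` is the positive solution of
`∑_{j=1}^{α(n)} x^j = n/w` and
`h̃ n w = w ∑_{j=1}^{α(n)} x(w)^j/j − n log x(w) − (1/2) log(2πw ∑ j x(w)^j)`.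
Then there are `C` and `N` such that `|h̃'''(w)| ≤ C n/α(n)` for all `n ≥ N` and
all `w ∈ (1−δ, 1+δ)`. -/
theorem stmt_14 (α : ℕ → ℕ) (hα : ∀ n, 1 ≤ α n)
    (δ : ℝ) (hδ0 : 0 < δ) (hδ1 : δ < 1)
    (hbig : ∀ᶠ n : ℕ in atTop, ∀ w ∈ Set.Ioo (1 - δ) (1 + δ),
      1 < (n : ℝ) / (w * α n))
    (hαn : Tendsto (fun n : ℕ => (α n : ℝ) / n) atTop (nhds 0))
    (x : ℕ → ℝ → ℝ)
    (hx : ∀ n, 1 ≤ n → ∀ w : ℝ, 0 < w →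
      0 < x n w ∧ ∑ j ∈ Finset.Icc 1 (α n), x n w ^ j = (n : ℝ) / w)
    (h : ℕ → ℝ → ℝ)
    (hh : ∀ n, ∀ w : ℝ, 0 < w →
      h n w = w * ∑ j ∈ Finset.Icc 1 (α n), x n w ^ j / j - (n : ℝ) * Real.log (x n w)
        - 1 / 2 * Real.log (2 * π * w * ∑ j ∈ Finset.Icc 1 (α n), (j : ℝ) * x n w ^ j)) :
    ∃ C : ℝ, ∃ N : ℕ, ∀ n ≥ N, ∀ w ∈ Set.Ioo (1 - δ) (1 + δ),
      |iteratedDeriv 3 (h n) w| ≤ C * n / α n :=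
  stmt_14_general α hα δ hδ1 hbig x hx h hh
end

section
/- Let α : ℕ → ℕ satisfy α(n)/n → 0, and write x = x_{n,α}(1), a = α(n). Then, as n → ∞: (i) h̃''_{n,α}(1) = −(n/a)·∑_{j=0}^{∞} ( 1/( a·(x−1) + a·x/n ) )^j + O(1), the geometric series being convergent for large n; and (ii) if moreover a ≥ 2 for all large n, then h̃''_{n,α}(1) = −(n/a)·∑_{j=0}^{2} ( 1/( a·(x−1) ) )^j + o( n/( a³·(x−1)² ) ) + O(1). -/
/-!
Write `M_k(t) = ∑_{j=1}^{a} j^k t^j`, so that the three sums in `h̃` are `M_{-1}`, `M_0`, `M_1`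
and `d/du M_k(e^u) = M_{k+1}(e^u)`. Differentiating `M_0(x(w)) = n/w` gives `x'`, the derivative
of `w M_{-1}(x)` cancels that of `n log x`, and `h̃''(1)` is an explicit rational function of
`n, M_1, M_2, M_3`; since `M_{k+1} ≤ a M_k` and `a n ≤ 2 M_1`, it is `-n²/M_1 + O(1)`.

The identity `(x - 1) M_1 = a n (x - 1) + a x - n` shows that `(n/a) ∑ r^j` is `n²/M_1 + O(1)`
both for `r = 1/(a(x-1) + ax/n)` and for `r₀ = 1/(a(x-1))`. Finally `a(x-1) ≥ log(n/a) → ∞`,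
so the tail `(n/a) r₀³/(1 - r₀)` of the second series is `o(n/(a³(x-1)²))`.
-/

open Filter Real Asymptotics Finset Topology

noncomputable section

namespace SaddlePoint

def moment (a : ℕ) (k : ℤ) (t : ℝ) : ℝ := ∑ j ∈ Icc 1 a, (j : ℝ) ^ k * t ^ j

variable {a : ℕ}

lemma moment_pos (ha : 1 ≤ a) (k : ℤ) {t : ℝ} (ht : 0 < t) : 0 < moment a k t := by
  refine sum_pos (fun j hj => ?_) ⟨1, mem_Icc.2 ⟨le_rfl, ha⟩⟩
  have : (0 : ℝ) < j := by exact_mod_cast (mem_Icc.1 hj).1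
  positivity

lemma moment_succ_le (k : ℤ) {t : ℝ} (ht : 0 ≤ t) : moment a (k + 1) t ≤ a * moment a k t := by
  rw [moment, moment, mul_sum]
  refine sum_le_sum fun j hj => ?_
  have hj0 : (0 : ℝ) < j := by exact_mod_cast (mem_Icc.1 hj).1
  have hja : (j : ℝ) ≤ a := by exact_mod_cast (mem_Icc.1 hj).2
  rw [zpow_add_one₀ hj0.ne', mul_comm _ (j : ℝ), mul_assoc]
  exact mul_le_mul_of_nonneg_right hja (by positivity)

lemma moment_zero_le {t : ℝ} (ht : 0 ≤ t) : moment a 0 t ≤ a * max 1 t ^ a := by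
  calc moment a 0 t ≤ ∑ _j ∈ Icc 1 a, max 1 t ^ a := by
        refine sum_le_sum fun j hj => ?_
        rw [zpow_zero, one_mul]
        exact (pow_le_pow_left₀ ht (le_max_right 1 t) j).trans
          (pow_le_pow_right₀ (le_max_left 1 t) (mem_Icc.1 hj).2)
    _ = a * max 1 t ^ a := by simp

lemma sub_one_mul_moment_zero (t : ℝ) : (t - 1) * moment a 0 t = t ^ (a + 1) - t := by
  induction a with
  | zero => simp [moment]
  | succ a ih =>
    rw [moment, sum_Icc_succ_top (by omega), ← moment, mul_add, ih, zpow_zero]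
    ring

lemma sub_one_mul_moment_one (t : ℝ) :
    (t - 1) * moment a 1 t = a * ((t - 1) * moment a 0 t + t) - moment a 0 t := by
  rw [sub_one_mul_moment_zero, sub_add_cancel]
  induction a with
  | zero => simp [moment]
  | succ a ih =>
    rw [moment, sum_Icc_succ_top (by omega), ← moment, mul_add, ih, moment, moment,
      sum_Icc_succ_top (by omega), zpow_zero, zpow_one]
    push_cast
    ring

lemma hasDerivAt_moment_exp (a : ℕ) (k : ℤ) (u : ℝ) :
    HasDerivAt (fun u => moment a k (exp u)) (moment a (k + 1) (exp u)) u := by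
  refine HasDerivAt.fun_sum fun j hj => ?_
  have hj0 : (j : ℝ) ≠ 0 := by have := (mem_Icc.1 hj).1; positivity
  refine (((hasDerivAt_exp u).pow j).const_mul ((j : ℝ) ^ k)).congr_deriv ?_
  rw [zpow_add_one₀ hj0, mul_assoc, mul_assoc, pow_sub_one_mul (by simpa using hj0)]

lemma strictMono_moment_exp (ha : 1 ≤ a) (k : ℤ) : StrictMono fun u => moment a k (exp u) :=
  strictMono_of_hasDerivAt_pos (hasDerivAt_moment_exp a k) fun u => moment_pos ha _ (exp_pos u)

/-- `h̃'(w)`, where `y w = log x_{n,α}(w)`. -/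
def hTildeDeriv (a : ℕ) (N : ℝ) (y : ℝ → ℝ) (w : ℝ) : ℝ :=
  moment a (-1) (exp (y w)) - 1 / (2 * w)
    + N * moment a 2 (exp (y w)) / (2 * w ^ 2 * moment a 1 (exp (y w)) ^ 2)

/-- `h̃''(1)`, where `M_k = moment a k (x_{n,α}(1))`. -/
def hTildeDeriv2AtOne (N M₁ M₂ M₃ : ℝ) : ℝ :=
  -N ^ 2 / M₁ + 1 / 2 - N ^ 2 * M₃ / (2 * M₁ ^ 3) - N * M₂ / M₁ ^ 2 + N ^ 2 * M₂ ^ 2 / M₁ ^ 4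

section Derivatives

variable {N : ℝ} {y : ℝ → ℝ} (ha : 1 ≤ a) (hN : 0 < N)
  (hy : ∀ w, 0 < w → moment a 0 (exp (y w)) = N / w)
include ha hN hy

-- `-y` is monotone on `(0, ∞)` and maps it onto `ℝ`.
lemma continuousAt_of_moment_exp_eq {w : ℝ} (hw : 0 < w) : ContinuousAt y w := by
  have hmono := strictMono_moment_exp ha 0
  have hanti : MonotoneOn (fun w => -y w) (Set.Ioi 0) := by
    intro w₁ h₁ w₂ h₂ h₁₂
    rw [neg_le_neg_iff, ← hmono.le_iff_le, hy w₂ h₂, hy w₁ h₁]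
    exact div_le_div_of_nonneg_left hN.le h₁ h₁₂
  have hsurj : (fun w => -y w) '' Set.Ioi 0 = Set.univ := by
    refine Set.eq_univ_of_forall fun u => ?_
    have hw' := div_pos hN (moment_pos ha 0 (exp_pos (-u)))
    refine ⟨_, hw', neg_eq_iff_eq_neg.2 (hmono.injective ?_)⟩
    simp only [hy _ hw', div_div_cancel₀ hN.ne']
  have := continuousAt_of_monotoneOn_of_image_mem_nhds hanti (Ioi_mem_nhds hw)
    (by rw [hsurj]; exact univ_mem)
  simpa only [neg_neg] using this.fun_neg

lemma hasDerivAt_of_moment_exp_eq {w : ℝ} (hw : 0 < w) :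
    HasDerivAt y (-N / (w ^ 2 * moment a 1 (exp (y w)))) w := by
  have hM₀ := moment_pos ha 0 (exp_pos (y w))
  have hM₁ := moment_pos ha 1 (exp_pos (y w))
  have hf := (hasDerivAt_const (y w) N).div (hasDerivAt_moment_exp a 0 (y w)) hM₀.ne'
  have hf' : (0 * moment a 0 (exp (y w)) - N * moment a (0 + 1) (exp (y w)))
      / moment a 0 (exp (y w)) ^ 2 ≠ 0 := by
    rw [zero_add, zero_mul, zero_sub]
    exact div_ne_zero (neg_ne_zero.2 (mul_pos hN hM₁).ne') (by positivity)
  have hinv : ∀ᶠ w' in 𝓝 w, N / moment a 0 (exp (y w')) = w' := by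
    filter_upwards [Ioi_mem_nhds hw] with w' hw'
    rw [hy w' hw', div_div_cancel₀ hN.ne']
  have hy' := hf.of_local_left_inverse (continuousAt_of_moment_exp_eq ha hN hy hw) hf' hinv
  refine hy'.congr_deriv ?_
  rw [hy w hw, zero_add]
  field_simp
  ring

lemma hasDerivAt_hTildeDeriv_one :
    HasDerivAt (hTildeDeriv a N y) (hTildeDeriv2AtOne N (moment a 1 (exp (y 1)))
      (moment a 2 (exp (y 1))) (moment a 3 (exp (y 1)))) 1 := by
  have hy' := hasDerivAt_of_moment_exp_eq ha hN hy one_pos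
  have hM₁ := moment_pos ha 1 (exp_pos (y 1))
  have hm : ∀ k : ℤ, HasDerivAt (fun w => moment a k (exp (y w)))
      (moment a (k + 1) (exp (y 1)) * (-N / (1 ^ 2 * moment a 1 (exp (y 1))))) 1 :=
    fun k => (hasDerivAt_moment_exp a k (y 1)).comp 1 hy'
  have hden := ((hasDerivAt_pow 2 (1 : ℝ)).const_mul 2).fun_mul ((hm 1).fun_pow 2)
  have hinv := ((hasDerivAt_id' (1 : ℝ)).const_mul 2).inv (by norm_num)
  have hsum := ((hm (-1)).fun_sub hinv).fun_add (((hm 2).const_mul N).fun_div hden (by positivity))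
  refine (hsum.congr_of_eventuallyEq (Eventually.of_forall fun w => ?_)).congr_deriv ?_
  · simp only [hTildeDeriv, one_div, Pi.inv_apply]
  · norm_num only [hTildeDeriv2AtOne, hy 1 one_pos]
    field_simp
    ring

variable {H : ℝ → ℝ} (hH : ∀ w, 0 < w → H w = w * moment a (-1) (exp (y w)) - N * y w
    - 1 / 2 * log (2 * π * w * moment a 1 (exp (y w))))
include hH

lemma hasDerivAt_hTilde {w : ℝ} (hw : 0 < w) : HasDerivAt H (hTildeDeriv a N y w) w := by
  have hy' := hasDerivAt_of_moment_exp_eq ha hN hy hw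
  have hM₁ := moment_pos ha 1 (exp_pos (y w))
  have hm : ∀ k : ℤ, HasDerivAt (fun w => moment a k (exp (y w)))
      (moment a (k + 1) (exp (y w)) * (-N / (w ^ 2 * moment a 1 (exp (y w))))) w :=
    fun k => (hasDerivAt_moment_exp a k (y w)).comp w hy'
  have hlog := (((hasDerivAt_id' w).const_mul (2 * π)).fun_mul (hm 1)).log (by positivity)
  have hsum := (((hasDerivAt_id' w).fun_mul (hm (-1))).fun_sub (hy'.const_mul N)).fun_sub
    (hlog.const_mul (1 / 2))
  have hev : H =ᶠ[𝓝 w] fun w => w * moment a (-1) (exp (y w)) - N * y w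
      - 1 / 2 * log (2 * π * w * moment a 1 (exp (y w))) := by
    filter_upwards [Ioi_mem_nhds hw] with w' hw' using hH w' hw'
  refine (hsum.congr_of_eventuallyEq hev).congr_deriv ?_
  norm_num only [hTildeDeriv, hy w hw]
  field_simp
  ring

theorem iteratedDeriv_two_of_moment_exp_eq :
    iteratedDeriv 2 H 1 = hTildeDeriv2AtOne N (moment a 1 (exp (y 1)))
      (moment a 2 (exp (y 1))) (moment a 3 (exp (y 1))) := by
  have hev : deriv H =ᶠ[𝓝 1] hTildeDeriv a N y := by
    filter_upwards [Ioi_mem_nhds one_pos] with w hw using (hasDerivAt_hTilde ha hN hy hH hw).deriv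
  rw [iteratedDeriv_succ, iteratedDeriv_one, hev.deriv_eq]
  exact (hasDerivAt_hTildeDeriv_one ha hN hy).deriv

end Derivatives

theorem iteratedDeriv_two_at_one_eq {N : ℝ} {ξ H : ℝ → ℝ} (ha : 1 ≤ a) (hN : 0 < N)
    (hξ : ∀ w, 0 < w → 0 < ξ w ∧ ∑ j ∈ Icc 1 a, ξ w ^ j = N / w)
    (hH : ∀ w, 0 < w → H w = w * ∑ j ∈ Icc 1 a, ξ w ^ j / j - N * log (ξ w)
      - 1 / 2 * log (2 * π * w * ∑ j ∈ Icc 1 a, (j : ℝ) * ξ w ^ j)) :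
    iteratedDeriv 2 H 1 =
      hTildeDeriv2AtOne N (moment a 1 (ξ 1)) (moment a 2 (ξ 1)) (moment a 3 (ξ 1)) := by
  have hexp : ∀ w, 0 < w → exp (log (ξ w)) = ξ w := fun w hw => exp_log (hξ w hw).1
  have := iteratedDeriv_two_of_moment_exp_eq (y := fun w => log (ξ w)) ha hN
    (fun w hw => by simpa [moment, hexp w hw] using (hξ w hw).2)
    (fun w hw => by simpa [moment, hexp w hw, div_eq_inv_mul, mul_comm] using hH w hw)
  rwa [hexp 1 one_pos] at this

lemma abs_hTildeDeriv2AtOne_add_le {N M₁ M₂ M₃ c : ℝ} (hN : 0 < N) (hM₁ : 0 < M₁)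
    (hM₂ : 0 ≤ M₂) (hM₃ : 0 ≤ M₃) (h₂ : M₂ ≤ c * M₁) (h₃ : M₃ ≤ c * M₂) (hc : c * N ≤ 2 * M₁) :
    |hTildeDeriv2AtOne N M₁ M₂ M₃ + N ^ 2 / M₁| ≤ 5 := by
  have hc0 : 0 ≤ c := nonneg_of_mul_nonneg_left (hM₂.trans h₂) hM₁
  set A := N * M₂ / M₁ ^ 2 with hA
  set B := N ^ 2 * M₃ / M₁ ^ 3 with hB
  have hA0 : 0 ≤ A := by positivity
  have hB0 : 0 ≤ B := by positivity
  have hA2 : A ≤ 2 := by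
    rw [hA, div_le_iff₀ (by positivity)]
    nlinarith [mul_le_mul_of_nonneg_left h₂ hN.le]
  have hB4 : B ≤ 4 := by
    rw [hB, div_le_iff₀ (by positivity)]
    have : N ^ 2 * M₃ ≤ (c * N) ^ 2 * M₁ := by
      nlinarith [mul_le_mul_of_nonneg_left h₃ (sq_nonneg N), mul_le_mul_of_nonneg_left h₂ hc0]
    nlinarith [pow_le_pow_left₀ (by positivity) hc 2]
  have hform : hTildeDeriv2AtOne N M₁ M₂ M₃ + N ^ 2 / M₁ = 1 / 2 - B / 2 - A + A ^ 2 := by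
    rw [hTildeDeriv2AtOne, hA, hB]
    field_simp
    ring
  rw [hform, abs_le]
  constructor <;> nlinarith

section Estimates

variable {N X : ℝ} (ha : 1 ≤ a) (hX : 0 < X) (hN : moment a 0 X = N) (hL : 2 ≤ log (N / a))
include ha hX hN hL

lemma one_lt_of_two_le_log : 1 < X := by
  by_contra! hX1
  have hNa := moment_zero_le (a := a) hX.le
  rw [max_eq_left hX1, one_pow, mul_one, hN] at hNa
  have hN0 : 0 < N := hN ▸ moment_pos ha 0 hX
  have : log (N / a) ≤ 0 :=
    log_nonpos (by positivity) ((div_le_one (by exact_mod_cast ha)).2 hNa)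
  linarith

lemma log_le_mul_sub_one : log (N / a) ≤ a * (X - 1) := by
  have hX1 := one_lt_of_two_le_log ha hX hN hL
  have hNa := moment_zero_le (a := a) hX.le
  rw [max_eq_right hX1.le, hN] at hNa
  have ha0 : (0 : ℝ) < a := by exact_mod_cast ha
  calc log (N / a) ≤ log (X ^ a) :=
        log_le_log (div_pos (hN ▸ moment_pos ha 0 hX) ha0) ((div_le_iff₀' ha0).2 hNa)
    _ = a * log X := by rw [log_pow]
    _ ≤ a * (X - 1) := mul_le_mul_of_nonneg_left (log_le_sub_one_of_pos hX) ha0.le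

lemma two_le_mul_sub_one : 2 ≤ a * (X - 1) :=
  hL.trans (log_le_mul_sub_one ha hX hN hL)

lemma mul_le_two_moment_one : a * N ≤ 2 * moment a 1 X := by
  have hX1 := one_lt_of_two_le_log ha hX hN hL
  have hd := two_le_mul_sub_one ha hX hN hL
  have hN0 : 0 < N := hN ▸ moment_pos ha 0 hX
  have hid := sub_one_mul_moment_one (a := a) X
  rw [hN] at hid
  have : 0 ≤ (X - 1) * (2 * moment a 1 X - a * N) := by
    nlinarith [mul_le_mul_of_nonneg_right hd hN0.le]
  nlinarith [nonneg_of_mul_nonneg_right this (sub_pos.2 hX1)]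

lemma div_mul_tsum_geometric_eq :
    N / a * ∑' j : ℕ, (1 / (a * (X - 1) + a * X / N)) ^ j
      = N ^ 2 / moment a 1 X + N * X / ((X - 1) * moment a 1 X) := by
  have hX1 := one_lt_of_two_le_log ha hX hN hL
  have hd := two_le_mul_sub_one ha hX hN hL
  have hN0 : 0 < N := hN ▸ moment_pos ha 0 hX
  have ha0 : (0 : ℝ) < a := by exact_mod_cast ha
  have hD : 2 ≤ a * (X - 1) + a * X / N := le_add_of_le_of_nonneg hd (by positivity)
  have hid := sub_one_mul_moment_one (a := a) X
  rw [hN] at hid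
  rw [tsum_geometric_of_lt_one (by positivity) ((div_lt_one (by linarith)).2 (by linarith))]
  have hD1 : a * (X - 1) + a * X / N - 1 = (X - 1) * moment a 1 X / N := by
    rw [hid]; field_simp
  rw [one_sub_div (by positivity), inv_div, hD1]
  have hX1' : X - 1 ≠ 0 := (sub_pos.2 hX1).ne'
  field_simp

lemma div_mul_inv_one_sub_inv_eq :
    N / a * (1 - 1 / (a * (X - 1)))⁻¹
      = N ^ 2 / moment a 1 X + a * N * X / ((a * (X - 1) - 1) * moment a 1 X) := by
  have hd := two_le_mul_sub_one ha hX hN hL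
  have hN0 : 0 < N := hN ▸ moment_pos ha 0 hX
  have hM₁ := moment_pos ha 1 hX
  have ha0 : (0 : ℝ) < a := by exact_mod_cast ha
  have hid := sub_one_mul_moment_one (a := a) X
  rw [hN] at hid
  rw [one_sub_div (by positivity), inv_div]
  have hd1 : a * (X - 1) - 1 ≠ 0 := by linarith
  field_simp
  linear_combination hid

lemma abs_hTildeDeriv2AtOne_moment_add_le :
    |hTildeDeriv2AtOne N (moment a 1 X) (moment a 2 X) (moment a 3 X) + N ^ 2 / moment a 1 X|
      ≤ 5 := by
  have h₂ : moment a 2 X ≤ a * moment a 1 X := by simpa using moment_succ_le (a := a) 1 hX.le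
  have h₃ : moment a 3 X ≤ a * moment a 2 X := by simpa using moment_succ_le (a := a) 2 hX.le
  exact abs_hTildeDeriv2AtOne_add_le (hN ▸ moment_pos ha 0 hX) (moment_pos ha 1 hX)
    (moment_pos ha 2 hX).le (moment_pos ha 3 hX).le h₂ h₃ (mul_le_two_moment_one ha hX hN hL)

lemma abs_one_div_lt_one : |1 / (a * (X - 1) + a * X / N)| < 1 := by
  have hd := two_le_mul_sub_one ha hX hN hL
  have hN0 : 0 < N := hN ▸ moment_pos ha 0 hX
  have hD : 2 ≤ a * (X - 1) + a * X / N := le_add_of_le_of_nonneg hd (by positivity)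
  rw [abs_of_pos (by positivity), div_lt_one (by linarith)]
  linarith

lemma le_three_halves_mul_mul_sub_one : X ≤ 3 / 2 * (a * (X - 1)) := by
  have hX1 := one_lt_of_two_le_log ha hX hN hL
  have hd := two_le_mul_sub_one ha hX hN hL
  have : X - 1 ≤ a * (X - 1) := le_mul_of_one_le_left (sub_pos.2 hX1).le (by exact_mod_cast ha)
  linarith

lemma abs_hTildeDeriv2AtOne_add_tsum_le :
    |hTildeDeriv2AtOne N (moment a 1 X) (moment a 2 X) (moment a 3 X)
      + N / a * ∑' j : ℕ, (1 / (a * (X - 1) + a * X / N)) ^ j| ≤ 9 := by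
  have hX1 := one_lt_of_two_le_log ha hX hN hL
  have hN0 : 0 < N := hN ▸ moment_pos ha 0 hX
  have hM₁ := moment_pos ha 1 hX
  have hR : N * X / ((X - 1) * moment a 1 X) ≤ 4 := by
    rw [div_le_iff₀ (mul_pos (sub_pos.2 hX1) hM₁)]
    nlinarith [le_three_halves_mul_mul_sub_one ha hX hN hL, mul_le_two_moment_one ha hX hN hL,
      mul_le_mul_of_nonneg_left (mul_le_two_moment_one ha hX hN hL) (sub_pos.2 hX1).le]
  have hR0 : 0 ≤ N * X / ((X - 1) * moment a 1 X) := by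
    have := sub_pos.2 hX1
    positivity
  rw [div_mul_tsum_geometric_eq ha hX hN hL, ← add_assoc]
  linarith [abs_add_le (hTildeDeriv2AtOne N (moment a 1 X) (moment a 2 X) (moment a 3 X)
      + N ^ 2 / moment a 1 X) (N * X / ((X - 1) * moment a 1 X)),
    abs_hTildeDeriv2AtOne_moment_add_le ha hX hN hL, abs_of_nonneg hR0]

lemma abs_hTildeDeriv2AtOne_add_inv_le :
    |hTildeDeriv2AtOne N (moment a 1 X) (moment a 2 X) (moment a 3 X)
      + N / a * (1 - 1 / (a * (X - 1)))⁻¹| ≤ 13 := by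
  have hd := two_le_mul_sub_one ha hX hN hL
  have hN0 : 0 < N := hN ▸ moment_pos ha 0 hX
  have hM₁ := moment_pos ha 1 hX
  have hd1 : 0 < a * (X - 1) - 1 := by linarith
  have hR : a * N * X / ((a * (X - 1) - 1) * moment a 1 X) ≤ 8 := by
    rw [div_le_iff₀ (mul_pos hd1 hM₁)]
    have hXd : X ≤ 4 * (a * (X - 1) - 1) := by
      linarith [le_three_halves_mul_mul_sub_one ha hX hN hL]
    have haN : 0 ≤ a * N := by positivity
    nlinarith [mul_le_mul_of_nonneg_left hXd haN,
      mul_le_mul_of_nonneg_left (mul_le_two_moment_one ha hX hN hL) hd1.le]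
  have hR0 : 0 ≤ a * N * X / ((a * (X - 1) - 1) * moment a 1 X) := by positivity
  rw [div_mul_inv_one_sub_inv_eq ha hX hN hL, ← add_assoc]
  linarith [abs_add_le (hTildeDeriv2AtOne N (moment a 1 X) (moment a 2 X) (moment a 3 X)
      + N ^ 2 / moment a 1 X) (a * N * X / ((a * (X - 1) - 1) * moment a 1 X)),
    abs_hTildeDeriv2AtOne_moment_add_le ha hX hN hL, abs_of_nonneg hR0]

end Estimates

lemma mul_sum_range_three_sub_inv {c d : ℝ} (hd : d ≠ 0) (hd₁ : d - 1 ≠ 0) :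
    c * (∑ j ∈ range 3, (1 / d) ^ j - (1 - 1 / d)⁻¹) = -(d - 1)⁻¹ * (c / d ^ 2) := by
  rw [one_sub_div hd, inv_div]
  simp only [sum_range_succ, sum_range_zero]
  field_simp
  ring

lemma isLittleO_mul_sum_range_three_sub_inv {a N X : ℕ → ℝ}
    (hd : Tendsto (fun n => a n * (X n - 1)) atTop atTop) :
    (fun n => N n / a n * (∑ j ∈ range 3, (1 / (a n * (X n - 1))) ^ j
      - (1 - 1 / (a n * (X n - 1)))⁻¹)) =o[atTop] fun n => N n / (a n ^ 3 * (X n - 1) ^ 2) := by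
  have hc : Tendsto (fun n => -(a n * (X n - 1) - 1)⁻¹) atTop (𝓝 0) := by
    simpa [sub_eq_add_neg] using
      (tendsto_inv_atTop_zero.comp (tendsto_atTop_add_const_right _ (-1) hd)).neg
  refine ((isLittleO_one_iff ℝ).2 hc |>.mul_isBigO (isBigO_refl _ _)).congr' ?_
    (Eventually.of_forall fun n => one_mul _)
  filter_upwards [hd.eventually_ge_atTop 2] with n hd₂
  rw [mul_sum_range_three_sub_inv (by linarith) (by linarith), div_div, mul_pow, ← mul_assoc,
    ← pow_succ']

lemma tendsto_log_div_atTop {α : ℕ → ℕ} (hα : ∀ n, 1 ≤ α n)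
    (hαn : Tendsto (fun n : ℕ => (α n : ℝ) / n) atTop (𝓝 0)) :
    Tendsto (fun n : ℕ => log ((n : ℝ) / α n)) atTop atTop := by
  have hpos : ∀ᶠ n : ℕ in atTop, (α n : ℝ) / n ∈ Set.Ioi 0 := by
    filter_upwards [eventually_ge_atTop 1] with n hn
    exact div_pos (Nat.cast_pos.2 (hα n) : (0 : ℝ) < α n) (Nat.cast_pos.2 hn)
  have hinv := tendsto_inv_nhdsGT_zero.comp (tendsto_nhdsWithin_iff.2 ⟨hαn, hpos⟩)
  exact tendsto_log_atTop.comp (hinv.congr fun n => by simp)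

end SaddlePoint

end

open SaddlePoint

/-- asymptotics of `h̃''_{n,α}(1)`.  Assume `α(n)/n → 0`.
Here `x n w = x_{n,α}(w)` is the positive solution of `∑_{j=1}^{α(n)} x^j = n/w`,
`h̃ n w = w ∑_{j=1}^{α(n)} x(w)^j/j − n log x(w) − (1/2) log(2πw ∑ j x(w)^j)`,
and we write `x = x n 1`, `a = α n`.  Then:
(i) the geometric series `∑_{j≥0} (1/(a(x−1) + a x/n))^j` converges for large `n`
    and `h̃''(1) = −(n/a)·∑_{j=0}^∞ (1/(a(x−1) + a x/n))^j + O(1)`;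
(ii) if moreover `a ≥ 2` for all large `n`, then
    `h̃''(1) = −(n/a)·∑_{j=0}^2 (1/(a(x−1)))^j + o(n/(a³(x−1)²)) + O(1)`. -/
theorem stmt_17 (α : ℕ → ℕ) (hα : ∀ n, 1 ≤ α n)
    (hαn : Tendsto (fun n : ℕ => (α n : ℝ) / n) atTop (nhds 0))
    (x : ℕ → ℝ → ℝ)
    (hx : ∀ n, 1 ≤ n → ∀ w : ℝ, 0 < w →
      0 < x n w ∧ ∑ j ∈ Finset.Icc 1 (α n), x n w ^ j = (n : ℝ) / w)
    (h : ℕ → ℝ → ℝ)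
    (hh : ∀ n, ∀ w : ℝ, 0 < w →
      h n w = w * ∑ j ∈ Finset.Icc 1 (α n), x n w ^ j / j - (n : ℝ) * Real.log (x n w)
        - 1 / 2 * Real.log (2 * π * w * ∑ j ∈ Finset.Icc 1 (α n), (j : ℝ) * x n w ^ j)) :
    ((∀ᶠ n : ℕ in atTop,
        |1 / ((α n : ℝ) * (x n 1 - 1) + (α n : ℝ) * x n 1 / n)| < 1) ∧
      (fun n : ℕ => iteratedDeriv 2 (h n) 1 + (n : ℝ) / α n *
          ∑' j : ℕ, (1 / ((α n : ℝ) * (x n 1 - 1) + (α n : ℝ) * x n 1 / n)) ^ j)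
        =O[atTop] fun _ : ℕ => (1 : ℝ)) ∧
    ((∀ᶠ n : ℕ in atTop, 2 ≤ α n) →
      ∃ e₁ e₂ : ℕ → ℝ,
        (e₁ =o[atTop] fun n : ℕ => (n : ℝ) / ((α n : ℝ) ^ 3 * (x n 1 - 1) ^ 2)) ∧
        (e₂ =O[atTop] fun _ : ℕ => (1 : ℝ)) ∧
        ∀ n : ℕ, iteratedDeriv 2 (h n) 1 = -((n : ℝ) / α n) *
            (∑ j ∈ Finset.range 3, (1 / ((α n : ℝ) * (x n 1 - 1))) ^ j)
          + e₁ n + e₂ n) := by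
  have hlog := tendsto_log_div_atTop hα hαn
  have hgood : ∀ᶠ n : ℕ in atTop, 1 ≤ n ∧ 2 ≤ log ((n : ℝ) / α n) :=
    (eventually_ge_atTop 1).and (hlog.eventually_ge_atTop 2)
  have hmom : ∀ n, 1 ≤ n → moment (α n) 0 (x n 1) = n := fun n hn => by
    simpa [moment] using (hx n hn 1 one_pos).2
  have hder : ∀ n, 1 ≤ n → iteratedDeriv 2 (h n) 1 = hTildeDeriv2AtOne n
      (moment (α n) 1 (x n 1)) (moment (α n) 2 (x n 1)) (moment (α n) 3 (x n 1)) :=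
    fun n hn => iteratedDeriv_two_at_one_eq (hα n) (by exact_mod_cast hn) (hx n hn) (hh n)
  refine ⟨⟨hgood.mono fun n ⟨hn, hL⟩ =>
      abs_one_div_lt_one (hα n) (hx n hn 1 one_pos).1 (hmom n hn) hL, ?_⟩, fun _ => ?_⟩
  · refine IsBigO.of_bound 9 (hgood.mono fun n ⟨hn, hL⟩ => ?_)
    simpa [hder n hn] using
      abs_hTildeDeriv2AtOne_add_tsum_le (hα n) (hx n hn 1 one_pos).1 (hmom n hn) hL
  refine ⟨fun n => n / α n * (∑ j ∈ range 3, (1 / (α n * (x n 1 - 1))) ^ j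
      - (1 - 1 / (α n * (x n 1 - 1)))⁻¹),
    fun n => iteratedDeriv 2 (h n) 1 + n / α n * (1 - 1 / (α n * (x n 1 - 1)))⁻¹, ?_, ?_,
    fun n => by ring⟩
  · exact isLittleO_mul_sum_range_three_sub_inv <| tendsto_atTop_mono' atTop
      (hgood.mono fun n ⟨hn, hL⟩ => log_le_mul_sub_one (hα n) (hx n hn 1 one_pos).1 (hmom n hn) hL)
      hlog
  · refine IsBigO.of_bound 13 (hgood.mono fun n ⟨hn, hL⟩ => ?_)
    simpa [hder n hn] using
      abs_hTildeDeriv2AtOne_add_inv_le (hα n) (hx n hn 1 one_pos).1 (hmom n hn) hL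
end

section
/- For K > 0, define T_K(z) = ∫_0^z ((e^t − 1)/t)·( (t/K)·e^{t/K}/(e^{t/K} − 1) − 1 ) dt, where the integrand is extended by continuity at t = 0. Then for every K > 0 and every z with 0 ≤ z ≤ π·K, one has |T_K(z) + z/(2K)| ≤ 4·e^z/K. -/
open Real in
/-- For `K > 0` and `0 ≤ z ≤ π K`,
`|T_K(z) + z/(2K)| ≤ 4 e^z / K`, where
`T_K(z) = ∫_0^z ((e^t − 1)/t)·((t/K)·e^{t/K}/(e^{t/K} − 1) − 1) dt`
(the integrand extends continuously by the value `0` at `t = 0`, which agrees with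
Lean's conventions at the single point `t = 0`). -/
theorem stmt_18 (K : ℝ) (hK : 0 < K) (z : ℝ) (hz0 : 0 ≤ z) (hzK : z ≤ π * K) :
    |(∫ t in (0 : ℝ)..z,
        (Real.exp t - 1) / t * (t / K * Real.exp (t / K) / (Real.exp (t / K) - 1) - 1))
      + z / (2 * K)| ≤ 4 * Real.exp z / K := by
  set f : ℝ → ℝ := fun t =>
    (Real.exp t - 1) / t * (t / K * Real.exp (t / K) / (Real.exp (t / K) - 1) - 1) with hf
  set g : ℝ → ℝ := fun t => (Real.exp t - 1) / K with hg
  -- pointwise bounds for t in (0, ∞)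
  have key : ∀ t : ℝ, 0 < t → 0 ≤ f t ∧ f t ≤ g t := by
    intro t ht
    have hx : 0 < t / K := div_pos ht hK
    have hE : 0 < Real.exp (t / K) - 1 := by
      have := Real.add_one_le_exp (t / K)
      linarith
    have hA : 0 ≤ (Real.exp t - 1) / t := by
      apply div_nonneg _ ht.le
      have : (1:ℝ) ≤ Real.exp t := Real.one_le_exp ht.le
      linarith
    have h1 : Real.exp (t / K) - 1 ≤ (t / K) * Real.exp (t / K) := by
      have h := Real.add_one_le_exp (-(t / K))
      have hep : 0 < Real.exp (t / K) := Real.exp_pos _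
      rw [Real.exp_neg] at h
      have h' := mul_le_mul_of_nonneg_left h hep.le
      rw [mul_inv_cancel₀ (ne_of_gt hep)] at h'
      nlinarith
    have h2 : (t / K) * Real.exp (t / K) ≤ (t / K + 1) * (Real.exp (t / K) - 1) := by
      have h := Real.add_one_le_exp (t / K)
      nlinarith
    have hlow : 0 ≤ t / K * Real.exp (t / K) / (Real.exp (t / K) - 1) - 1 := by
      rw [sub_nonneg, le_div_iff₀ hE]
      linarith
    have hup : t / K * Real.exp (t / K) / (Real.exp (t / K) - 1) - 1 ≤ t / K := by
      rw [sub_le_iff_le_add, div_le_iff₀ hE]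
      nlinarith
    refine ⟨mul_nonneg hA hlow, ?_⟩
    calc f t ≤ (Real.exp t - 1) / t * (t / K) := mul_le_mul_of_nonneg_left hup hA
      _ = (Real.exp t - 1) / K := by field_simp
  have hgInt : IntervalIntegrable g MeasureTheory.volume 0 z :=
    Continuous.intervalIntegrable ((Real.continuous_exp.sub continuous_const).div_const K) 0 z
  have hfMeas : MeasureTheory.AEStronglyMeasurable f
      (MeasureTheory.volume.restrict (Set.uIoc (0:ℝ) z)) := by
    apply Measurable.aestronglyMeasurable
    exact ((Real.measurable_exp.sub measurable_const).div measurable_id).mul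
      (((((measurable_id.div_const K).mul
        (Real.measurable_exp.comp (measurable_id.div_const K))).div
        ((Real.measurable_exp.comp (measurable_id.div_const K)).sub measurable_const)).sub
        measurable_const))
  have hfInt : IntervalIntegrable f MeasureTheory.volume 0 z := by
    apply hgInt.mono_fun' hfMeas
    rw [Set.uIoc_of_le hz0]
    refine (MeasureTheory.ae_restrict_iff' measurableSet_Ioc).mpr ?_
    filter_upwards with t ht
    obtain ⟨h0, h1⟩ := key t ht.1
    rw [Real.norm_eq_abs, abs_of_nonneg h0]
    exact h1
  -- nonnegativity of the integral
  have hInt0 : 0 ≤ ∫ t in (0:ℝ)..z, f t := by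
    apply intervalIntegral.integral_nonneg hz0
    intro u hu
    rcases eq_or_lt_of_le hu.1 with h | h
    · simp [hf, ← h]
    · exact (key u h).1
  -- upper bound
  have hIntle : (∫ t in (0:ℝ)..z, f t) ≤ ∫ t in (0:ℝ)..z, g t := by
    apply intervalIntegral.integral_mono_on hz0 hfInt hgInt
    intro u hu
    rcases eq_or_lt_of_le hu.1 with h | h
    · simp [hf, hg, ← h]
    · exact (key u h).2
  have hgval : (∫ t in (0:ℝ)..z, g t) = (Real.exp z - 1 - z) / K := by
    have : (∫ t in (0:ℝ)..z, g t) = (∫ t in (0:ℝ)..z, Real.exp t - 1) / K := by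
      rw [← intervalIntegral.integral_div]
    rw [this, intervalIntegral.integral_sub (Real.continuous_exp.intervalIntegrable 0 z)
      (intervalIntegrable_const)]
    rw [integral_exp]
    simp
  rw [hgval] at hIntle
  have hz2K : 0 ≤ z / (2 * K) := div_nonneg hz0 (by linarith)
  rw [abs_of_nonneg (by linarith)]
  have h4 : (Real.exp z - 1 - z) / K + z / (2 * K) ≤ 4 * Real.exp z / K := by
    rw [div_add_div _ _ (ne_of_gt hK) (by positivity), div_le_div_iff₀ (by positivity) hK]
    nlinarith [Real.exp_pos z, mul_pos hK hK,
      mul_nonneg hz0 (mul_pos hK hK).le,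
      mul_pos (Real.exp_pos z) (mul_pos hK hK)]
  linarith
end
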